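/- arXiv:2308.13107 — 9 statements merged into one kernel-verified Lean document; each statement's English description precedes it below -/
import Mathlib

section
/- Let V be the vertex set of a regular pentagon in the plane and let P be any point of the plane with P ∉ V. Then the six-point set V ∪ {P} spans at least 4 distinct triangles. -/
open Real EuclideanGeometry

noncomputable section

/-- The Euclidean plane. -/
abbrev Plane : Type := EuclideanSpace ℝ (Fin 2)

/-- A point of the plane from coordinates. -/
def pt (x y : ℝ) : Plane := (WithLp.equiv 2 (Fin 2 → ℝ)).symm ![x, y]

/-- Two sets of points in the plane are congruent if some isometry of `ℝ²`
maps one onto the other. -/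
def Cong (S T : Set Plane) : Prop := ∃ f : Plane ≃ᵢ Plane, f '' S = T

/-- The collection of unordered triples of pairwise distinct points of `P`. -/
def triplesOf (P : Set Plane) : Set (Set Plane) :=
  {s | ∃ a b c : Plane, a ∈ P ∧ b ∈ P ∧ c ∈ P ∧ a ≠ b ∧ a ≠ c ∧ b ≠ c ∧ s = {a, b, c}}

/-- The number of congruence classes of unordered triples of pairwise distinct
points of `P` (i.e. the number of distinct triangles spanned by `P`),
as an extended natural number. -/
def numTriangles (P : Set Plane) : ℕ∞ :=
  ((fun t => {t' ∈ triplesOf P | Cong t t'}) '' triplesOf P).encard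

/-- A regular pentagon: five equally spaced points on a circle. -/
def IsRegularPentagon (S : Set Plane) : Prop :=
  ∃ (c : Plane) (r φ : ℝ), 0 < r ∧
    S = Set.range fun k : Fin 5 =>
      c + r • pt (Real.cos (φ + 2 * π * k / 5)) (Real.sin (φ + 2 * π * k / 5))

noncomputable def W (c : Plane) (r θ : ℝ) : Plane := c + r • pt (Real.cos θ) (Real.sin θ)

lemma pt_apply0 (x y : ℝ) : pt x y 0 = x := rfl
lemma pt_apply1 (x y : ℝ) : pt x y 1 = y := rfl

lemma W_apply0 (c : Plane) (r θ : ℝ) : W c r θ 0 = c 0 + r * Real.cos θ := rfl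
lemma W_apply1 (c : Plane) (r θ : ℝ) : W c r θ 1 = c 1 + r * Real.sin θ := rfl

lemma dist_sq (x y : Plane) : dist x y ^ 2 = (x 0 - y 0)^2 + (x 1 - y 1)^2 := by
  rw [EuclideanSpace.dist_eq, Real.sq_sqrt (by positivity)]
  simp [Fin.sum_univ_two, Real.dist_eq, sq_abs]

lemma chord (c : Plane) {r : ℝ} (hr : 0 ≤ r) (α β : ℝ) :
    dist (W c r α) (W c r β) = 2 * r * |Real.sin ((α - β)/2)| := by
  have h : dist (W c r α) (W c r β) ^ 2 = (2 * r * |Real.sin ((α - β)/2)|) ^ 2 := by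
    rw [dist_sq, W_apply0, W_apply0, W_apply1, W_apply1]
    have h1 : Real.cos (α - β) = Real.cos α * Real.cos β + Real.sin α * Real.sin β :=
      Real.cos_sub α β
    have h2 : Real.cos (2 * ((α - β)/2)) = 2 * Real.cos ((α-β)/2) ^ 2 - 1 :=
      Real.cos_two_mul _
    have h3 : Real.sin ((α-β)/2) ^ 2 + Real.cos ((α-β)/2) ^ 2 = 1 :=
      Real.sin_sq_add_cos_sq _
    have h4 : (2:ℝ) * ((α - β)/2) = α - β := by ring
    rw [h4] at h2
    rw [mul_pow, mul_pow, sq_abs]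
    linear_combination r^2 * (Real.sin_sq_add_cos_sq α) + r^2 * (Real.sin_sq_add_cos_sq β) + 2*r^2*h1 - 2*r^2*h2 - 4*r^2*h3
  have h5 := congrArg Real.sqrt h
  rwa [Real.sqrt_sq dist_nonneg, Real.sqrt_sq (by positivity)] at h5

lemma dist_center (c : Plane) {r : ℝ} (hr : 0 ≤ r) (θ : ℝ) :
    dist c (W c r θ) = r := by
  have h : dist c (W c r θ) ^ 2 = r ^ 2 := by
    rw [dist_sq, W_apply0, W_apply1]
    nlinarith [Real.sin_sq_add_cos_sq θ]
  have h5 := congrArg Real.sqrt h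
  rwa [Real.sqrt_sq dist_nonneg, Real.sqrt_sq hr] at h5


lemma sin_combo_key (X Y : ℝ) :
    Real.sin (2*X) + Real.sin (2*Y) - Real.sin (2*(X+Y)) = 4 * Real.sin X * Real.sin Y * Real.sin (X+Y) := by
  rw [Real.sin_two_mul, Real.sin_two_mul, Real.sin_two_mul, Real.sin_add, Real.cos_add]
  linear_combination (-2*Real.sin X*Real.cos X) * (Real.sin_sq_add_cos_sq Y)
    + (-2*Real.sin Y*Real.cos Y) * (Real.sin_sq_add_cos_sq X)

lemma sin_combo_pos {x y : ℝ} (hx : 0 < x) (hy : 0 < y) (hxy : x + y < 2 * π) :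
    0 < Real.sin x + Real.sin y - Real.sin (x + y) := by
  have e := sin_combo_key (x/2) (y/2)
  rw [show 2*(x/2) = x by ring, show 2*(y/2) = y by ring,
      show 2*(x/2+y/2) = x+y by ring, show x/2+y/2 = (x+y)/2 by ring] at e
  rw [e]
  have pi_pos := Real.pi_pos
  have h1 : 0 < Real.sin (x/2) := Real.sin_pos_of_pos_of_lt_pi (by linarith) (by linarith)
  have h2 : 0 < Real.sin (y/2) := Real.sin_pos_of_pos_of_lt_pi (by linarith) (by linarith)
  have h3 : 0 < Real.sin ((x+y)/2) := Real.sin_pos_of_pos_of_lt_pi (by linarith) (by linarith)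
  positivity


lemma equidist (c : Plane) {r : ℝ} (hr : 0 < r) {α β γ : ℝ}
    (hab : 0 < β - α) (hbg : 0 < γ - β) (hga : γ - α < 2 * π) (p : Plane)
    (h1 : dist p (W c r α) = dist p (W c r β))
    (h2 : dist p (W c r β) = dist p (W c r γ)) : p = c := by
  set q0 : ℝ := p 0 - c 0 with hq0
  set q1 : ℝ := p 1 - c 1 with hq1
  have sq1 : dist p (W c r α)^2 = dist p (W c r β)^2 := by rw [h1]
  have sq2 : dist p (W c r β)^2 = dist p (W c r γ)^2 := by rw [h2]
  rw [dist_sq, dist_sq, W_apply0, W_apply0, W_apply1, W_apply1] at sq1 sq2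
  have E1 : r * (q0 * (Real.cos α - Real.cos β) + q1 * (Real.sin α - Real.sin β)) = 0 := by
    linear_combination (-1/2) * sq1 + (r^2/2) * (Real.sin_sq_add_cos_sq α)
      - (r^2/2) * (Real.sin_sq_add_cos_sq β)
  have E2 : r * (q0 * (Real.cos β - Real.cos γ) + q1 * (Real.sin β - Real.sin γ)) = 0 := by
    linear_combination (-1/2) * sq2 + (r^2/2) * (Real.sin_sq_add_cos_sq β)
      - (r^2/2) * (Real.sin_sq_add_cos_sq γ)
  set D : ℝ := Real.sin (β - α) + Real.sin (γ - β) - Real.sin (γ - α) with hD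
  have hDpos : 0 < D := by
    have := sin_combo_pos hab hbg (by linarith)
    rw [show (β - α) + (γ - β) = γ - α by ring] at this
    exact this
  have hDcross : D = (Real.cos α - Real.cos β) * (Real.sin β - Real.sin γ)
      - (Real.cos β - Real.cos γ) * (Real.sin α - Real.sin β) := by
    rw [hD, Real.sin_sub, Real.sin_sub, Real.sin_sub]
    ring
  have hq0z : q0 * (r * r * D) = 0 := by
    rw [hDcross]
    linear_combination (r * (Real.sin β - Real.sin γ)) * E1 - (r * (Real.sin α - Real.sin β)) * E2
  have hq1z : q1 * (r * r * D) = 0 := by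
    rw [hDcross]
    linear_combination (r * (Real.cos α - Real.cos β)) * E2 - (r * (Real.cos β - Real.cos γ)) * E1
  have hrrD : r * r * D ≠ 0 := by positivity
  have hq0' : q0 = 0 := by
    rcases mul_eq_zero.mp hq0z with h | h
    · exact h
    · exact absurd h hrrD
  have hq1' : q1 = 0 := by
    rcases mul_eq_zero.mp hq1z with h | h
    · exact h
    · exact absurd h hrrD
  have e0 : p 0 = c 0 := by have := hq0 ▸ hq0'; linarith [this]
  have e1 : p 1 = c 1 := by linarith [hq1 ▸ hq1']
  ext i
  fin_cases i
  · exact e0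
  · exact e1

def dm (a b c : Plane) : Multiset ℝ := {dist a b, dist a c, dist b c}


lemma dm_perm {a b c : Plane} :
    dm b a c = dm a b c ∧ dm a c b = dm a b c ∧ dm b c a = dm a b c
    ∧ dm c a b = dm a b c ∧ dm c b a = dm a b c := by
  refine ⟨?_, ?_, ?_, ?_, ?_⟩ <;>
    · simp only [dm, Multiset.insert_eq_cons, ← Multiset.singleton_add, dist_comm]
      abel

lemma perm3 {x y z x' y' z' : Plane} (h : ({x, y, z} : Set Plane) = {x', y', z'})
    (h1 : x' ≠ y') (h2 : x' ≠ z') (h3 : y' ≠ z') : dm x y z = dm x' y' z' := by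
  have hx' : x' = x ∨ x' = y ∨ x' = z := by
    have : x' ∈ ({x, y, z} : Set Plane) := by rw [h]; simp
    simpa using this
  have hy' : y' = x ∨ y' = y ∨ y' = z := by
    have : y' ∈ ({x, y, z} : Set Plane) := by rw [h]; simp
    simpa using this
  have hz' : z' = x ∨ z' = y ∨ z' = z := by
    have : z' ∈ ({x, y, z} : Set Plane) := by rw [h]; simp
    simpa using this
  rcases hx' with rfl|rfl|rfl <;> rcases hy' with rfl|rfl|rfl <;> rcases hz' with rfl|rfl|rfl <;>
    first
      | exact absurd rfl h1
      | exact absurd rfl h2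
      | exact absurd rfl h3
      | rfl
      | exact dm_perm.1.symm
      | exact dm_perm.2.1.symm
      | exact dm_perm.2.2.1.symm
      | exact dm_perm.2.2.2.1.symm
      | exact dm_perm.2.2.2.2.symm

lemma cong_dm {a b c a' b' c' : Plane} (hC : Cong {a, b, c} {a', b', c'})
    (h1 : a' ≠ b') (h2 : a' ≠ c') (h3 : b' ≠ c') : dm a b c = dm a' b' c' := by
  obtain ⟨f, hf⟩ := hC
  have himg : (f '' {a, b, c} : Set Plane) = {f a, f b, f c} := by
    simp [Set.image_insert_eq]
  rw [himg] at hf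
  have hd : dm a b c = dm (f a) (f b) (f c) := by
    simp [dm, f.dist_eq]
  rw [hd]
  exact perm3 hf h1 h2 h3

lemma four_classes (P : Set Plane)
    (a₁ b₁ c₁ a₂ b₂ c₂ a₃ b₃ c₃ a₄ b₄ c₄ : Plane)
    (m1 : a₁ ∈ P) (m1' : b₁ ∈ P) (m1'' : c₁ ∈ P) (n1 : a₁ ≠ b₁) (n1' : a₁ ≠ c₁) (n1'' : b₁ ≠ c₁)
    (m2 : a₂ ∈ P) (m2' : b₂ ∈ P) (m2'' : c₂ ∈ P) (n2 : a₂ ≠ b₂) (n2' : a₂ ≠ c₂) (n2'' : b₂ ≠ c₂)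
    (m3 : a₃ ∈ P) (m3' : b₃ ∈ P) (m3'' : c₃ ∈ P) (n3 : a₃ ≠ b₃) (n3' : a₃ ≠ c₃) (n3'' : b₃ ≠ c₃)
    (m4 : a₄ ∈ P) (m4' : b₄ ∈ P) (m4'' : c₄ ∈ P) (n4 : a₄ ≠ b₄) (n4' : a₄ ≠ c₄) (n4'' : b₄ ≠ c₄)
    (e12 : dm a₁ b₁ c₁ ≠ dm a₂ b₂ c₂) (e13 : dm a₁ b₁ c₁ ≠ dm a₃ b₃ c₃)
    (e14 : dm a₁ b₁ c₁ ≠ dm a₄ b₄ c₄) (e23 : dm a₂ b₂ c₂ ≠ dm a₃ b₃ c₃)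
    (e24 : dm a₂ b₂ c₂ ≠ dm a₄ b₄ c₄) (e34 : dm a₃ b₃ c₃ ≠ dm a₄ b₄ c₄) :
    4 ≤ numTriangles P := by
  classical
  set Cl : Set Plane → Set (Set Plane) := fun t => {t' ∈ triplesOf P | Cong t t'} with hCl
  set t1 : Set Plane := {a₁, b₁, c₁}
  set t2 : Set Plane := {a₂, b₂, c₂}
  set t3 : Set Plane := {a₃, b₃, c₃}
  set t4 : Set Plane := {a₄, b₄, c₄}
  have ht1 : t1 ∈ triplesOf P := ⟨a₁, b₁, c₁, m1, m1', m1'', n1, n1', n1'', rfl⟩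
  have ht2 : t2 ∈ triplesOf P := ⟨a₂, b₂, c₂, m2, m2', m2'', n2, n2', n2'', rfl⟩
  have ht3 : t3 ∈ triplesOf P := ⟨a₃, b₃, c₃, m3, m3', m3'', n3, n3', n3'', rfl⟩
  have ht4 : t4 ∈ triplesOf P := ⟨a₄, b₄, c₄, m4, m4', m4'', n4, n4', n4'', rfl⟩
  have hself : ∀ t ∈ triplesOf P, t ∈ Cl t := by
    intro t ht
    exact ⟨ht, IsometryEquiv.refl Plane, by ext x; exact ⟨fun ⟨y, hy, e⟩ => e ▸ hy, fun hx => ⟨x, hx, rfl⟩⟩⟩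
  -- if Cl t = Cl t' then the dm's agree
  have key : ∀ {a b c a' b' c' : Plane}, a' ≠ b' → a' ≠ c' → b' ≠ c' →
      ({a,b,c} : Set Plane) ∈ triplesOf P → ({a',b',c'} : Set Plane) ∈ triplesOf P →
      Cl {a,b,c} = Cl {a',b',c'} → dm a b c = dm a' b' c' := by
    intro a b c a' b' c' hn1 hn2 hn3 hm hm' hCleq
    have : ({a',b',c'} : Set Plane) ∈ Cl {a,b,c} := by
      rw [hCleq]; exact hself _ hm'
    exact cong_dm this.2 hn1 hn2 hn3
  have d12 : Cl t1 ≠ Cl t2 := fun h => e12 (key n2 n2' n2'' ht1 ht2 h)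
  have d13 : Cl t1 ≠ Cl t3 := fun h => e13 (key n3 n3' n3'' ht1 ht3 h)
  have d14 : Cl t1 ≠ Cl t4 := fun h => e14 (key n4 n4' n4'' ht1 ht4 h)
  have d23 : Cl t2 ≠ Cl t3 := fun h => e23 (key n3 n3' n3'' ht2 ht3 h)
  have d24 : Cl t2 ≠ Cl t4 := fun h => e24 (key n4 n4' n4'' ht2 ht4 h)
  have d34 : Cl t3 ≠ Cl t4 := fun h => e34 (key n4 n4' n4'' ht3 ht4 h)
  have hsub : ({Cl t1, Cl t2, Cl t3, Cl t4} : Set (Set (Set Plane))) ⊆ Cl '' triplesOf P := by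
    rintro x (rfl|rfl|rfl|rfl)
    · exact ⟨t1, ht1, rfl⟩
    · exact ⟨t2, ht2, rfl⟩
    · exact ⟨t3, ht3, rfl⟩
    · exact ⟨t4, ht4, rfl⟩
  have hcard : ({Cl t1, Cl t2, Cl t3, Cl t4} : Set (Set (Set Plane))).encard = 4 := by
    rw [Set.encard_insert_of_notMem (by simp [d12, d13, d14]),
        Set.encard_insert_of_notMem (by simp [d23, d24]),
        Set.encard_pair d34]
    rfl
  calc (4 : ℕ∞) = ({Cl t1, Cl t2, Cl t3, Cl t4} : Set (Set (Set Plane))).encard := hcard.symm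
    _ ≤ (Cl '' triplesOf P).encard := Set.encard_mono hsub
    _ = numTriangles P := rfl

section MS
open Classical in
lemma ms_trip_eq {x s d a b : ℝ} (hxs : x ≠ s) (hxd : x ≠ d) (hsd : s ≠ d)
    (h : ({x, a, s} : Multiset ℝ) = {x, b, d}) : a = d ∧ b = s := by
  constructor
  · by_contra had
    have cd := congrArg (Multiset.count d) h
    simp only [Multiset.insert_eq_cons, Multiset.count_cons, Multiset.count_singleton] at cd
    rw [if_neg (Ne.symm hsd), if_neg (fun hh => had hh.symm), if_neg (Ne.symm hxd)] at cd
    split_ifs at cd <;> first | omega | simp_all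
  · by_contra hbs
    have cs := congrArg (Multiset.count s) h
    simp only [Multiset.insert_eq_cons, Multiset.count_cons, Multiset.count_singleton] at cs
    split_ifs at cs <;> first | omega | simp_all

open Classical in
lemma ms_pair_cancel {x a b u : ℝ} (h : ({x, a, u} : Multiset ℝ) = {x, b, u}) : a = b := by
  by_contra hab
  have hc := congrArg (Multiset.count a) h
  simp only [Multiset.insert_eq_cons, Multiset.count_cons, Multiset.count_singleton] at hc
  split_ifs at hc <;> simp_all <;> omega

open Classical in
lemma ms_count_ne {y : ℝ} {M N : Multiset ℝ} (h : Multiset.count y M ≠ Multiset.count y N) :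
    M ≠ N := fun h' => h (by rw [h'])
end MS

open Classical in
lemma count3 (y u v w : ℝ) : Multiset.count y ({u,v,w} : Multiset ℝ) =
    (if y = u then 1 else 0) + (if y = v then 1 else 0) + (if y = w then 1 else 0) := by
  simp only [Multiset.insert_eq_cons, Multiset.count_cons, Multiset.count_singleton]
  split_ifs <;> omega

lemma main_aux (V : Set Plane) (p P0 P1 P2 P3 P4 : Plane) (s d : ℝ)
    (hP0 : P0 ∈ V) (hP1 : P1 ∈ V) (hP2 : P2 ∈ V) (hP3 : P3 ∈ V) (hP4 : P4 ∈ V)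
    (hpV : p ∉ V) (hsd : s ≠ d) (hs : 0 < s) (hd : 0 < d)
    (h01 : dist P0 P1 = s) (h12 : dist P1 P2 = s) (h04 : dist P0 P4 = s)
    (h02 : dist P0 P2 = d) (h03 : dist P0 P3 = d) (h13 : dist P1 P3 = d) (h14 : dist P1 P4 = d)
    (hxs : dist p P0 ≠ s) (hxd : dist p P0 ≠ d) :
    4 ≤ numTriangles (V ∪ {p}) := by
  classical
  set Q : Set Plane := V ∪ {p} with hQ
  have mP0 : P0 ∈ Q := Or.inl hP0
  have mP1 : P1 ∈ Q := Or.inl hP1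
  have mP2 : P2 ∈ Q := Or.inl hP2
  have mP3 : P3 ∈ Q := Or.inl hP3
  have mP4 : P4 ∈ Q := Or.inl hP4
  have mp : p ∈ Q := Or.inr rfl
  have ne_of_s : ∀ {X Y : Plane}, dist X Y = s → X ≠ Y := by
    intro X Y hXY h; rw [h, dist_self] at hXY; exact (ne_of_gt hs) hXY.symm
  have ne_of_d : ∀ {X Y : Plane}, dist X Y = d → X ≠ Y := by
    intro X Y hXY h; rw [h, dist_self] at hXY; exact (ne_of_gt hd) hXY.symm
  have n01 : P0 ≠ P1 := ne_of_s h01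
  have n12 : P1 ≠ P2 := ne_of_s h12
  have n04 : P0 ≠ P4 := ne_of_s h04
  have n02 : P0 ≠ P2 := ne_of_d h02
  have n03 : P0 ≠ P3 := ne_of_d h03
  have n13 : P1 ≠ P3 := ne_of_d h13
  have n14 : P1 ≠ P4 := ne_of_d h14
  have np : ∀ {X : Plane}, X ∈ V → p ≠ X := fun hX h => hpV (h ▸ hX)
  set x := dist p P0 with hx
  set a1 := dist p P1 with ha1
  set a2 := dist p P2 with ha2
  set a3 := dist p P3 with ha3
  set a4 := dist p P4 with ha4
  have dm_old1 : dm P0 P1 P2 = {s, d, s} := by simp only [dm, h01, h02, h12]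
  have dm_old2 : dm P0 P1 P3 = {s, d, d} := by simp only [dm, h01, h03, h13]
  have dm_T1 : dm p P0 P1 = {x, a1, s} := by simp only [dm, h01, ← hx, ← ha1]
  have dm_T2 : dm p P0 P2 = {x, a2, d} := by simp only [dm, h02, ← hx, ← ha2]
  have dm_T3 : dm p P0 P4 = {x, a4, s} := by simp only [dm, h04, ← hx, ← ha4]
  have dm_T4 : dm p P0 P3 = {x, a3, d} := by simp only [dm, h03, ← hx, ← ha3]
  have dm_T5 : dm p P1 P4 = {a1, a4, d} := by simp only [dm, h14, ← ha1, ← ha4]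
  -- generic inequalities
  have e12 : dm P0 P1 P2 ≠ dm P0 P1 P3 := by
    rw [dm_old1, dm_old2]
    apply ms_count_ne (y := s)
    rw [count3, count3]
    split_ifs <;> first | omega | simp_all
  have e_old1_x : ∀ {u v : ℝ}, ({s,d,s} : Multiset ℝ) ≠ {x, u, v} → True := fun _ => trivial
  have old_ne : ∀ (M : Multiset ℝ) (u v : ℝ), Multiset.count x M = 0 → M ≠ {x, u, v} := by
    intro M u v hM h
    rw [h, count3] at hM
    simp at hM
  have cnt_old1 : Multiset.count x ({s,d,s} : Multiset ℝ) = 0 := by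
    rw [count3]; simp [hxs, hxd]
  have cnt_old2 : Multiset.count x ({s,d,d} : Multiset ℝ) = 0 := by
    rw [count3]; simp [hxs, hxd]
  have e13 : dm P0 P1 P2 ≠ dm p P0 P1 := by
    rw [dm_old1, dm_T1]; exact old_ne _ _ _ cnt_old1
  have e23 : dm P0 P1 P3 ≠ dm p P0 P1 := by
    rw [dm_old2, dm_T1]; exact old_ne _ _ _ cnt_old2
  by_cases hA : dm p P0 P1 = dm p P0 P2
  case neg =>
    exact four_classes Q P0 P1 P2 P0 P1 P3 p P0 P1 p P0 P2
      mP0 mP1 mP2 n01 n02 n12 mP0 mP1 mP3 n01 n03 n13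
      mp mP0 mP1 (np hP0) (np hP1) n01 mp mP0 mP2 (np hP0) (np hP2) n02
      e12 e13 (by rw [dm_old1, dm_T2]; exact old_ne _ _ _ cnt_old1)
      e23 (by rw [dm_old2, dm_T2]; exact old_ne _ _ _ cnt_old2) hA
  case pos =>
  by_cases hB : dm p P0 P1 = dm p P0 P4
  case neg =>
    exact four_classes Q P0 P1 P2 P0 P1 P3 p P0 P1 p P0 P4
      mP0 mP1 mP2 n01 n02 n12 mP0 mP1 mP3 n01 n03 n13
      mp mP0 mP1 (np hP0) (np hP1) n01 mp mP0 mP4 (np hP0) (np hP4) n04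
      e12 e13 (by rw [dm_old1, dm_T3]; exact old_ne _ _ _ cnt_old1)
      e23 (by rw [dm_old2, dm_T3]; exact old_ne _ _ _ cnt_old2) hB
  case pos =>
  by_cases hC : dm p P0 P1 = dm p P0 P3
  case neg =>
    exact four_classes Q P0 P1 P2 P0 P1 P3 p P0 P1 p P0 P3
      mP0 mP1 mP2 n01 n02 n12 mP0 mP1 mP3 n01 n03 n13
      mp mP0 mP1 (np hP0) (np hP1) n01 mp mP0 mP3 (np hP0) (np hP3) n03
      e12 e13 (by rw [dm_old1, dm_T4]; exact old_ne _ _ _ cnt_old1)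
      e23 (by rw [dm_old2, dm_T4]; exact old_ne _ _ _ cnt_old2) hC
  case pos =>
  rw [dm_T1, dm_T2] at hA
  rw [dm_T1, dm_T3] at hB
  rw [dm_T1, dm_T4] at hC
  obtain ⟨ha1d, ha2s⟩ := ms_trip_eq hxs hxd hsd hA
  obtain ⟨_, ha3s⟩ := ms_trip_eq hxs hxd hsd hC
  have ha4d : a4 = d := by rw [← ms_pair_cancel hB, ha1d]
  have dm_T5' : dm p P1 P4 = ({d, d, d} : Multiset ℝ) := by rw [dm_T5, ha1d, ha4d]
  have cnt_s_ddd : Multiset.count s ({d,d,d} : Multiset ℝ) = 0 := by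
    rw [count3]; simp [hsd]
  refine four_classes Q P0 P1 P2 P0 P1 P3 p P0 P1 p P1 P4
    mP0 mP1 mP2 n01 n02 n12 mP0 mP1 mP3 n01 n03 n13
    mp mP0 mP1 (np hP0) (np hP1) n01 mp mP1 mP4 (np hP1) (np hP4) n14
    e12 e13 ?_ e23 ?_ ?_
  · rw [dm_old1, dm_T5']
    apply ms_count_ne (y := s)
    rw [count3, count3]
    simp [hsd, cnt_s_ddd]
  · rw [dm_old2, dm_T5']
    apply ms_count_ne (y := s)
    rw [count3, count3]
    simp [hsd]
  · rw [dm_T1, dm_T5']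
    apply ms_count_ne (y := x)
    rw [count3, count3]
    simp [hxd]


lemma pent_eq (c : Plane) {r : ℝ} (hr : 0 < r) (φ : ℝ) {i j k : Fin 5} (hij : i < j)
    (hjk : j < k) (p : Plane)
    (h1 : dist p (W c r (φ + 2*π*(i:ℝ)/5)) = dist p (W c r (φ + 2*π*(j:ℝ)/5)))
    (h2 : dist p (W c r (φ + 2*π*(j:ℝ)/5)) = dist p (W c r (φ + 2*π*(k:ℝ)/5))) : p = c := by
  have pi_pos := Real.pi_pos
  have hijR : ((i:ℝ)) < (j:ℝ) := by exact_mod_cast hij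
  have hjkR : ((j:ℝ)) < (k:ℝ) := by exact_mod_cast hjk
  have hkR : ((k:ℝ)) < 5 := by exact_mod_cast k.isLt
  have hiR : (0:ℝ) ≤ (i:ℝ) := by positivity
  apply equidist c hr (α := φ + 2*π*(i:ℝ)/5) (β := φ + 2*π*(j:ℝ)/5) (γ := φ + 2*π*(k:ℝ)/5)
  · nlinarith
  · nlinarith
  · nlinarith
  · exact h1
  · exact h2


set_option maxHeartbeats 2000000 in
/-- Adding any point to the vertex set of a regular pentagon yields a set
spanning at least 4 distinct triangles. -/
theorem pentagon_plus_point_spans_at_least_four_triangles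
    (V : Set Plane) (hV : IsRegularPentagon V) (p : Plane) (hp : p ∉ V) :
    4 ≤ numTriangles (V ∪ {p}) := by
  classical
  obtain ⟨c, r, φ, hr, hVeq⟩ := hV
  set w : ℝ → Plane := fun m => W c r (φ + 2*π*m/5) with hw
  have hVeq' : V = Set.range (fun k : Fin 5 => w (k : ℝ)) := hVeq
  have pi_pos := Real.pi_pos
  have hsin1 : 0 < Real.sin (π/5) :=
    Real.sin_pos_of_pos_of_lt_pi (by linarith) (by linarith)
  have hsin2 : 0 < Real.sin (2*π/5) :=
    Real.sin_pos_of_pos_of_lt_pi (by linarith) (by linarith)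
  have hmono1 : Real.sin (π/6) < Real.sin (π/5) := by
    apply Real.strictMonoOn_sin (by constructor <;> linarith) (by constructor <;> linarith)
    linarith
  have hmono2 : Real.sin (π/5) < Real.sin (2*π/5) := by
    apply Real.strictMonoOn_sin (by constructor <;> linarith) (by constructor <;> linarith)
    linarith
  have hhalf : (1:ℝ)/2 < Real.sin (π/5) := by
    rw [← Real.sin_pi_div_six]; exact hmono1
  set s : ℝ := 2*r*Real.sin (π/5) with hsdef
  set d : ℝ := 2*r*Real.sin (2*π/5) with hddef
  have hs : 0 < s := by rw [hsdef]; positivity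
  have hd : 0 < d := by rw [hddef]; positivity
  have hsltd : s < d := by rw [hsdef, hddef]; nlinarith
  have hsd : s ≠ d := ne_of_lt hsltd
  have hrs : r < s := by rw [hsdef]; nlinarith
  have hrd : r < d := lt_trans hrs hsltd
  have hdist : ∀ mi ni : ℝ, dist (w mi) (w ni) = 2*r*|Real.sin (π*(mi-ni)/5)| := by
    intro mi ni
    rw [hw]
    rw [chord c hr.le]
    rw [show (φ + 2*π*mi/5 - (φ + 2*π*ni/5))/2 = π*(mi-ni)/5 by ring]
  have habs1 : |Real.sin (π*1/5)| = Real.sin (π/5) := by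
    rw [show π*1/5 = π/5 by ring]; exact abs_of_pos hsin1
  have habs2 : |Real.sin (π*2/5)| = Real.sin (2*π/5) := by
    rw [show π*2/5 = 2*π/5 by ring]; exact abs_of_pos hsin2
  have habs3 : |Real.sin (π*3/5)| = Real.sin (2*π/5) := by
    rw [show π*3/5 = π - 2*π/5 by ring, Real.sin_pi_sub]; exact abs_of_pos hsin2
  have habs4 : |Real.sin (π*4/5)| = Real.sin (π/5) := by
    rw [show π*4/5 = π - π/5 by ring, Real.sin_pi_sub]; exact abs_of_pos hsin1
  have D01 : dist (w 0) (w 1) = s := by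
    rw [hdist, show π*((0:ℝ)-1)/5 = -(π*1/5) by ring, Real.sin_neg, abs_neg, habs1]
  have D02 : dist (w 0) (w 2) = d := by
    rw [hdist, show π*((0:ℝ)-2)/5 = -(π*2/5) by ring, Real.sin_neg, abs_neg, habs2]
  have D03 : dist (w 0) (w 3) = d := by
    rw [hdist, show π*((0:ℝ)-3)/5 = -(π*3/5) by ring, Real.sin_neg, abs_neg, habs3]
  have D04 : dist (w 0) (w 4) = s := by
    rw [hdist, show π*((0:ℝ)-4)/5 = -(π*4/5) by ring, Real.sin_neg, abs_neg, habs4]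
  have D10 : dist (w 1) (w 0) = s := by
    rw [hdist, show π*((1:ℝ)-0)/5 = π*1/5 by ring, habs1]
  have D12 : dist (w 1) (w 2) = s := by
    rw [hdist, show π*((1:ℝ)-2)/5 = -(π*1/5) by ring, Real.sin_neg, abs_neg, habs1]
  have D13 : dist (w 1) (w 3) = d := by
    rw [hdist, show π*((1:ℝ)-3)/5 = -(π*2/5) by ring, Real.sin_neg, abs_neg, habs2]
  have D14 : dist (w 1) (w 4) = d := by
    rw [hdist, show π*((1:ℝ)-4)/5 = -(π*3/5) by ring, Real.sin_neg, abs_neg, habs3]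
  have D20 : dist (w 2) (w 0) = d := by
    rw [hdist, show π*((2:ℝ)-0)/5 = π*2/5 by ring, habs2]
  have D21 : dist (w 2) (w 1) = s := by
    rw [hdist, show π*((2:ℝ)-1)/5 = π*1/5 by ring, habs1]
  have D23 : dist (w 2) (w 3) = s := by
    rw [hdist, show π*((2:ℝ)-3)/5 = -(π*1/5) by ring, Real.sin_neg, abs_neg, habs1]
  have D24 : dist (w 2) (w 4) = d := by
    rw [hdist, show π*((2:ℝ)-4)/5 = -(π*2/5) by ring, Real.sin_neg, abs_neg, habs2]
  have D30 : dist (w 3) (w 0) = d := by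
    rw [hdist, show π*((3:ℝ)-0)/5 = π*3/5 by ring, habs3]
  have D31 : dist (w 3) (w 1) = d := by
    rw [hdist, show π*((3:ℝ)-1)/5 = π*2/5 by ring, habs2]
  have D32 : dist (w 3) (w 2) = s := by
    rw [hdist, show π*((3:ℝ)-2)/5 = π*1/5 by ring, habs1]
  have D34 : dist (w 3) (w 4) = s := by
    rw [hdist, show π*((3:ℝ)-4)/5 = -(π*1/5) by ring, Real.sin_neg, abs_neg, habs1]
  have D40 : dist (w 4) (w 0) = s := by
    rw [hdist, show π*((4:ℝ)-0)/5 = π*4/5 by ring, habs4]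
  have D41 : dist (w 4) (w 1) = d := by
    rw [hdist, show π*((4:ℝ)-1)/5 = π*3/5 by ring, habs3]
  have D42 : dist (w 4) (w 2) = d := by
    rw [hdist, show π*((4:ℝ)-2)/5 = π*2/5 by ring, habs2]
  have D43 : dist (w 4) (w 3) = s := by
    rw [hdist, show π*((4:ℝ)-3)/5 = π*1/5 by ring, habs1]
  have hmemV : ∀ k : Fin 5, w (k:ℝ) ∈ V := by
    intro k; rw [hVeq']; exact ⟨k, rfl⟩
  have m0 : w 0 ∈ V := by have := hmemV 0; norm_num at this; exact this
  have m1 : w 1 ∈ V := by have := hmemV 1; norm_num at this; exact this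
  have m2 : w 2 ∈ V := by have := hmemV 2; norm_num at this; exact this
  have m3 : w 3 ∈ V := by have := hmemV 3; norm_num at this; exact this
  have m4 : w 4 ∈ V := by have := hmemV 4; norm_num at this; exact this
  -- not all distances from p are in {s, d}
  by_cases hall : ∀ k : Fin 5, dist p (w (k:ℝ)) = s ∨ dist p (w (k:ℝ)) = d
  · exfalso
    have pig : ∀ g : Fin 5 → Bool, ∃ i j k : Fin 5, i < j ∧ j < k ∧ g i = g j ∧ g j = g k := by
      decide
    obtain ⟨i, j, k, hij, hjk, e1, e2⟩ := pig (fun k => if dist p (w (k:ℝ)) = s then true else false)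
    have heq1 : dist p (w (i:ℝ)) = dist p (w (j:ℝ)) := by
      by_cases hi : dist p (w (i:ℝ)) = s
      · by_cases hj : dist p (w (j:ℝ)) = s
        · rw [hi, hj]
        · exfalso; simp [hi, hj] at e1
      · by_cases hj : dist p (w (j:ℝ)) = s
        · exfalso; simp [hi, hj] at e1
        · rw [(hall i).resolve_left hi, (hall j).resolve_left hj]
    have heq2 : dist p (w (j:ℝ)) = dist p (w (k:ℝ)) := by
      by_cases hj : dist p (w (j:ℝ)) = s
      · by_cases hk : dist p (w (k:ℝ)) = s
        · rw [hj, hk]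
        · exfalso; simp [hj, hk] at e2
      · by_cases hk : dist p (w (k:ℝ)) = s
        · exfalso; simp [hj, hk] at e2
        · rw [(hall j).resolve_left hj, (hall k).resolve_left hk]
    have hpc : p = c := pent_eq c hr φ hij hjk p heq1 heq2
    have : dist p (w (i:ℝ)) = r := by rw [hpc, hw]; exact dist_center c hr.le _
    rcases hall i with h | h <;> rw [this] at h <;> linarith
  · push_neg at hall
    obtain ⟨i, hxs, hxd⟩ := hall
    fin_cases i <;> norm_num at hxs hxd
    · exact main_aux V p (w 0) (w 1) (w 2) (w 3) (w 4) s d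
          m0 m1 m2 m3 m4 hp hsd hs hd
          D01 D12 D04 D02 D03 D13 D14 hxs hxd
    · exact main_aux V p (w 1) (w 2) (w 3) (w 4) (w 0) s d
          m1 m2 m3 m4 m0 hp hsd hs hd
          D12 D23 D10 D13 D14 D24 D20 hxs hxd
    · exact main_aux V p (w 2) (w 3) (w 4) (w 0) (w 1) s d
          m2 m3 m4 m0 m1 hp hsd hs hd
          D23 D34 D21 D24 D20 D30 D31 hxs hxd
    · exact main_aux V p (w 3) (w 4) (w 0) (w 1) (w 2) s d
          m3 m4 m0 m1 m2 hp hsd hs hd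
          D34 D40 D32 D30 D31 D41 D42 hxs hxd
    · exact main_aux V p (w 4) (w 0) (w 1) (w 2) (w 3) s d
          m4 m0 m1 m2 m3 hp hsd hs hd
          D40 D01 D43 D41 D42 D02 D03 hxs hxd
end
end

section
/- Let [N] = {0,1,…,N−1}. For any three points P₁, P₂, P₃ ∈ [N]×[N] ⊆ ℤ² ⊆ ℝ², there exist points Q₂, Q₃ ∈ [N]×[N] such that the triple {(0,0), Q₂, Q₃} is congruent to {P₁, P₂, P₃}. -/
open Real EuclideanGeometry

noncomputable section

/-- The embedding of the integer lattice `ℤ²` into the plane. -/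
def toPlane (P : ℤ × ℤ) : Plane := pt P.1 P.2

/-- Membership in the grid `[N] × [N] = {0, 1, …, N-1}²`. -/
def inGrid (N : ℕ) (P : ℤ × ℤ) : Prop := 0 ≤ P.1 ∧ P.1 < N ∧ 0 ≤ P.2 ∧ P.2 < N

/-- A coordinatewise map `x ↦ s • x + c` with `s i = ±1` is an isometry of the plane. -/
def signIso (s c : Fin 2 → ℝ) (hs : ∀ i, s i * s i = 1) : Plane ≃ᵢ Plane where
  toFun x := WithLp.toLp 2 (fun i => s i * x i + c i)
  invFun y := WithLp.toLp 2 (fun i => s i * (y i - c i))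
  left_inv x := PiLp.ext fun i => by
    show s i * (s i * x i + c i - c i) = x i
    rw [add_sub_cancel_right, ← mul_assoc, hs i, one_mul]
  right_inv y := PiLp.ext fun i => by
    show s i * (s i * (y i - c i)) + c i = y i
    rw [← mul_assoc, hs i, one_mul, sub_add_cancel]
  isometry_toFun := Isometry.of_dist_eq fun x y => by
    rw [EuclideanSpace.dist_eq, EuclideanSpace.dist_eq]
    congr 1
    refine Finset.sum_congr rfl fun i _ => ?_
    have h1 : |s i| = 1 := by
      have := hs i
      rcases abs_choice (s i) with h | h <;> nlinarith [abs_nonneg (s i)]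
    show dist (s i * x i + c i) (s i * y i + c i) ^ 2 = dist (x i) (y i) ^ 2
    have h2 : (s i * x i + c i) - (s i * y i + c i) = s i * (x i - y i) := by ring
    rw [Real.dist_eq, Real.dist_eq, h2, abs_mul, h1, one_mul]

@[simp] lemma signIso_apply (s c : Fin 2 → ℝ) (hs : ∀ i, s i * s i = 1) (x : Plane) (i : Fin 2) :
    signIso s c hs x i = s i * x i + c i := rfl

@[simp] lemma toPlane_apply_zero (P : ℤ × ℤ) : toPlane P 0 = P.1 := rfl
@[simp] lemma toPlane_apply_one (P : ℤ × ℤ) : toPlane P 1 = P.2 := rfl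

lemma cong_shift (s t : ℝ) (hs : s * s = 1) (ht : t * t = 1)
    (A B C Q R : ℤ × ℤ)
    (hB1 : s * (Q.1 : ℝ) + (A.1 : ℝ) = (B.1 : ℝ)) (hB2 : t * (Q.2 : ℝ) + (A.2 : ℝ) = (B.2 : ℝ))
    (hC1 : s * (R.1 : ℝ) + (A.1 : ℝ) = (C.1 : ℝ)) (hC2 : t * (R.2 : ℝ) + (A.2 : ℝ) = (C.2 : ℝ)) :
    Cong {toPlane (0, 0), toPlane Q, toPlane R} {toPlane A, toPlane B, toPlane C} := by
  have hsf : ∀ i, (![s, t] : Fin 2 → ℝ) i * ![s, t] i = 1 := by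
    intro i; fin_cases i <;> simpa
  refine ⟨signIso ![s, t] ![(A.1 : ℝ), (A.2 : ℝ)] hsf, ?_⟩
  rw [Set.image_insert_eq, Set.image_insert_eq, Set.image_singleton]
  have e0 : signIso ![s, t] ![(A.1 : ℝ), (A.2 : ℝ)] hsf (toPlane (0, 0)) = toPlane A := by
    ext i; fin_cases i <;> simp
  have e1 : signIso ![s, t] ![(A.1 : ℝ), (A.2 : ℝ)] hsf (toPlane Q) = toPlane B := by
    ext i; fin_cases i <;> simp [hB1, hB2]
  have e2 : signIso ![s, t] ![(A.1 : ℝ), (A.2 : ℝ)] hsf (toPlane R) = toPlane C := by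
    ext i; fin_cases i <;> simp [hC1, hC2]
  rw [e0, e1, e2]

/-- If `A` is extreme (minimal or maximal) among the three points in each coordinate,
then translating `A` to the origin and reflecting coordinatewise as needed keeps the
triple in the grid. -/
lemma key (N : ℕ) (A B C : ℤ × ℤ) (hA : inGrid N A) (hB : inGrid N B) (hC : inGrid N C)
    (hx : (A.1 ≤ B.1 ∧ A.1 ≤ C.1) ∨ (B.1 ≤ A.1 ∧ C.1 ≤ A.1))
    (hy : (A.2 ≤ B.2 ∧ A.2 ≤ C.2) ∨ (B.2 ≤ A.2 ∧ C.2 ≤ A.2)) :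
    ∃ Q R : ℤ × ℤ, inGrid N Q ∧ inGrid N R ∧
      Cong {toPlane (0, 0), toPlane Q, toPlane R} {toPlane A, toPlane B, toPlane C} := by
  obtain ⟨hA1, hA2, hA3, hA4⟩ := hA
  obtain ⟨hB1, hB2, hB3, hB4⟩ := hB
  obtain ⟨hC1, hC2, hC3, hC4⟩ := hC
  rcases hx with hx | hx <;> rcases hy with hy | hy
  · exact ⟨(B.1 - A.1, B.2 - A.2), (C.1 - A.1, C.2 - A.2),
      by constructor <;> [omega; constructor <;> [omega; omega]],
      by constructor <;> [omega; constructor <;> [omega; omega]],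
      cong_shift 1 1 (by ring) (by ring) A B C _ _
        (by push_cast; ring) (by push_cast; ring) (by push_cast; ring) (by push_cast; ring)⟩
  · exact ⟨(B.1 - A.1, A.2 - B.2), (C.1 - A.1, A.2 - C.2),
      by constructor <;> [omega; constructor <;> [omega; omega]],
      by constructor <;> [omega; constructor <;> [omega; omega]],
      cong_shift 1 (-1) (by ring) (by ring) A B C _ _
        (by push_cast; ring) (by push_cast; ring) (by push_cast; ring) (by push_cast; ring)⟩
  · exact ⟨(A.1 - B.1, B.2 - A.2), (A.1 - C.1, C.2 - A.2),
      by constructor <;> [omega; constructor <;> [omega; omega]],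
      by constructor <;> [omega; constructor <;> [omega; omega]],
      cong_shift (-1) 1 (by ring) (by ring) A B C _ _
        (by push_cast; ring) (by push_cast; ring) (by push_cast; ring) (by push_cast; ring)⟩
  · exact ⟨(A.1 - B.1, A.2 - B.2), (A.1 - C.1, A.2 - C.2),
      by constructor <;> [omega; constructor <;> [omega; omega]],
      by constructor <;> [omega; constructor <;> [omega; omega]],
      cong_shift (-1) (-1) (by ring) (by ring) A B C _ _
        (by push_cast; ring) (by push_cast; ring) (by push_cast; ring) (by push_cast; ring)⟩

/-- Any triple of points of the grid `[N] × [N]` is congruent to a triple of grid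
points having one point at the origin. -/
theorem grid_triangle_origin_shift (N : ℕ) (P₁ P₂ P₃ : ℤ × ℤ)
    (h₁ : inGrid N P₁) (h₂ : inGrid N P₂) (h₃ : inGrid N P₃) :
    ∃ Q₂ Q₃ : ℤ × ℤ, inGrid N Q₂ ∧ inGrid N Q₃ ∧
      Cong {toPlane (0, 0), toPlane Q₂, toPlane Q₃} {toPlane P₁, toPlane P₂, toPlane P₃} := by
  have H : (((P₁.1 ≤ P₂.1 ∧ P₁.1 ≤ P₃.1) ∨ (P₂.1 ≤ P₁.1 ∧ P₃.1 ≤ P₁.1)) ∧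
            ((P₁.2 ≤ P₂.2 ∧ P₁.2 ≤ P₃.2) ∨ (P₂.2 ≤ P₁.2 ∧ P₃.2 ≤ P₁.2))) ∨
           (((P₂.1 ≤ P₁.1 ∧ P₂.1 ≤ P₃.1) ∨ (P₁.1 ≤ P₂.1 ∧ P₃.1 ≤ P₂.1)) ∧
            ((P₂.2 ≤ P₁.2 ∧ P₂.2 ≤ P₃.2) ∨ (P₁.2 ≤ P₂.2 ∧ P₃.2 ≤ P₂.2))) ∨
           (((P₃.1 ≤ P₁.1 ∧ P₃.1 ≤ P₂.1) ∨ (P₁.1 ≤ P₃.1 ∧ P₂.1 ≤ P₃.1)) ∧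
            ((P₃.2 ≤ P₁.2 ∧ P₃.2 ≤ P₂.2) ∨ (P₁.2 ≤ P₃.2 ∧ P₂.2 ≤ P₃.2))) := by omega
  rcases H with ⟨hx, hy⟩ | ⟨hx, hy⟩ | ⟨hx, hy⟩
  · exact key N P₁ P₂ P₃ h₁ h₂ h₃ hx hy
  · obtain ⟨Q, R, hQ, hR, hc⟩ := key N P₂ P₁ P₃ h₂ h₁ h₃ hx hy
    refine ⟨Q, R, hQ, hR, ?_⟩
    rwa [Set.insert_comm (toPlane P₂) (toPlane P₁)] at hc
  · obtain ⟨Q, R, hQ, hR, hc⟩ := key N P₃ P₁ P₂ h₃ h₁ h₂ hx hy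
    refine ⟨Q, R, hQ, hR, ?_⟩
    rwa [Set.insert_comm (toPlane P₃) (toPlane P₁), Set.pair_comm (toPlane P₃) (toPlane P₂)] at hc
end
end

section
/- Let (p,q,r) be a primitive Pythagorean triple and let θ be the angle with cos θ = q/r and sin θ = p/r. If (a,b) ∈ ℤ² is a nonzero point rotatable by θ, then r ≤ a² + b². In particular, if r > 2N², then no nonzero point of [N]×[N] is rotatable by θ. -/
open Real

noncomputable section

/-- A primitive Pythagorean triple: positive integers `p, q, r` with
`p² + q² = r²` and `gcd(p, q) = 1`. -/
def IsPPT (p q r : ℕ) : Prop :=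
  0 < p ∧ 0 < q ∧ 0 < r ∧ p ^ 2 + q ^ 2 = r ^ 2 ∧ Nat.gcd p q = 1

/-- A lattice point `P ∈ ℤ²` is rotatable by the angle `θ` if its counterclockwise
rotation about the origin by `θ` is again a lattice point. -/
def RotatableBy (P : ℤ × ℤ) (θ : ℝ) : Prop :=
  ∃ Q : ℤ × ℤ, (Q.1 : ℝ) = P.1 * Real.cos θ - P.2 * Real.sin θ ∧
    (Q.2 : ℝ) = P.1 * Real.sin θ + P.2 * Real.cos θ

/-- For a primitive Pythagorean triple `(p, q, r)` and the angle `θ` with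
`cos θ = q/r`, `sin θ = p/r`: any nonzero lattice point `(a, b)` rotatable by `θ`
satisfies `r ≤ a² + b²`; in particular if `r > 2N²` then no nonzero point of the
grid `[N] × [N]` is rotatable by `θ`. -/
theorem rotatable_lower_bound (p q r : ℕ) (hppt : IsPPT p q r) (θ : ℝ)
    (hcos : Real.cos θ = q / r) (hsin : Real.sin θ = p / r) :
    (∀ a b : ℤ, (a, b) ≠ (0, 0) → RotatableBy (a, b) θ → (r : ℤ) ≤ a ^ 2 + b ^ 2) ∧
    (∀ N : ℕ, 2 * N ^ 2 < r →
      ∀ P : ℤ × ℤ, inGrid N P → P ≠ (0, 0) → ¬ RotatableBy P θ) := by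
  obtain ⟨hp, hq, hr, hpyth, hgcd⟩ := hppt
  have hr0 : (r : ℝ) ≠ 0 := Nat.cast_ne_zero.mpr hr.ne'
  have hgq : Nat.Coprime q r := by
    have h1 := Nat.gcd_dvd_left q r
    have h2 := Nat.gcd_dvd_right q r
    have hdp : Nat.gcd q r ∣ p := by
      have hsq : Nat.gcd q r ^ 2 ∣ p ^ 2 := by
        have hps : p ^ 2 = r ^ 2 - q ^ 2 := by omega
        rw [hps]
        exact Nat.dvd_sub (pow_dvd_pow_of_dvd h2 2) (pow_dvd_pow_of_dvd h1 2)
      exact (Nat.pow_dvd_pow_iff (by norm_num)).mp hsq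
    have := Nat.dvd_gcd hdp h1
    rwa [hgcd, Nat.dvd_one] at this
  have hcop : IsCoprime (r : ℤ) (q : ℤ) := by
    rw [Int.isCoprime_iff_gcd_eq_one, Int.gcd_natCast_natCast]
    exact hgq.symm
  have key : ∀ a b : ℤ, (a, b) ≠ (0, 0) → RotatableBy (a, b) θ → (r : ℤ) ≤ a ^ 2 + b ^ 2 := by
    intro a b hab hrot
    obtain ⟨Q, hQ1, hQ2⟩ := hrot
    simp only at hQ1 hQ2
    have h1 : a * q - b * p = r * Q.1 := by
      have : ((a * q - b * p : ℤ) : ℝ) = ((r * Q.1 : ℤ) : ℝ) := by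
        push_cast
        rw [hQ1, hcos, hsin]
        field_simp
      exact_mod_cast this
    have hdvd : (r : ℤ) ∣ a * q - b * p := ⟨Q.1, h1⟩
    have hpythZ : (p : ℤ) ^ 2 + (q : ℤ) ^ 2 = (r : ℤ) ^ 2 := by exact_mod_cast hpyth
    have hdvd2 : (r : ℤ) ∣ (q : ℤ) ^ 2 * (a ^ 2 + b ^ 2) := by
      have : (q : ℤ) ^ 2 * (a ^ 2 + b ^ 2) =
          (a * q - b * p) * (a * q + b * p) + b ^ 2 * (r : ℤ) ^ 2 := by
        nlinarith [hpythZ]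
      rw [this]
      exact dvd_add (hdvd.mul_right _) ⟨b ^ 2 * r, by ring⟩
    have hdvd3 : (r : ℤ) ∣ a ^ 2 + b ^ 2 :=
      (hcop.pow_right).dvd_of_dvd_mul_left hdvd2
    have hpos : 0 < a ^ 2 + b ^ 2 := by
      have hne : a ≠ 0 ∨ b ≠ 0 := by
        by_contra h
        push_neg at h
        exact hab (by simp [h.1, h.2])
      rcases hne with ha | hb
      · have := Int.one_le_abs (show a ≠ 0 from ha)
        nlinarith [sq_nonneg b, sq_abs a]
      · have := Int.one_le_abs (show b ≠ 0 from hb)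
        nlinarith [sq_nonneg a, sq_abs b]
    exact Int.le_of_dvd hpos hdvd3
  refine ⟨key, ?_⟩
  intro N hN P hgrid hne hrot
  obtain ⟨ha0, haN, hb0, hbN⟩ := hgrid
  have hP : P = (P.1, P.2) := rfl
  have hkey := key P.1 P.2 (by rwa [← hP]) (by rwa [← hP])
  have h1 : P.1 * P.1 < (N : ℤ) * N := by
    rcases eq_or_lt_of_le ha0 with h | h
    · rw [← h]; simpa using mul_pos (lt_of_le_of_lt ha0 haN) (lt_of_le_of_lt ha0 haN)
    · exact mul_lt_mul'' haN haN ha0 ha0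
  have h2 : P.2 * P.2 < (N : ℤ) * N := by
    rcases eq_or_lt_of_le hb0 with h | h
    · rw [← h]; simpa using mul_pos (lt_of_le_of_lt hb0 hbN) (lt_of_le_of_lt hb0 hbN)
    · exact mul_lt_mul'' hbN hbN hb0 hb0
  have hNr : 2 * (N : ℤ) ^ 2 < (r : ℤ) := by exact_mod_cast hN
  nlinarith [hkey, h1, h2]
end
end

section
/- Let (p,q,r) be a primitive Pythagorean triple and let θ be the angle with cos θ = q/r and sin θ = p/r. The number of points of [N]×[N] that are rotatable by θ is: 0 if 2N² < r (counting only nonzero points); at most N if N ≤ r ≤ 2N²; and at most r·⌈N/r⌉² if r < N. -/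
open Real

noncomputable section

/-- The number of points of the grid `[N] × [N]` rotatable by the angle `θ`
associated to a primitive Pythagorean triple `(p, q, r)`: there are no
nonzero such points if `2N² < r`; at most `N` if `N ≤ r ≤ 2N²`; and at most
`r·⌈N/r⌉²` if `r < N`. -/
theorem rotatable_points_count (p q r : ℕ) (hppt : IsPPT p q r) (θ : ℝ)
    (hcos : Real.cos θ = q / r) (hsin : Real.sin θ = p / r) (N : ℕ) :
    (2 * N ^ 2 < r →
      {P : ℤ × ℤ | inGrid N P ∧ P ≠ (0, 0) ∧ RotatableBy P θ}.ncard = 0) ∧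
    (N ≤ r → r ≤ 2 * N ^ 2 →
      {P : ℤ × ℤ | inGrid N P ∧ RotatableBy P θ}.ncard ≤ N) ∧
    (r < N →
      {P : ℤ × ℤ | inGrid N P ∧ RotatableBy P θ}.ncard ≤ r * ((N + r - 1) / r) ^ 2) := by
  obtain ⟨hp, hq, hr, hpyth, hgcd⟩ := hppt
  have hrR : (r : ℝ) ≠ 0 := Nat.cast_ne_zero.mpr hr.ne'
  have hrZ : (0 : ℤ) < (r : ℤ) := by exact_mod_cast hr
  -- q and r are coprime
  have hqr : Nat.Coprime q r := by
    have h2 : Nat.gcd q r ^ 2 ∣ p ^ 2 := by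
      have hr2 : Nat.gcd q r ^ 2 ∣ r ^ 2 := pow_dvd_pow_of_dvd (Nat.gcd_dvd_right q r) 2
      have h3 : Nat.gcd q r ^ 2 ∣ q ^ 2 := pow_dvd_pow_of_dvd (Nat.gcd_dvd_left q r) 2
      have : p ^ 2 = r ^ 2 - q ^ 2 := by omega
      rw [this]
      exact Nat.dvd_sub hr2 h3
    have h1 : Nat.gcd q r ∣ p := (Nat.pow_dvd_pow_iff (by norm_num)).mp h2
    have h4 : Nat.gcd q r ∣ Nat.gcd p q := Nat.dvd_gcd h1 (Nat.gcd_dvd_left q r)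
    rw [hgcd] at h4
    exact Nat.dvd_one.mp h4
  have hco : IsCoprime (r : ℤ) (q : ℤ) := by
    rw [Int.isCoprime_iff_gcd_eq_one]
    simpa [Int.gcd_natCast_natCast, Nat.gcd_comm] using hqr
  -- key divisibility from rotatability
  have key : ∀ P : ℤ × ℤ, RotatableBy P θ → (r : ℤ) ∣ (q * P.1 - p * P.2) := by
    rintro ⟨x, y⟩ ⟨Q, hQ1, -⟩
    refine ⟨Q.1, ?_⟩
    rw [hcos, hsin] at hQ1
    have hre : ((q * x - p * y : ℤ) : ℝ) = (((r : ℤ) * Q.1 : ℤ) : ℝ) := by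
      push_cast
      field_simp at hQ1
      linarith
    exact_mod_cast hre
  -- divisibility of the squared norm
  have key2 : ∀ x y : ℤ, (r : ℤ) ∣ (q * x - p * y) → (r : ℤ) ∣ (x ^ 2 + y ^ 2) := by
    rintro x y ⟨k, hk⟩
    have hpq : (p : ℤ) ^ 2 + (q : ℤ) ^ 2 = (r : ℤ) ^ 2 := by exact_mod_cast hpyth
    have h1 : (r : ℤ) ∣ (x ^ 2 + y ^ 2) * (q : ℤ) ^ 2 := by
      refine ⟨k * (q * x + p * y) + r * y ^ 2, ?_⟩
      linear_combination (↑q * x + ↑p * y) * hk + y ^ 2 * hpq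
    exact (hco.pow_right).dvd_of_dvd_mul_right h1
  refine ⟨?_, ?_, ?_⟩
  · -- case 2N² < r : no nonzero rotatable points
    intro hN
    convert Set.ncard_empty (ℤ × ℤ)
    ext ⟨x, y⟩
    simp only [Set.mem_setOf_eq, Set.mem_empty_iff_false, iff_false, not_and]
    rintro ⟨hx0, hxN, hy0, hyN⟩ hne hrot
    have hd := key2 _ _ (key _ hrot)
    have hne' : x ≠ 0 ∨ y ≠ 0 := by
      by_contra h
      push_neg at h
      exact hne (by simp [Prod.ext_iff, h.1, h.2])
    have hpos : 0 < x ^ 2 + y ^ 2 := by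
      rcases hne' with h | h
      · have : 0 < x ^ 2 := by positivity
        nlinarith [sq_nonneg y]
      · have : 0 < y ^ 2 := by positivity
        nlinarith [sq_nonneg x]
    have hle : (r : ℤ) ≤ x ^ 2 + y ^ 2 := Int.le_of_dvd hpos hd
    have hbig : (2 * (N : ℤ) ^ 2) < (r : ℤ) := by exact_mod_cast hN
    nlinarith
  · -- case N ≤ r ≤ 2N² : at most N points
    intro hNr _
    have hNrZ : (N : ℤ) ≤ (r : ℤ) := by exact_mod_cast hNr
    have hcard := Set.ncard_le_ncard_of_injOn (fun P : ℤ × ℤ => P.2)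
      (s := {P : ℤ × ℤ | inGrid N P ∧ RotatableBy P θ})
      (t := (Finset.Ico (0 : ℤ) (N : ℤ) : Set ℤ))
      (fun P hP => by
        obtain ⟨⟨_, _, hy0, hyN⟩, -⟩ := hP
        simp only [Finset.coe_Ico, Set.mem_Ico]
        exact ⟨hy0, hyN⟩)
      (by
        rintro ⟨x₁, y₁⟩ ⟨⟨hx0₁, hxN₁, _, _⟩, hrot₁⟩ ⟨x₂, y₂⟩ ⟨⟨hx0₂, hxN₂, _, _⟩, hrot₂⟩ hy
        simp only at hy
        subst hy
        have hd₁ := key _ hrot₁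
        have hd₂ := key _ hrot₂
        have hdx : (r : ℤ) ∣ (x₁ - x₂) * (q : ℤ) := by
          have : (x₁ - x₂) * (q : ℤ) = (q * x₁ - p * y₁) - (q * x₂ - p * y₁) := by ring
          rw [this]
          exact dvd_sub hd₁ hd₂
        have hdx' : (r : ℤ) ∣ x₁ - x₂ := hco.dvd_of_dvd_mul_right hdx
        have hx : x₁ - x₂ = 0 := by
          refine Int.eq_zero_of_abs_lt_dvd hdx' ?_
          rw [abs_lt]
          constructor <;> linarith
        simp [Prod.ext_iff]
        omega)
      (Finset.Ico (0 : ℤ) (N : ℤ)).finite_toSet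
    rw [Set.ncard_coe_finset, Int.card_Ico] at hcard
    simpa using hcard
  · -- case r < N
    intro hrN
    set M : ℕ := (N + r - 1) / r with hM
    have hMr : (N : ℤ) ≤ (r : ℤ) * (M : ℤ) := by
      have h1 := Nat.div_add_mod (N + r - 1) r
      rw [← hM] at h1
      have h2 : (N + r - 1) % r < r := Nat.mod_lt _ hr
      obtain ⟨a, ha⟩ : ∃ a, r * M = a := ⟨_, rfl⟩
      obtain ⟨m, hm⟩ : ∃ m, (N + r - 1) % r = m := ⟨_, rfl⟩
      rw [ha, hm] at h1
      rw [hm] at h2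
      have h3 : N ≤ a := by omega
      have : (N : ℤ) ≤ ((r * M : ℕ) : ℤ) := by exact_mod_cast ha ▸ h3
      exact_mod_cast this
    have hcard := Set.ncard_le_ncard_of_injOn
      (fun P : ℤ × ℤ => (P.2 % r, P.1 / r, P.2 / r))
      (s := {P : ℤ × ℤ | inGrid N P ∧ RotatableBy P θ})
      (t := ((Finset.Ico (0 : ℤ) (r : ℤ) ×ˢ
        (Finset.Ico (0 : ℤ) (M : ℤ) ×ˢ Finset.Ico (0 : ℤ) (M : ℤ))) : Finset (ℤ × ℤ × ℤ)))
      (fun P hP => by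
        obtain ⟨⟨hx0, hxN, hy0, hyN⟩, -⟩ := hP
        simp only [Finset.coe_product, Set.mem_prod, Finset.mem_coe, Finset.mem_Ico]
        refine ⟨⟨Int.emod_nonneg _ hrZ.ne', Int.emod_lt_of_pos _ hrZ⟩,
          ⟨Int.ediv_nonneg hx0 hrZ.le, ?_⟩, ⟨Int.ediv_nonneg hy0 hrZ.le, ?_⟩⟩
        · rw [Int.ediv_lt_iff_lt_mul hrZ]
          calc P.1 < (N : ℤ) := hxN
          _ ≤ (r : ℤ) * M := hMr
          _ = (M : ℤ) * r := by ring
        · rw [Int.ediv_lt_iff_lt_mul hrZ]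
          calc P.2 < (N : ℤ) := hyN
          _ ≤ (r : ℤ) * M := hMr
          _ = (M : ℤ) * r := by ring)
      (by
        rintro ⟨x₁, y₁⟩ ⟨⟨hx0₁, hxN₁, hy0₁, hyN₁⟩, hrot₁⟩
          ⟨x₂, y₂⟩ ⟨⟨hx0₂, hxN₂, hy0₂, hyN₂⟩, hrot₂⟩ heq
        simp only [Prod.mk.injEq] at heq
        obtain ⟨hym, hxd, hyd⟩ := heq
        have hy : y₁ = y₂ := by
          have e₁ := Int.mul_ediv_add_emod y₁ (r : ℤ)
          have e₂ := Int.mul_ediv_add_emod y₂ (r : ℤ)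
          rw [hyd, hym] at e₁
          linarith
        subst hy
        have hd₁ := key _ hrot₁
        have hd₂ := key _ hrot₂
        have hdx : (r : ℤ) ∣ (x₁ - x₂) * (q : ℤ) := by
          have : (x₁ - x₂) * (q : ℤ) = (q * x₁ - p * y₁) - (q * x₂ - p * y₁) := by ring
          rw [this]
          exact dvd_sub hd₁ hd₂
        have hdx' : (r : ℤ) ∣ x₁ - x₂ := hco.dvd_of_dvd_mul_right hdx
        have hxm : x₂ % (r : ℤ) = x₁ % (r : ℤ) := Int.modEq_iff_dvd.mpr hdx'
        have hx : x₁ = x₂ := by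
          have e₁ := Int.mul_ediv_add_emod x₁ (r : ℤ)
          have e₂ := Int.mul_ediv_add_emod x₂ (r : ℤ)
          rw [hxd, ← hxm] at e₁
          linarith
        simp [Prod.ext_iff, hx])
      (Finset.finite_toSet _)
    rw [Set.ncard_coe_finset] at hcard
    simp only [Finset.card_product, Int.card_Ico] at hcard
    calc {P : ℤ × ℤ | inGrid N P ∧ RotatableBy P θ}.ncard
        ≤ ((r : ℤ) - 0).toNat * (((M : ℤ) - 0).toNat * ((M : ℤ) - 0).toNat) := hcard
      _ = r * M ^ 2 := by simp only [sub_zero, Int.toNat_natCast]; ring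
end
end

section
/- Let M > 4 be a positive integer, let (p,q,r) be a primitive Pythagorean triple, and let θ be the angle with cos θ = q/r and sin θ = p/r. If r ≥ 2M⁴N and N ≥ M⁵, then the number of points of [N]×[N] rotatable by θ is at most N/M. -/
open Real

noncomputable section

lemma key_struct (p q r : ℤ) (hr : 0 < r)
    (hpyth : p ^ 2 + q ^ 2 = r ^ 2) (hcop : Int.gcd p q = 1) :
    ∃ c d : ℤ, c ^ 2 + d ^ 2 = r ∧
      ∀ x y a b : ℤ, a * r = q * x - p * y → b * r = p * x + q * y →
        ∃ u v : ℤ, x = d * u + c * v ∧ y = d * v - c * u := by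
  have hpt : PythagoreanTriple p q r := by unfold PythagoreanTriple; nlinarith [hpyth]
  obtain ⟨m, n, hcase, hz, hmn, hpar⟩ :=
    PythagoreanTriple.coprime_classification.mp ⟨hpt, hcop⟩
  have hrmn : r = m ^ 2 + n ^ 2 := by
    rcases hz with h | h
    · exact h
    · exfalso; nlinarith [sq_nonneg m, sq_nonneg n]
  -- r is odd
  have hrodd : Odd r := by
    rw [hrmn]
    rcases hpar with ⟨hm, hn⟩ | ⟨hm, hn⟩
    · have h1 : Even (m ^ 2) := by rw [sq]; exact (Int.even_iff.mpr hm).mul_right m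
      have h2 : Odd n := Int.odd_iff.mpr hn
      exact h1.add_odd h2.pow
    · have h1 : Odd m := Int.odd_iff.mpr hm
      have h2 : Even (n ^ 2) := by rw [sq]; exact (Int.even_iff.mpr hn).mul_right n
      exact h1.pow.add_even h2
  have hcop2r : IsCoprime (2 : ℤ) r := by
    rw [Int.isCoprime_iff_gcd_eq_one]
    have : Nat.Coprime 2 r.natAbs := hrodd.natAbs.coprime_two_left
    simpa [Int.gcd] using this
  have hcopmr : IsCoprime m r := by
    have h1 : IsCoprime m n := Int.isCoprime_iff_gcd_eq_one.mpr hmn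
    have h2 : IsCoprime m (n ^ 2) := h1.pow_right
    have h3 : IsCoprime m (n ^ 2 + m * m) := h2.add_mul_left_right m
    rwa [hrmn, show m ^ 2 + n ^ 2 = n ^ 2 + m * m by ring]
  have hcop2mr : IsCoprime (2 * m) r := hcop2r.mul_left hcopmr
  rcases hcase with ⟨hpm, hqm⟩ | ⟨hpm, hqm⟩
  · -- p = m² - n², q = 2mn ; c = m, d = n
    refine ⟨m, n, hrmn.symm, fun x y a b ha hb => ?_⟩
    rw [hpm] at hb; rw [hqm] at ha
    rw [hpm] at ha; rw [hqm] at hb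
    have h1 : 2 * m * (n * x - m * y) = r * (a - y) := by
      rw [hrmn] at ha ⊢; linear_combination -ha
    have h2 : 2 * m * (m * x + n * y) = r * (b + x) := by
      rw [hrmn] at hb ⊢; linear_combination -hb
    have d1 : r ∣ n * x - m * y :=
      hcop2mr.symm.dvd_of_dvd_mul_left ⟨a - y, h1⟩
    have d2 : r ∣ m * x + n * y :=
      hcop2mr.symm.dvd_of_dvd_mul_left ⟨b + x, h2⟩
    obtain ⟨u, hu⟩ := d1
    obtain ⟨v, hv⟩ := d2
    refine ⟨u, v, ?_, ?_⟩
    · have : r * x = r * (n * u + m * v) := by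
        linear_combination n * hu + m * hv + x * hrmn
      exact mul_left_cancel₀ (ne_of_gt hr) this
    · have : r * y = r * (n * v - m * u) := by
        linear_combination n * hv - m * hu + y * hrmn
      exact mul_left_cancel₀ (ne_of_gt hr) this
  · -- p = 2mn, q = m² - n² ; c = n, d = m
    refine ⟨n, m, by rw [hrmn]; ring, fun x y a b ha hb => ?_⟩
    rw [hpm] at hb; rw [hqm] at ha
    rw [hpm] at ha; rw [hqm] at hb
    have h1 : 2 * m * (m * x - n * y) = r * (a + x) := by
      rw [hrmn] at ha ⊢; linear_combination -ha
    have h2 : 2 * m * (n * x + m * y) = r * (b + y) := by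
      rw [hrmn] at hb ⊢; linear_combination -hb
    have d1 : r ∣ m * x - n * y :=
      hcop2mr.symm.dvd_of_dvd_mul_left ⟨a + x, h1⟩
    have d2 : r ∣ n * x + m * y :=
      hcop2mr.symm.dvd_of_dvd_mul_left ⟨b + y, h2⟩
    obtain ⟨u, hu⟩ := d1
    obtain ⟨v, hv⟩ := d2
    refine ⟨u, v, ?_, ?_⟩
    · have : r * x = r * (m * u + n * v) := by
        linear_combination m * hu + n * hv + x * hrmn
      exact mul_left_cancel₀ (ne_of_gt hr) this
    · have : r * y = r * (m * v - n * u) := by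
        linear_combination m * hv - n * hu + y * hrmn
      exact mul_left_cancel₀ (ne_of_gt hr) this

set_option maxHeartbeats 1000000 in
/-- Let `M > 4`, let `(p, q, r)` be a primitive Pythagorean triple with associated
angle `θ`. If `r ≥ 2M⁴N` and `N ≥ M⁵`, then the number of points of `[N] × [N]`
rotatable by `θ` is at most `N / M`. -/
theorem rotatable_points_count_refined (M : ℕ) (hM : 4 < M)
    (p q r : ℕ) (hppt : IsPPT p q r) (θ : ℝ)
    (hcos : Real.cos θ = q / r) (hsin : Real.sin θ = p / r) (N : ℕ)
    (hr : 2 * M ^ 4 * N ≤ r) (hN : M ^ 5 ≤ N) :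
    ({P : ℤ × ℤ | inGrid N P ∧ RotatableBy P θ}.ncard : ℝ) ≤ N / M := by
  obtain ⟨hp, hq, hr0, hpyth, hcop⟩ := hppt
  have hM0 : 0 < M := by omega
  have hN0 : 0 < N := lt_of_lt_of_le (pow_pos hM0 5) hN
  have hrZ : (0 : ℤ) < r := by exact_mod_cast hr0
  have hrR : (r : ℝ) ≠ 0 := by positivity
  obtain ⟨c, d, hcd, hkey⟩ := key_struct p q r hrZ (by exact_mod_cast hpyth)
    (by rw [Int.gcd_natCast_natCast]; exact hcop)
  set B : ℕ := Nat.sqrt (N / M ^ 4) with hB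
  set T : Finset (ℤ × ℤ) :=
    (Finset.Icc (-(B : ℤ)) B ×ˢ Finset.Icc (-(B : ℤ)) B).image
      (fun uv => (d * uv.1 + c * uv.2, d * uv.2 - c * uv.1)) with hT
  have hsub : {P : ℤ × ℤ | inGrid N P ∧ RotatableBy P θ} ⊆ ↑T := by
    rintro ⟨x, y⟩ ⟨⟨hx0, hxN, hy0, hyN⟩, ⟨Q, hQ1, hQ2⟩⟩
    have ha : Q.1 * r = q * x - p * y := by
      have hR : (Q.1 : ℝ) * r = q * x - p * y := by
        rw [hQ1, hcos, hsin]; field_simp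
      exact_mod_cast hR
    have hb : Q.2 * r = p * x + q * y := by
      have hR : (Q.2 : ℝ) * r = p * x + q * y := by
        rw [hQ2, hcos, hsin]; field_simp
      exact_mod_cast hR
    obtain ⟨u, v, hxe, hye⟩ := hkey x y Q.1 Q.2 ha hb
    have hnorm : (r : ℤ) * (u ^ 2 + v ^ 2) = x ^ 2 + y ^ 2 := by
      rw [hxe, hye, ← hcd]; ring
    have hxyN : x ^ 2 + y ^ 2 < 2 * (N : ℤ) ^ 2 := by nlinarith
    have hrb : (2 * (M : ℤ) ^ 4 * N) ≤ r := by exact_mod_cast hr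
    have hbound : ∀ w : ℤ, w ^ 2 ≤ u ^ 2 + v ^ 2 → w.natAbs ≤ B := by
      intro w hw
      have h1 : w ^ 2 * (2 * (M : ℤ) ^ 4 * N) < 2 * (N : ℤ) ^ 2 := by
        nlinarith [sq_nonneg u, sq_nonneg v, sq_nonneg w]
      have h2 : w ^ 2 * (M : ℤ) ^ 4 < (N : ℤ) := by
        have hNZ : (0 : ℤ) < N := by exact_mod_cast hN0
        nlinarith
      have h3 : w.natAbs ^ 2 * M ^ 4 ≤ N := by
        have h4 : ((w.natAbs : ℤ)) ^ 2 * (M : ℤ) ^ 4 < (N : ℤ) := by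
          have he : ((w.natAbs : ℤ)) ^ 2 = w ^ 2 := by
            rw [sq, sq, Int.natAbs_mul_self']
          rw [he]; exact h2
        have h5 : w.natAbs ^ 2 * M ^ 4 < N := by exact_mod_cast h4
        exact h5.le
      rw [hB, Nat.le_sqrt]
      calc w.natAbs * w.natAbs = w.natAbs ^ 2 := by ring
        _ ≤ N / M ^ 4 := Nat.le_div_iff_mul_le (by positivity) |>.mpr h3
    have hu : u.natAbs ≤ B := hbound u (by nlinarith [sq_nonneg v])
    have hv : v.natAbs ≤ B := hbound v (by nlinarith [sq_nonneg u])
    rw [hT]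
    simp only [Finset.coe_image, Set.mem_image, Finset.mem_coe, Finset.mem_product,
      Finset.mem_Icc]
    refine ⟨(u, v), ?_, by simp [hxe, hye]⟩
    simp only [Finset.mem_product, Finset.mem_Icc]
    constructor <;> constructor <;> omega
  have hfin : ({P : ℤ × ℤ | inGrid N P ∧ RotatableBy P θ}).ncard ≤ T.card := by
    rw [← Set.ncard_coe_finset T]
    exact Set.ncard_le_ncard hsub T.finite_toSet
  have hcard : T.card ≤ (2 * B + 1) ^ 2 := by
    calc T.card ≤ ((Finset.Icc (-(B : ℤ)) B ×ˢ Finset.Icc (-(B : ℤ)) B)).card :=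
        Finset.card_image_le
      _ = (2 * B + 1) ^ 2 := by
        rw [Finset.card_product, Int.card_Icc]
        have hh : ((B : ℤ) + 1 - -(B : ℤ)).toNat = 2 * B + 1 := by omega
        rw [hh]; ring
  -- numeric bound
  have hBsq : ((B : ℝ)) ^ 2 * (M : ℝ) ^ 4 ≤ N := by
    have h1 : B ^ 2 * M ^ 4 ≤ N := by
      have h2 : B ^ 2 ≤ N / M ^ 4 := by rw [hB]; exact Nat.sqrt_le' (N / M ^ 4)
      calc B ^ 2 * M ^ 4 ≤ (N / M ^ 4) * M ^ 4 := Nat.mul_le_mul_right _ h2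
        _ ≤ N := Nat.div_mul_le_self N (M ^ 4)
    exact_mod_cast h1
  have hMR : (5 : ℝ) ≤ M := by exact_mod_cast hM
  have hNR : ((M : ℝ)) ^ 5 ≤ N := by exact_mod_cast hN
  have hfinal : (((2 * B + 1) ^ 2 : ℕ) : ℝ) * M ≤ N := by
    push_cast
    have hb0 : (0 : ℝ) ≤ B := by positivity
    have hbb : (B : ℝ) ≤ (B : ℝ) ^ 2 + 1 := by nlinarith [sq_nonneg ((B:ℝ) - 1)]
    have hM0R : (0 : ℝ) ≤ (M : ℝ) := by positivity
    have hM3 : (125 : ℝ) ≤ (M : ℝ) ^ 3 := by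
      nlinarith [mul_nonneg (sub_nonneg.mpr hMR) (sq_nonneg ((M:ℝ) - 5)),
        mul_nonneg hM0R (sub_nonneg.mpr hMR)]
    have hM4 : (625 : ℝ) ≤ (M : ℝ) ^ 4 := by
      nlinarith [mul_nonneg (sub_nonneg.mpr hM3) (sub_nonneg.mpr hMR)]
    have k1 : 125 * ((B : ℝ) ^ 2 * M) ≤ (N : ℝ) := by
      nlinarith [mul_nonneg (sub_nonneg.mpr hM3)
        (by positivity : (0:ℝ) ≤ (B : ℝ) ^ 2 * M), hBsq]
    have k2 : 125 * (M : ℝ) ≤ N := by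
      nlinarith [mul_nonneg (sub_nonneg.mpr hM4) hM0R, hNR]
    have k3 : 4 * (B : ℝ) * M ≤ 4 * (B : ℝ) ^ 2 * M + 4 * M := by
      nlinarith [mul_nonneg (sub_nonneg.mpr hbb) (by positivity : (0:ℝ) ≤ (M:ℝ))]
    nlinarith [k1, k2, k3]
  have hMpos : (0 : ℝ) < M := by exact_mod_cast hM0
  rw [le_div_iff₀ hMpos]
  calc (({P : ℤ × ℤ | inGrid N P ∧ RotatableBy P θ}.ncard : ℝ)) * M
      ≤ (((2 * B + 1) ^ 2 : ℕ) : ℝ) * M := by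
        have : ({P : ℤ × ℤ | inGrid N P ∧ RotatableBy P θ}.ncard : ℝ)
            ≤ (((2 * B + 1) ^ 2 : ℕ) : ℝ) := by exact_mod_cast le_trans hfin hcard
        exact mul_le_mul_of_nonneg_right this (le_of_lt hMpos)
    _ ≤ N := hfinal
end
end

section
/- For every positive integer r, the number of primitive Pythagorean triples (p,q,r) with hypotenuse r (counting (p,q,r) and (q,p,r) separately) is at most 2√r. -/
open Real

noncomputable section

lemma ppt_key {p q r : ℕ} (h : IsPPT p q r) (hp : Odd p) :
    ∃ m : ℕ, 0 < m ∧ m ^ 2 < r ∧ 2 * m ^ 2 = r + p := by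
  obtain ⟨hp0, hq0, hr0, heq, hgcd⟩ := h
  have hpt : PythagoreanTriple (p : ℤ) q r := by
    have : (p : ℤ) ^ 2 + q ^ 2 = r ^ 2 := by exact_mod_cast heq
    unfold PythagoreanTriple
    nlinarith [this]
  have hco : Int.gcd (p : ℤ) q = 1 := by
    rwa [Int.gcd_natCast_natCast]
  have hpar : (p : ℤ) % 2 = 1 := by
    obtain ⟨k, hk⟩ := hp
    omega
  have hpos : (0 : ℤ) < r := by exact_mod_cast hr0
  obtain ⟨m, n, hx, hy, hz, -, -, hm0⟩ :=
    hpt.coprime_classification' hco hpar hpos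
  have hn0 : n ≠ 0 := by
    rintro rfl
    simp at hy
    omega
  have hmpos : 0 < m := by
    rcases lt_or_eq_of_le hm0 with h' | h'
    · exact h'
    · exfalso
      have : (p : ℤ) = -n ^ 2 := by rw [hx, ← h']; ring
      have hn2 : (0:ℤ) < n ^ 2 := by positivity
      have : (0:ℤ) < p := by exact_mod_cast hp0
      omega
  refine ⟨m.natAbs, ?_, ?_, ?_⟩
  · omega
  · have hc : (m.natAbs : ℤ) = m := Int.natAbs_of_nonneg hm0
    have hn2 : (1:ℤ) ≤ n ^ 2 := by
      have := sq_nonneg n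
      rcases lt_or_gt_of_ne hn0 with h' | h' <;> nlinarith
    have : ((m.natAbs : ℕ) : ℤ) ^ 2 < (r : ℤ) := by
      rw [hc, hz]; nlinarith
    exact_mod_cast this
  · have hc : (m.natAbs : ℤ) = m := Int.natAbs_of_nonneg hm0
    have : (2 : ℤ) * (m.natAbs : ℤ) ^ 2 = (r : ℤ) + p := by
      rw [hc, hz, hx]; ring
    exact_mod_cast this

/-- The number of primitive Pythagorean triples with hypotenuse `r`, counting
`(p, q, r)` and `(q, p, r)` separately, is at most `2√r`. -/
theorem count_ppt_with_hypotenuse (r : ℕ) (hr : 0 < r) :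
    ({pq : ℕ × ℕ | IsPPT pq.1 pq.2 r}.ncard : ℝ) ≤ 2 * Real.sqrt r := by
  set S : Set (ℕ × ℕ) := {pq : ℕ × ℕ | IsPPT pq.1 pq.2 r} with hS
  set t : ℕ := Nat.sqrt (r - 1) with ht
  set f : ℕ × ℕ → ℕ := fun pq =>
    if Odd pq.1 then 2 * Nat.sqrt ((r + pq.1) / 2)
    else 2 * Nat.sqrt ((r + pq.2) / 2) + 1 with hf
  -- For each element of S we get the good m
  have key : ∀ pq ∈ S, ∃ m : ℕ, 0 < m ∧ m ^ 2 < r ∧ 2 * m ^ 2 = r + (if Odd pq.1 then pq.1 else pq.2) ∧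
      f pq = (if Odd pq.1 then 2 * m else 2 * m + 1) := by
    rintro ⟨p, q⟩ hpq
    simp only [hS, Set.mem_setOf_eq] at hpq
    by_cases hp : Odd p
    · obtain ⟨m, hm0, hm1, hm2⟩ := ppt_key hpq hp
      refine ⟨m, hm0, hm1, ?_, ?_⟩
      · simp [hp, hm2]
      · have : (r + p) / 2 = m ^ 2 := by omega
        simp [hf, hp, this, Nat.sqrt_eq']
    · -- q is odd
      have hq : Odd q := by
        obtain ⟨h1, h2, h3, h4, h5⟩ := hpq
        rcases Nat.even_or_odd q with he | ho
        · exfalso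
          have hpe : Even p := Nat.not_odd_iff_even.mp hp
          have : 2 ∣ Nat.gcd p q :=
            Nat.dvd_gcd hpe.two_dvd he.two_dvd
          omega
        · exact ho
      have hpq' : IsPPT q p r := by
        obtain ⟨h1, h2, h3, h4, h5⟩ := hpq
        exact ⟨h2, h1, h3, by linarith, by rwa [Nat.gcd_comm]⟩
      obtain ⟨m, hm0, hm1, hm2⟩ := ppt_key hpq' hq
      refine ⟨m, hm0, hm1, ?_, ?_⟩
      · simp [hp, hm2]
      · have : (r + q) / 2 = m ^ 2 := by omega
        simp [hf, hp, this, Nat.sqrt_eq']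
  -- injectivity
  have hinj : Set.InjOn f S := by
    rintro ⟨p1, q1⟩ h1 ⟨p2, q2⟩ h2 hfeq
    obtain ⟨m1, hm10, hm11, hm12, hm13⟩ := key _ h1
    obtain ⟨m2, hm20, hm21, hm22, hm23⟩ := key _ h2
    simp only [hS, Set.mem_setOf_eq] at h1 h2
    obtain ⟨hp1, hq1, -, he1, -⟩ := h1
    obtain ⟨hp2, hq2, -, he2, -⟩ := h2
    rw [hm13, hm23] at hfeq
    by_cases hodd1 : Odd p1 <;> by_cases hodd2 : Odd p2 <;>
      simp only [hodd1, hodd2, if_true, if_false, if_pos, if_neg] at hfeq hm12 hm22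
    · -- both odd: p1 = p2
      have hm : m1 = m2 := by omega
      have hmsq : m1 ^ 2 = m2 ^ 2 := by rw [hm]
      have hp : p1 = p2 := by omega
      have hq : q1 = q2 := by
        have h2 : q1 ^ 2 = q2 ^ 2 := by subst hp; omega
        exact Nat.pow_left_injective (by norm_num) h2
      simp [hp, hq]
    · omega
    · omega
    · have hm : m1 = m2 := by omega
      have hmsq : m1 ^ 2 = m2 ^ 2 := by rw [hm]
      have hq : q1 = q2 := by omega
      have hp : p1 = p2 := by
        have h2 : p1 ^ 2 = p2 ^ 2 := by subst hq; omega
        exact Nat.pow_left_injective (by norm_num) h2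
      simp [hp, hq]
  -- image lands in Icc 2 (2t+1)
  have himg : f '' S ⊆ ↑(Finset.Icc 2 (2 * t + 1)) := by
    rintro x ⟨pq, hpq, rfl⟩
    obtain ⟨m, hm0, hm1, -, hm3⟩ := key _ hpq
    have hmt : m ≤ t := by
      rw [ht]
      refine Nat.le_sqrt.mpr ?_
      rw [← pow_two]
      omega
    simp only [Finset.coe_Icc, Set.mem_Icc]
    split_ifs at hm3 <;> omega
  have hfin : (f '' S).Finite := Set.Finite.subset (Finset.Icc 2 (2 * t + 1)).finite_toSet himg
  have hcard : S.ncard ≤ 2 * t := by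
    have h1 : S.ncard = (f '' S).ncard := (Set.ncard_image_of_injOn hinj).symm
    have h2 : (f '' S).ncard ≤ (Finset.Icc 2 (2 * t + 1) : Finset ℕ).card := by
      rw [← Set.ncard_coe_finset]
      exact Set.ncard_le_ncard himg (Finset.Icc 2 (2 * t + 1)).finite_toSet
    rw [Nat.card_Icc] at h2
    omega
  have htr : (t : ℝ) ≤ Real.sqrt r := by
    rw [Real.le_sqrt (by positivity) (by positivity)]
    have h2 : t ^ 2 ≤ r := le_trans (Nat.sqrt_le' (r - 1)) (by omega)
    exact_mod_cast h2
  calc (S.ncard : ℝ) ≤ (2 * t : ℕ) := by exact_mod_cast hcard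
    _ = 2 * (t : ℝ) := by push_cast; ring
    _ ≤ 2 * Real.sqrt r := by linarith

end
end

section
/- Let 𝒫 denote the set of all primitive Pythagorean triples, counting (p,q,r) and (q,p,r) separately. Then the sum over all (p,q,r) ∈ 𝒫 of 1/(2r²) converges and is less than 0.0633. -/
open Real

noncomputable section

/-- The set of primitive Pythagorean triples, where `(p, q, r)` and `(q, p, r)`
are counted separately. -/
def PPT : Set (ℕ × ℕ × ℕ) := {t | IsPPT t.1 t.2.1 t.2.2}

/-! ### Auxiliary definitions -/

/-- The real weight attached to a parameter pair. -/
noncomputable def hfun (p : ℕ × ℕ) : ℝ :=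
  if 0 < p.1 ∧ 0 < p.2 ∧ (p.1 + p.2) % 2 = 1 then (2*((p.1:ℝ)^2+(p.2:ℝ)^2)^2)⁻¹ else 0

/-- A majorant used for the tail. -/
noncomputable def gfun (a b : ℕ) : ℝ :=
  if 1 ≤ b then (2*((a:ℝ)^2+(b:ℝ)^2)^2)⁻¹ else 0

/-- Outer tail majorant. -/
noncomputable def Sout (a : ℕ) : ℝ := if 13 ≤ a then (7/10) / (a:ℝ)^3 else 0

/-- Specification of the parameter pair attached to a primitive Pythagorean triple. -/
def PairSpec (t : ℕ × ℕ × ℕ) (ab : ℕ × ℕ) : Prop :=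
  (0 < ab.1 ∧ 0 < ab.2 ∧ (ab.1 + ab.2) % 2 = 1) ∧ t.2.2 = ab.1^2 + ab.2^2 ∧
    ((ab.2 < ab.1 ∧ t.1 = ab.1^2 - ab.2^2 ∧ t.2.1 = 2*ab.1*ab.2) ∨
     (ab.1 < ab.2 ∧ t.2.1 = ab.2^2 - ab.1^2 ∧ t.1 = 2*ab.2*ab.1))

lemma hfun_nonneg (p : ℕ × ℕ) : 0 ≤ hfun p := by
  unfold hfun; split <;> positivity

lemma gfun_nonneg (a b : ℕ) : 0 ≤ gfun a b := by
  unfold gfun; split <;> positivity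

lemma Sout_nonneg (a : ℕ) : 0 ≤ Sout a := by
  unfold Sout; split <;> positivity

/-! ### Classification of primitive Pythagorean triples -/

lemma odd_sq_odd (p q r : ℕ) (hp : p % 2 = 1) (hq : q % 2 = 1)
    (h : p ^ 2 + q ^ 2 = r ^ 2) : False := by
  obtain ⟨a, ha⟩ : ∃ a, p = 2*a+1 := ⟨p/2, by omega⟩
  obtain ⟨b, hb⟩ : ∃ b, q = 2*b+1 := ⟨q/2, by omega⟩
  rcases Nat.even_or_odd r with ⟨c, hc⟩ | ⟨c, hc⟩ <;> subst ha hb hc <;>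
    [ (have h' : 4*(a^2+a+b^2+b) + 2 = 4*(c^2) := by ring_nf at h ⊢; omega);
      (have h' : 4*(a^2+a+b^2+b) + 2 = 4*(c^2+c) + 1 := by ring_nf at h ⊢; omega)] <;>
    omega

/-- classification producing an ordered pair, in the case `p` odd. -/
lemma ppt_pair {p q r : ℕ} (h : IsPPT p q r) (hp : p % 2 = 1) :
    ∃ a b : ℕ, 0 < b ∧ b < a ∧ (a + b) % 2 = 1 ∧ r = a^2 + b^2 ∧
      p = a^2 - b^2 ∧ q = 2*a*b := by
  obtain ⟨hp0, hq0, hr0, heq, hg⟩ := h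
  have hpt : PythagoreanTriple (p : ℤ) q r := by
    have : (p:ℤ)^2 + (q:ℤ)^2 = (r:ℤ)^2 := by exact_mod_cast heq
    unfold PythagoreanTriple; ring_nf; ring_nf at this; linarith
  have hco : Int.gcd (p:ℤ) (q:ℤ) = 1 := by
    rwa [Int.gcd_natCast_natCast]
  have hpar : (p:ℤ) % 2 = 1 := by omega
  have hrpos : (0:ℤ) < r := by exact_mod_cast hr0
  obtain ⟨m, n, hx, hy, hz, hmn, hparmn, hm0⟩ :=
    hpt.coprime_classification' hco hpar hrpos
  have hq0' : (0:ℤ) < 2*m*n := by rw [← hy]; exact_mod_cast hq0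
  have hmpos : 0 < m := by nlinarith
  have hnpos : 0 < n := by nlinarith
  have hp0' : (0:ℤ) < m^2 - n^2 := by rw [← hx]; exact_mod_cast hp0
  refine ⟨m.toNat, n.toNat, ?_, ?_, ?_, ?_, ?_, ?_⟩
  · omega
  · nlinarith [Int.toNat_of_nonneg hmpos.le, Int.toNat_of_nonneg hnpos.le]
  · have hm' : (m.toNat : ℤ) = m := Int.toNat_of_nonneg hmpos.le
    have hn' : (n.toNat : ℤ) = n := Int.toNat_of_nonneg hnpos.le
    omega
  · have : (r:ℤ) = (m.toNat:ℤ)^2 + (n.toNat:ℤ)^2 := by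
      rw [Int.toNat_of_nonneg hmpos.le, Int.toNat_of_nonneg hnpos.le]; exact hz
    exact_mod_cast this
  · have h2 : (p:ℤ) = ((m.toNat^2 : ℕ):ℤ) - ((n.toNat^2 : ℕ):ℤ) := by
      push_cast
      rw [Int.toNat_of_nonneg hmpos.le, Int.toNat_of_nonneg hnpos.le]; exact hx
    omega
  · have : (q:ℤ) = 2*(m.toNat:ℤ)*(n.toNat:ℤ) := by
      rw [Int.toNat_of_nonneg hmpos.le, Int.toNat_of_nonneg hnpos.le]; exact hy
    exact_mod_cast this

lemma exists_pair {t : ℕ × ℕ × ℕ} (ht : t ∈ PPT) : ∃ ab : ℕ × ℕ, PairSpec t ab := by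
  obtain ⟨p, q, r⟩ := t
  have h : IsPPT p q r := ht
  have hodd : p % 2 = 1 ∨ q % 2 = 1 := by
    by_contra hc
    push_neg at hc
    have h2p : 2 ∣ p := by omega
    have h2q : 2 ∣ q := by omega
    have := Nat.dvd_gcd h2p h2q
    rw [h.2.2.2.2] at this
    omega
  rcases hodd with hp | hq
  · obtain ⟨a, b, hb0, hba, hpar, hr, hpe, hqe⟩ := ppt_pair h hp
    exact ⟨(a, b), ⟨⟨by omega, hb0, hpar⟩, hr, Or.inl ⟨hba, hpe, hqe⟩⟩⟩
  · have h' : IsPPT q p r :=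
      ⟨h.2.1, h.1, h.2.2.1, by rw [Nat.add_comm] at *; exact h.2.2.2.1,
        by rw [Nat.gcd_comm]; exact h.2.2.2.2⟩
    obtain ⟨a, b, hb0, hba, hpar, hr, hqe, hpe⟩ := ppt_pair h' hq
    exact ⟨(b, a), ⟨⟨hb0, by omega, by omega⟩, by rw [hr]; ring,
      Or.inr ⟨hba, hqe, hpe⟩⟩⟩

lemma pairSpec_injective {t₁ t₂ : ℕ × ℕ × ℕ} {ab : ℕ × ℕ}
    (h₁ : PairSpec t₁ ab) (h₂ : PairSpec t₂ ab) : t₁ = t₂ := by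
  obtain ⟨p₁, q₁, r₁⟩ := t₁
  obtain ⟨p₂, q₂, r₂⟩ := t₂
  obtain ⟨a, b⟩ := ab
  obtain ⟨-, hr₁, hc₁⟩ := h₁
  obtain ⟨-, hr₂, hc₂⟩ := h₂
  simp only [Prod.mk.injEq]
  rcases hc₁ with ⟨h1, h2, h3⟩ | ⟨h1, h2, h3⟩ <;>
    rcases hc₂ with ⟨k1, k2, k3⟩ | ⟨k1, k2, k3⟩ <;> simp_all <;> omega

lemma pairSpec_hfun {t : ℕ × ℕ × ℕ} {ab : ℕ × ℕ} (h : PairSpec t ab) :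
    1 / (2 * (t.2.2 : ℝ) ^ 2) = hfun ab := by
  obtain ⟨⟨ha, hb, hpar⟩, hr, -⟩ := h
  unfold hfun
  rw [if_pos ⟨ha, hb, hpar⟩, one_div, hr]
  push_cast
  ring_nf

/-! ### Finite telescoping -/

lemma tel (w : ℕ → ℝ) {m n : ℕ} (h : m ≤ n) :
    ∑ b ∈ Finset.Ico m n, (w b - w (b+1)) = w m - w n := by
  induction n, h using Nat.le_induction with
  | base => simp
  | succ n hmn ih =>
      rw [Finset.sum_Ico_succ_top hmn, ih]; ring

/-! ### Inner tail bound -/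

lemma inner_sum_le (a : ℕ) (ha : 13 ≤ a) (n : ℕ) :
    ∑ b ∈ Finset.range n, gfun a b ≤ (7/10) / (a:ℝ)^3 := by
  have hap : (0:ℝ) < (a:ℝ) := by positivity
  have hle : ∑ b ∈ Finset.range n, gfun a b ≤ ∑ b ∈ Finset.range (max n (a+1)), gfun a b := by
    apply Finset.sum_le_sum_of_subset_of_nonneg
    · exact Finset.range_subset_range.mpr (le_max_left _ _)
    · intro i _ _; exact gfun_nonneg a i
  refine hle.trans ?_
  set N := max n (a+1) with hN
  have haN : a + 1 ≤ N := le_max_right _ _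
  rw [Finset.range_eq_Ico, ← Finset.sum_Ico_consecutive _ (Nat.zero_le (a+1)) haN]
  have part1 : ∑ b ∈ Finset.Ico 0 (a+1), gfun a b ≤ ((a:ℝ)+1) * (2*(a:ℝ)^4)⁻¹ := by
    have : ∀ b ∈ Finset.Ico 0 (a+1), gfun a b ≤ (2*(a:ℝ)^4)⁻¹ := by
      intro b _
      unfold gfun
      split
      · apply inv_anti₀
        · positivity
        · nlinarith [sq_nonneg ((b:ℝ))]
      · positivity
    calc ∑ b ∈ Finset.Ico 0 (a+1), gfun a b ≤ ∑ _b ∈ Finset.Ico 0 (a+1), (2*(a:ℝ)^4)⁻¹ :=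
          Finset.sum_le_sum this
      _ = ((a:ℝ)+1) * (2*(a:ℝ)^4)⁻¹ := by
          rw [Finset.sum_const, Nat.card_Ico]; push_cast; ring
  have part2 : ∑ b ∈ Finset.Ico (a+1) N, gfun a b ≤ (1/(8*(a:ℝ)^3)) := by
    set w : ℕ → ℝ := fun b => ((a:ℝ)^2+(b:ℝ)^2-(b:ℝ))⁻¹ with hw
    have hwpos : ∀ b : ℕ, 1 ≤ b → 0 < (a:ℝ)^2+(b:ℝ)^2-(b:ℝ) := by
      intro b hb
      have : (1:ℝ) ≤ (b:ℝ) := by exact_mod_cast hb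
      nlinarith
    have hterm : ∀ b ∈ Finset.Ico (a+1) N, gfun a b ≤ (4*((a:ℝ)+1))⁻¹ * (w b - w (b+1)) := by
      intro b hb
      simp only [Finset.mem_Ico] at hb
      have hb1 : a + 1 ≤ b := hb.1
      have hbr : ((a:ℝ)+1) ≤ (b:ℝ) := by exact_mod_cast hb1
      have hb1' : (1:ℝ) ≤ (b:ℝ) := by linarith [hap]
      have hub : 0 < (a:ℝ)^2+(b:ℝ)^2-(b:ℝ) := hwpos b (by omega)
      have hub' : 0 < (a:ℝ)^2+((b:ℝ)+1)^2-((b:ℝ)+1) := by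
        have := hwpos (b+1) (by omega); push_cast at this ⊢; linarith
      have hdiff : w b - w (b+1) = 2*(b:ℝ) * (((a:ℝ)^2+(b:ℝ)^2-(b:ℝ)) * ((a:ℝ)^2+((b:ℝ)+1)^2-((b:ℝ)+1)))⁻¹ := by
        rw [hw]
        push_cast
        field_simp
        ring
      rw [hdiff]
      unfold gfun
      rw [if_pos (by omega)]
      rw [← mul_assoc]
      have hc : (4*((a:ℝ)+1))⁻¹ * (2*(b:ℝ)) = (b:ℝ)/(2*((a:ℝ)+1)) := by
        field_simp; ring
      rw [inv_eq_one_div, hc, div_mul_eq_mul_div, ← div_eq_mul_inv, div_div,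
        div_le_div_iff₀ (by positivity) (mul_pos (mul_pos hub hub') (by positivity : (0:ℝ) < 2*((a:ℝ)+1)))]
      have expand : ((a:ℝ)^2+(b:ℝ)^2-(b:ℝ)) * ((a:ℝ)^2+((b:ℝ)+1)^2-((b:ℝ)+1))
          = ((a:ℝ)^2+(b:ℝ)^2)^2 - (b:ℝ)^2 := by ring
      nlinarith [sq_nonneg ((a:ℝ)^2+(b:ℝ)^2), hbr, hb1',
        mul_nonneg (sub_nonneg.mpr hbr) (sq_nonneg ((a:ℝ)^2+(b:ℝ)^2)),
        mul_nonneg (by linarith [hap] : (0:ℝ) ≤ (a:ℝ)+1) (sq_nonneg (b:ℝ))]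
    calc ∑ b ∈ Finset.Ico (a+1) N, gfun a b
        ≤ ∑ b ∈ Finset.Ico (a+1) N, (4*((a:ℝ)+1))⁻¹ * (w b - w (b+1)) :=
          Finset.sum_le_sum hterm
      _ = (4*((a:ℝ)+1))⁻¹ * (w (a+1) - w N) := by rw [← Finset.mul_sum, tel w haN]
      _ ≤ (4*((a:ℝ)+1))⁻¹ * w (a+1) := by
          have hwN : 0 ≤ w N := (inv_pos.mpr (hwpos N (by omega))).le
          have : (0:ℝ) < 4*((a:ℝ)+1) := by positivity
          nlinarith [inv_pos.mpr this]
      _ ≤ 1/(8*(a:ℝ)^3) := by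
          have hw1 : w (a+1) = ((a:ℝ)^2 + ((a:ℝ)+1)^2 - ((a:ℝ)+1))⁻¹ := by rw [hw]; push_cast; ring_nf
          rw [hw1]
          rw [div_eq_mul_inv, one_mul, ← mul_inv]
          apply inv_anti₀
          · positivity
          · nlinarith
  have h13 : (13:ℝ) ≤ (a:ℝ) := by exact_mod_cast ha
  have e1 : ((a:ℝ)+1) * (2*(a:ℝ)^4)⁻¹ = ((a:ℝ)+1)/(2*(a:ℝ)^4) := by ring
  have hA : ((a:ℝ)+1)/(2*(a:ℝ)^4) ≤ (23/40)/(a:ℝ)^3 := by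
    rw [div_le_div_iff₀ (by positivity) (by positivity)]
    nlinarith [pow_pos hap 3]
  have hB : 1/(8*(a:ℝ)^3) = (1/8)/(a:ℝ)^3 := by ring
  have hC : (23/40)/(a:ℝ)^3 + (1/8)/(a:ℝ)^3 = (7/10)/(a:ℝ)^3 := by
    rw [← add_div]; norm_num
  rw [e1] at part1
  linarith [part1, part2]

lemma inner_summable (a : ℕ) (ha : 13 ≤ a) : Summable (gfun a) :=
  summable_of_sum_range_le (gfun_nonneg a) (inner_sum_le a ha)

lemma inner_tsum_le (a : ℕ) (ha : 13 ≤ a) : ∑' b, gfun a b ≤ (7/10) / (a:ℝ)^3 :=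
  Real.tsum_le_of_sum_range_le (gfun_nonneg a) (inner_sum_le a ha)

/-! ### Outer tail bound -/

lemma outer_sum_le (n : ℕ) : ∑ a ∈ Finset.range n, Sout a ≤ 7/3120 := by
  have hle : ∑ a ∈ Finset.range n, Sout a ≤ ∑ a ∈ Finset.range (max n 13), Sout a := by
    apply Finset.sum_le_sum_of_subset_of_nonneg
    · exact Finset.range_subset_range.mpr (le_max_left _ _)
    · intro i _ _; exact Sout_nonneg i
  refine hle.trans ?_
  set N := max n 13 with hN
  have h13N : 13 ≤ N := le_max_right _ _
  rw [Finset.range_eq_Ico, ← Finset.sum_Ico_consecutive _ (Nat.zero_le 13) h13N]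
  have hz : ∑ a ∈ Finset.Ico 0 13, Sout a = 0 := by
    apply Finset.sum_eq_zero
    intro a ha
    simp only [Finset.mem_Ico] at ha
    unfold Sout
    rw [if_neg (by omega)]
  rw [hz, zero_add]
  set v : ℕ → ℝ := fun a => (2*((a:ℝ)-1)*(a:ℝ))⁻¹ with hv
  have hterm : ∀ a ∈ Finset.Ico 13 N, Sout a ≤ (7/10) * (v a - v (a+1)) := by
    intro a ha
    simp only [Finset.mem_Ico] at ha
    have ha13 : (13:ℝ) ≤ (a:ℝ) := by exact_mod_cast ha.1
    have h1 : (0:ℝ) < (a:ℝ) - 1 := by linarith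
    have h0 : (0:ℝ) < (a:ℝ) := by linarith
    have hdiff : v a - v (a+1) = (((a:ℝ)-1)*(a:ℝ)*((a:ℝ)+1))⁻¹ := by
      rw [hv]
      push_cast
      field_simp
      have h0' : (a:ℝ) ≠ 0 := h0.ne'; ring_nf; simp [h0', pow_two, mul_assoc]; ring
    rw [hdiff]
    unfold Sout
    rw [if_pos ha.1, div_eq_mul_inv]
    apply mul_le_mul_of_nonneg_left ?_ (by norm_num)
    apply inv_anti₀
    · positivity
    · nlinarith
  calc ∑ a ∈ Finset.Ico 13 N, Sout a ≤ ∑ a ∈ Finset.Ico 13 N, (7/10) * (v a - v (a+1)) :=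
        Finset.sum_le_sum hterm
    _ = (7/10) * (v 13 - v N) := by rw [← Finset.mul_sum, tel v h13N]
    _ ≤ (7/10) * v 13 := by
        have hvN : 0 ≤ v N := by
          have h13' : (13:ℝ) ≤ (N:ℝ) := by exact_mod_cast h13N
          show (0:ℝ) ≤ (2*((N:ℝ)-1)*(N:ℝ))⁻¹
          apply inv_nonneg.mpr
          nlinarith
        nlinarith
    _ = 7/3120 := by rw [hv]; norm_num

lemma outer_summable : Summable Sout :=
  summable_of_sum_range_le Sout_nonneg outer_sum_le

lemma outer_tsum_le : ∑' a, Sout a ≤ 7/3120 :=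
  Real.tsum_le_of_sum_range_le Sout_nonneg outer_sum_le

/-! ### Box sum -/

set_option maxHeartbeats 2000000 in
lemma box_sum_le :
    ∑ p ∈ Finset.range 13 ×ˢ Finset.range 13, hfun p ≤ 0.0568 := by
  rw [Finset.sum_product]
  norm_num [hfun, Finset.sum_range_succ]

/-! ### ENNReal assembly -/

open ENNReal in
lemma total_bound :
    ∑' p : ℕ × ℕ, ENNReal.ofReal (hfun p) ≤ ENNReal.ofReal (0.0568 + 7/3120 + 7/3120) := by
  set F : ℕ × ℕ → ℝ≥0∞ := fun p => ENNReal.ofReal (hfun p) with hF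
  set e : ℕ → ℕ → ℝ≥0∞ := fun a b => if 13 ≤ a then ENNReal.ofReal (gfun a b) else 0 with he
  set Fb : ℕ × ℕ → ℝ≥0∞ := fun p => if p.1 ≤ 12 ∧ p.2 ≤ 12 then F p else 0 with hFb
  have hpoint : ∀ p : ℕ × ℕ, F p ≤ Fb p + e p.1 p.2 + e p.2 p.1 := by
    intro ⟨a, b⟩
    by_cases hbox : a ≤ 12 ∧ b ≤ 12
    · simp only [hFb, if_pos hbox]
      exact le_add_right (le_add_right le_rfl)
    · simp only [hFb, if_neg hbox, zero_add]
      by_cases hcond : 0 < a ∧ 0 < b ∧ (a + b) % 2 = 1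
      · rcases (by omega : 13 ≤ a ∨ 13 ≤ b) with h13 | h13
        · refine le_trans ?_ (le_add_right le_rfl)
          simp only [he, if_pos h13, hF]
          apply ENNReal.ofReal_le_ofReal
          unfold hfun gfun
          rw [if_pos hcond, if_pos (by omega : 1 ≤ b)]
        · refine le_trans ?_ (le_add_left le_rfl)
          simp only [he, if_pos h13, hF]
          apply ENNReal.ofReal_le_ofReal
          unfold hfun gfun
          rw [if_pos hcond, if_pos (by omega : 1 ≤ a)]
          have : ((a:ℝ)^2+(b:ℝ)^2) = ((b:ℝ)^2+(a:ℝ)^2) := by ring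
          rw [this]
      · simp only [hF]
        unfold hfun
        rw [if_neg hcond]
        simp
  have hsplit : ∑' p : ℕ × ℕ, F p ≤ (∑' p : ℕ × ℕ, Fb p) + (∑' p : ℕ × ℕ, e p.1 p.2)
      + (∑' p : ℕ × ℕ, e p.2 p.1) := by
    calc ∑' p : ℕ × ℕ, F p ≤ ∑' p : ℕ × ℕ, (Fb p + e p.1 p.2 + e p.2 p.1) :=
          ENNReal.tsum_le_tsum hpoint
      _ = _ := by rw [ENNReal.tsum_add, ENNReal.tsum_add]
  have hbox : ∑' p : ℕ × ℕ, Fb p ≤ ENNReal.ofReal 0.0568 := by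
    have hzero : ∀ p ∉ Finset.range 13 ×ˢ Finset.range 13, Fb p = 0 := by
      intro p hp
      simp only [Finset.mem_product, Finset.mem_range] at hp
      simp only [hFb]
      rw [if_neg (by omega)]
    rw [tsum_eq_sum hzero]
    have : ∑ p ∈ Finset.range 13 ×ˢ Finset.range 13, Fb p
        ≤ ∑ p ∈ Finset.range 13 ×ˢ Finset.range 13, F p := by
      apply Finset.sum_le_sum
      intro p _
      simp only [hFb]
      split <;> simp
    refine this.trans ?_
    rw [hF, ← ENNReal.ofReal_sum_of_nonneg (fun p _ => hfun_nonneg p)]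
    exact ENNReal.ofReal_le_ofReal box_sum_le
  have htail : ∑' p : ℕ × ℕ, e p.1 p.2 ≤ ENNReal.ofReal (7/3120) := by
    rw [ENNReal.tsum_prod']
    have hinner : ∀ a : ℕ, ∑' b, e a b ≤ ENNReal.ofReal (Sout a) := by
      intro a
      by_cases h13 : 13 ≤ a
      · simp only [he, if_pos h13]
        rw [← ENNReal.ofReal_tsum_of_nonneg (gfun_nonneg a) (inner_summable a h13)]
        apply ENNReal.ofReal_le_ofReal
        refine (inner_tsum_le a h13).trans ?_
        unfold Sout
        rw [if_pos h13]
      · simp only [he, if_neg h13]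
        simp
    calc ∑' (a) (b), e a b ≤ ∑' a, ENNReal.ofReal (Sout a) := ENNReal.tsum_le_tsum hinner
      _ = ENNReal.ofReal (∑' a, Sout a) :=
          (ENNReal.ofReal_tsum_of_nonneg Sout_nonneg outer_summable).symm
      _ ≤ ENNReal.ofReal (7/3120) := ENNReal.ofReal_le_ofReal outer_tsum_le
  have htail' : ∑' p : ℕ × ℕ, e p.2 p.1 ≤ ENNReal.ofReal (7/3120) := by
    have : ∑' p : ℕ × ℕ, e p.2 p.1 = ∑' p : ℕ × ℕ, e p.1 p.2 :=
      (Equiv.prodComm ℕ ℕ).tsum_eq (fun p => e p.1 p.2)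
    rw [this]; exact htail
  refine hsplit.trans ?_
  rw [ENNReal.ofReal_add (by norm_num) (by norm_num), ENNReal.ofReal_add (by norm_num) (by norm_num)]
  exact add_le_add (add_le_add hbox htail) htail'

/-! ### Main theorem -/

/-- The sum of `1/(2r²)` over all primitive Pythagorean triples `(p, q, r)`
(counting `(p, q, r)` and `(q, p, r)` separately) converges and is
less than `0.0633`. -/
theorem sum_inv_two_r_sq_lt :
    Summable (fun t : PPT => 1 / (2 * ((t : ℕ × ℕ × ℕ).2.2 : ℝ) ^ 2)) ∧
    ∑' t : PPT, 1 / (2 * ((t : ℕ × ℕ × ℕ).2.2 : ℝ) ^ 2) < 0.0633 := by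
  set f : PPT → ℝ := fun t => 1 / (2 * ((t : ℕ × ℕ × ℕ).2.2 : ℝ) ^ 2) with hf
  have hfnonneg : ∀ t : PPT, 0 ≤ f t := by
    intro t; rw [hf]; positivity
  set i : PPT → ℕ × ℕ := fun t => (exists_pair t.2).choose with hi
  have hispec : ∀ t : PPT, PairSpec t.1 (i t) := fun t => (exists_pair t.2).choose_spec
  have hinj : Function.Injective i := by
    intro t₁ t₂ h
    apply Subtype.ext
    exact pairSpec_injective (hispec t₁) (h ▸ hispec t₂)
  have hfi : ∀ t : PPT, f t = hfun (i t) := fun t => pairSpec_hfun (hispec t)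
  have hcomp : ∑' t : PPT, ENNReal.ofReal (f t) ≤ ENNReal.ofReal (0.0568 + 7/3120 + 7/3120) := by
    calc ∑' t : PPT, ENNReal.ofReal (f t)
        = ∑' t : PPT, ENNReal.ofReal (hfun (i t)) := by
          congr 1; funext t; rw [hfi]
      _ ≤ ∑' p : ℕ × ℕ, ENNReal.ofReal (hfun p) :=
          ENNReal.tsum_comp_le_tsum_of_injective hinj _
      _ ≤ _ := total_bound
  have hne : ∑' t : PPT, ENNReal.ofReal (f t) ≠ ⊤ :=
    ne_top_of_le_ne_top ENNReal.ofReal_ne_top hcomp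
  have hsummable : Summable f := by
    have h1 := ENNReal.summable_toReal hne
    refine h1.congr fun t => ?_
    rw [ENNReal.toReal_ofReal (hfnonneg t)]
  constructor
  · exact hsummable
  · have h2 : ENNReal.ofReal (∑' t : PPT, f t) ≤ ENNReal.ofReal (0.0568 + 7/3120 + 7/3120) := by
      rw [ENNReal.ofReal_tsum_of_nonneg hfnonneg hsummable]
      exact hcomp
    have h3 : ∑' t : PPT, f t ≤ 0.0568 + 7/3120 + 7/3120 :=
      (ENNReal.ofReal_le_ofReal_iff (by norm_num)).mp h2
    calc ∑' t : PPT, f t ≤ 0.0568 + 7/3120 + 7/3120 := h3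
      _ < 0.0633 := by norm_num

end
end

section
/- Let D(N) denote the number of unordered pairs {A,B} of distinct nonzero points of [N]×[N] such that the triangle with vertices O = (0,0), A, B is degenerate (O, A, B collinear), right (has a 90° angle), or isosceles (has two equal side lengths). Then D(N)/N⁴ → 0 as N → ∞. -/
open Real EuclideanGeometry

noncomputable section

/-- The triangle with vertices `(0,0)`, `A`, `B` is degenerate: the three
vertices are collinear. -/
def IsDegenerateT (A B : ℤ × ℤ) : Prop :=
  Collinear ℝ ({toPlane (0, 0), toPlane A, toPlane B} : Set Plane)

/-- The triangle with vertices `(0,0)`, `A`, `B` has a right angle. -/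
def IsRightT (A B : ℤ × ℤ) : Prop :=
  ∠ (toPlane A) (toPlane (0, 0)) (toPlane B) = π / 2 ∨
  ∠ (toPlane (0, 0)) (toPlane A) (toPlane B) = π / 2 ∨
  ∠ (toPlane (0, 0)) (toPlane B) (toPlane A) = π / 2

/-- The triangle with vertices `(0,0)`, `A`, `B` is isosceles: two of its side
lengths are equal. -/
def IsIsoscelesT (A B : ℤ × ℤ) : Prop :=
  dist (toPlane (0, 0)) (toPlane A) = dist (toPlane (0, 0)) (toPlane B) ∨
  dist (toPlane (0, 0)) (toPlane A) = dist (toPlane A) (toPlane B) ∨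
  dist (toPlane (0, 0)) (toPlane B) = dist (toPlane A) (toPlane B)

/-- The triangle with vertices `(0,0)`, `A`, `B` is scalene: its three side
lengths are pairwise distinct. -/
def IsScaleneT (A B : ℤ × ℤ) : Prop :=
  dist (toPlane (0, 0)) (toPlane A) ≠ dist (toPlane (0, 0)) (toPlane B) ∧
  dist (toPlane (0, 0)) (toPlane A) ≠ dist (toPlane A) (toPlane B) ∧
  dist (toPlane (0, 0)) (toPlane B) ≠ dist (toPlane A) (toPlane B)

/-- The number of unordered pairs `{A, B}` of distinct nonzero points of the grid
`[N] × [N]` satisfying the (symmetric) property `cond`. -/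
def pairCount (N : ℕ) (cond : ℤ × ℤ → ℤ × ℤ → Prop) : ℕ :=
  {s : Set (ℤ × ℤ) | ∃ A B : ℤ × ℤ, A ≠ B ∧ A ≠ (0, 0) ∧ B ≠ (0, 0) ∧
    inGrid N A ∧ inGrid N B ∧ cond A B ∧ s = {A, B}}.ncard

/-! ### Auxiliary geometry lemmas -/

lemma my_inner_vsub (X Y Z W : ℤ × ℤ) :
    (inner ℝ (toPlane X -ᵥ toPlane Y) (toPlane Z -ᵥ toPlane W) : ℝ)
      = (((X.1 - Y.1) * (Z.1 - W.1) + (X.2 - Y.2) * (Z.2 - W.2) : ℤ) : ℝ) := by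
  simp [toPlane, pt, PiLp.inner_apply, Fin.sum_univ_two]; ring

lemma my_dist_sq (X Y : ℤ × ℤ) :
    dist (toPlane X) (toPlane Y) ^ 2 = (((X.1 - Y.1) ^ 2 + (X.2 - Y.2) ^ 2 : ℤ) : ℝ) := by
  rw [EuclideanSpace.dist_eq, Real.sq_sqrt (by positivity)]
  simp [toPlane, pt, Fin.sum_univ_two, Real.dist_eq, sq_abs]

lemma dist_eq_int {X Y Z W : ℤ × ℤ}
    (h : dist (toPlane X) (toPlane Y) = dist (toPlane Z) (toPlane W)) :
    (X.1 - Y.1) ^ 2 + (X.2 - Y.2) ^ 2 = (Z.1 - W.1) ^ 2 + (Z.2 - W.2) ^ 2 := by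
  have h2 : dist (toPlane X) (toPlane Y) ^ 2 = dist (toPlane Z) (toPlane W) ^ 2 := by rw [h]
  rw [my_dist_sq, my_dist_sq] at h2
  exact_mod_cast h2

lemma angle_int {X Y Z : ℤ × ℤ} (h : ∠ (toPlane X) (toPlane Y) (toPlane Z) = π / 2) :
    (X.1 - Y.1) * (Z.1 - Y.1) + (X.2 - Y.2) * (Z.2 - Y.2) = 0 := by
  rw [EuclideanGeometry.angle] at h
  have h0 := (InnerProductGeometry.inner_eq_zero_iff_angle_eq_pi_div_two _ _).mpr h
  rw [my_inner_vsub] at h0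
  exact_mod_cast h0

/-- The integer conditions. -/
def condZ (A B : ℤ × ℤ) : Prop :=
  (A.2 * B.1 + (-A.1) * B.2 = 0) ∨
  (A.1 * B.1 + A.2 * B.2 = 0) ∨
  (A.1 * B.1 + A.2 * B.2 = A.1 ^ 2 + A.2 ^ 2) ∨
  ((2 * A.1) * B.1 + (2 * A.2) * B.2 = A.1 ^ 2 + A.2 ^ 2) ∨
  (B.2 ^ 2 + (-A.2) * B.2 = A.1 * B.1 - B.1 ^ 2) ∨
  (B.2 ^ 2 + 0 * B.2 = A.1 ^ 2 + A.2 ^ 2 - B.1 ^ 2) ∨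
  (B.2 ^ 2 + (-(2 * A.2)) * B.2 = A.1 ^ 2 - (B.1 - A.1) ^ 2)

instance (A B : ℤ × ℤ) : Decidable (condZ A B) := by unfold condZ; infer_instance

lemma cond_imp (A B : ℤ × ℤ)
    (h : IsDegenerateT A B ∨ IsRightT A B ∨ IsIsoscelesT A B) : condZ A B := by
  unfold condZ
  rcases h with h | h | h
  · -- degenerate
    left
    rw [IsDegenerateT, collinear_iff_of_mem (Set.mem_insert _ _)] at h
    obtain ⟨v, hv⟩ := h
    obtain ⟨r, hr⟩ := hv (toPlane A) (by simp)
    obtain ⟨s, hs⟩ := hv (toPlane B) (by simp)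
    have ha : (A.1 : ℝ) = r * v 0 := by
      have := congrArg (fun p : Plane => p 0) hr; simpa [toPlane, pt] using this
    have hb : (A.2 : ℝ) = r * v 1 := by
      have := congrArg (fun p : Plane => p 1) hr; simpa [toPlane, pt] using this
    have hc : (B.1 : ℝ) = s * v 0 := by
      have := congrArg (fun p : Plane => p 0) hs; simpa [toPlane, pt] using this
    have hd : (B.2 : ℝ) = s * v 1 := by
      have := congrArg (fun p : Plane => p 1) hs; simpa [toPlane, pt] using this
    have : (A.2 : ℝ) * B.1 + (-A.1) * B.2 = 0 := by rw [ha, hb, hc, hd]; ring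
    exact_mod_cast this
  · rcases h with h | h | h
    · right; left
      have := angle_int h
      simp at this
      first | linear_combination this | linear_combination -this
    · right; right; left
      have := angle_int h
      simp at this
      first | linear_combination this | linear_combination -this
    · right; right; right; right; left
      have := angle_int h
      simp at this
      first | linear_combination this | linear_combination -this
  · rcases h with h | h | h
    · right; right; right; right; right; left
      have := dist_eq_int h
      simp at this
      first | linear_combination this | linear_combination -this
    · right; right; right; right; right; right
      have := dist_eq_int h
      simp at this
      first | linear_combination this | linear_combination -this
    · right; right; right; left
      have := dist_eq_int h
      simp at this
      first | linear_combination this | linear_combination -this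

/-! ### Counting -/

def gridF (N : ℕ) : Finset (ℤ × ℤ) := Finset.Ico 0 (N : ℤ) ×ˢ Finset.Ico 0 (N : ℤ)

lemma mem_gridF {N : ℕ} {B : ℤ × ℤ} (h : B ∈ gridF N) :
    B.1 ∈ Finset.Ico (0:ℤ) N ∧ B.2 ∈ Finset.Ico (0:ℤ) N := by
  simpa [gridF, Finset.mem_product] using h

lemma inGrid_mem {N : ℕ} {B : ℤ × ℤ} (h : inGrid N B) : B ∈ gridF N := by
  simp only [gridF, Finset.mem_product, Finset.mem_Ico]
  exact ⟨⟨h.1, h.2.1⟩, h.2.2⟩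

lemma lin_card (N : ℕ) (p q c : ℤ) (h : p ≠ 0 ∨ q ≠ 0) :
    ((gridF N).filter (fun B => p * B.1 + q * B.2 = c)).card ≤ N := by
  by_cases hq : q = 0
  · replace h : p ≠ 0 := h.resolve_right (by simp [hq])
    calc ((gridF N).filter (fun B => p * B.1 + q * B.2 = c)).card
        ≤ (Finset.Ico (0:ℤ) N).card := by
          apply Finset.card_le_card_of_injOn (fun B => B.2)
          · intro B hB
            exact (mem_gridF (Finset.mem_filter.mp hB).1).2
          · intro B hB B' hB' he
            simp only [Finset.mem_coe, Finset.mem_filter] at hB hB'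
            have h2 := hB.2; have h2' := hB'.2
            rw [hq] at h2 h2'
            have : p * B.1 = p * B'.1 := by linarith
            exact Prod.ext (mul_left_cancel₀ h this) he
      _ = N := by simp
  · calc ((gridF N).filter (fun B => p * B.1 + q * B.2 = c)).card
        ≤ (Finset.Ico (0:ℤ) N).card := by
          apply Finset.card_le_card_of_injOn (fun B => B.1)
          · intro B hB
            exact (mem_gridF (Finset.mem_filter.mp hB).1).1
          · intro B hB B' hB' he
            simp only [Finset.mem_coe, Finset.mem_filter] at hB hB'
            have h2 := hB.2; have h2' := hB'.2
            have he' : B.1 = B'.1 := he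
            rw [he'] at h2
            have : q * B.2 = q * B'.2 := by linarith
            exact Prod.ext he' (mul_left_cancel₀ hq this)
      _ = N := by simp

lemma quad_card (N : ℕ) (u : ℤ) (f : ℤ → ℤ) :
    ((gridF N).filter (fun B => B.2 ^ 2 + u * B.2 = f B.1)).card ≤ 2 * N := by
  set S : Finset (ℤ × ℤ) := (gridF N).filter (fun B => B.2 ^ 2 + u * B.2 = f B.1) with hS
  have hmem : ∀ B, B ∈ S → B ∈ gridF N ∧ B.2 ^ 2 + u * B.2 = f B.1 := by
    intro B hB; exact Finset.mem_filter.mp hB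
  have himg : (S.image Prod.fst).card ≤ N := by
    refine le_trans (Finset.card_le_card (t := Finset.Ico (0:ℤ) N) ?_) (le_of_eq (by simp))
    intro x hx
    obtain ⟨B, hB, rfl⟩ := Finset.mem_image.mp hx
    exact (mem_gridF (hmem B hB).1).1
  have hfib : ∀ a ∈ S.image Prod.fst, (S.filter fun x => x.1 = a).card ≤ 2 := by
    intro a _
    by_contra hlt
    push_neg at hlt
    obtain ⟨x, y, z, hx, hy, hz, hxy, hxz, hyz⟩ := Finset.two_lt_card_iff.mp hlt
    obtain ⟨hx', hx1⟩ := Finset.mem_filter.mp hx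
    obtain ⟨hy', hy1⟩ := Finset.mem_filter.mp hy
    obtain ⟨hz', hz1⟩ := Finset.mem_filter.mp hz
    have ex := (hmem x hx').2; have ey := (hmem y hy').2; have ez := (hmem z hz').2
    rw [hx1] at ex; rw [hy1] at ey; rw [hz1] at ez
    have hxy2 : x.2 ≠ y.2 := fun h => hxy (Prod.ext (hx1.trans hy1.symm) h)
    have hxz2 : x.2 ≠ z.2 := fun h => hxz (Prod.ext (hx1.trans hz1.symm) h)
    have hyz2 : y.2 ≠ z.2 := fun h => hyz (Prod.ext (hy1.trans hz1.symm) h)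
    have e1 : (x.2 - y.2) * (x.2 + y.2 + u) = 0 := by linear_combination ex - ey
    have e2 : (x.2 - z.2) * (x.2 + z.2 + u) = 0 := by linear_combination ex - ez
    have f1 := (mul_eq_zero.mp e1).resolve_left (sub_ne_zero.mpr hxy2)
    have f2 := (mul_eq_zero.mp e2).resolve_left (sub_ne_zero.mpr hxz2)
    exact hyz2 (by omega)
  calc S.card ≤ 2 * (S.image Prod.fst).card :=
        Finset.card_le_mul_card_image (f := Prod.fst) S 2 hfib
    _ ≤ 2 * N := by omega

lemma bad_card (N : ℕ) (A : ℤ × ℤ) (hA : A ≠ (0, 0)) :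
    ((gridF N).filter (fun B => condZ A B)).card ≤ 10 * N := by
  have hA' : A.1 ≠ 0 ∨ A.2 ≠ 0 := by
    by_contra hcon; push_neg at hcon; exact hA (Prod.ext hcon.1 hcon.2)
  have hsub : (gridF N).filter (fun B => condZ A B) ⊆
      ((gridF N).filter (fun B => A.2 * B.1 + (-A.1) * B.2 = 0)) ∪
      ((gridF N).filter (fun B => A.1 * B.1 + A.2 * B.2 = 0)) ∪
      ((gridF N).filter (fun B => A.1 * B.1 + A.2 * B.2 = A.1 ^ 2 + A.2 ^ 2)) ∪
      ((gridF N).filter (fun B => (2 * A.1) * B.1 + (2 * A.2) * B.2 = A.1 ^ 2 + A.2 ^ 2)) ∪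
      ((gridF N).filter (fun B => B.2 ^ 2 + (-A.2) * B.2 = (fun x => A.1 * x - x ^ 2) B.1)) ∪
      ((gridF N).filter (fun B => B.2 ^ 2 + 0 * B.2 = (fun x => A.1 ^ 2 + A.2 ^ 2 - x ^ 2) B.1)) ∪
      ((gridF N).filter (fun B =>
        B.2 ^ 2 + (-(2 * A.2)) * B.2 = (fun x => A.1 ^ 2 - (x - A.1) ^ 2) B.1)) := by
    intro B hB
    obtain ⟨hg, h⟩ := Finset.mem_filter.mp hB
    simp only [Finset.mem_filter, Finset.mem_union]
    unfold condZ at h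
    rcases h with h | h | h | h | h | h | h
    · exact Or.inl (Or.inl (Or.inl (Or.inl (Or.inl (Or.inl ⟨hg, h⟩)))))
    · exact Or.inl (Or.inl (Or.inl (Or.inl (Or.inl (Or.inr ⟨hg, h⟩)))))
    · exact Or.inl (Or.inl (Or.inl (Or.inl (Or.inr ⟨hg, h⟩))))
    · exact Or.inl (Or.inl (Or.inl (Or.inr ⟨hg, h⟩)))
    · exact Or.inl (Or.inl (Or.inr ⟨hg, h⟩))
    · exact Or.inl (Or.inr ⟨hg, h⟩)
    · exact Or.inr ⟨hg, h⟩
  have step : ∀ (s t : Finset (ℤ × ℤ)) (a b : ℕ), s.card ≤ a → t.card ≤ b →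
      (s ∪ t).card ≤ a + b :=
    fun s t a b hs ht => (Finset.card_union_le s t).trans (Nat.add_le_add hs ht)
  have h1 := lin_card N A.2 (-A.1) 0 (Or.symm (hA'.imp (fun h => neg_ne_zero.mpr h) id))
  have h2 := lin_card N A.1 A.2 0 hA'
  have h3 := lin_card N A.1 A.2 (A.1 ^ 2 + A.2 ^ 2) hA'
  have h4 := lin_card N (2 * A.1) (2 * A.2) (A.1 ^ 2 + A.2 ^ 2)
    (hA'.imp (mul_ne_zero two_ne_zero) (mul_ne_zero two_ne_zero))
  have h5 := quad_card N (-A.2) (fun x => A.1 * x - x ^ 2)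
  have h6 := quad_card N 0 (fun x => A.1 ^ 2 + A.2 ^ 2 - x ^ 2)
  have h7 := quad_card N (-(2 * A.2)) (fun x => A.1 ^ 2 - (x - A.1) ^ 2)
  refine (Finset.card_le_card hsub).trans ?_
  refine le_trans (step _ _ _ (2*N)
    (step _ _ _ (2*N) (step _ _ _ (2*N) (step _ _ _ N (step _ _ _ N
      (step _ _ N N h1 h2) h3) h4) h5) h6) h7) (by omega)

def badPairs (N : ℕ) : Finset ((ℤ × ℤ) × (ℤ × ℤ)) :=
  (gridF N ×ˢ gridF N).filter (fun p => p.1 ≠ (0, 0) ∧ condZ p.1 p.2)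

lemma badPairs_card (N : ℕ) : (badPairs N).card ≤ 10 * N ^ 3 := by
  have hsub : badPairs N ⊆ ((gridF N).filter (fun A => A ≠ (0,0))).biUnion
      (fun A => ((gridF N).filter (fun B => condZ A B)).image (fun B => (A, B))) := by
    intro p hp
    simp only [badPairs, Finset.mem_filter, Finset.mem_product] at hp
    obtain ⟨⟨hp1, hp2⟩, hne, hc⟩ := hp
    apply Finset.mem_biUnion.mpr
    refine ⟨p.1, Finset.mem_filter.mpr ⟨hp1, hne⟩, ?_⟩
    exact Finset.mem_image.mpr ⟨p.2, Finset.mem_filter.mpr ⟨hp2, hc⟩, rfl⟩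
  refine (Finset.card_le_card hsub).trans ?_
  refine (Finset.card_biUnion_le).trans ?_
  have : ∀ A ∈ (gridF N).filter (fun A => A ≠ (0,0)),
      (((gridF N).filter (fun B => condZ A B)).image (fun B => (A, B))).card ≤ 10 * N := by
    intro A hA
    obtain ⟨_, hA0⟩ := Finset.mem_filter.mp hA
    exact (Finset.card_image_le).trans (bad_card N A hA0)
  refine (Finset.sum_le_sum this).trans ?_
  rw [Finset.sum_const, smul_eq_mul]
  have hcard : ((gridF N).filter (fun A => A ≠ (0,0))).card ≤ N ^ 2 := by
    refine (Finset.card_le_card (Finset.filter_subset _ _)).trans ?_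
    simp [gridF, Finset.card_product, pow_two]
  calc ((gridF N).filter (fun A => A ≠ (0,0))).card * (10 * N) ≤ N ^ 2 * (10 * N) :=
        Nat.mul_le_mul_right _ hcard
    _ = 10 * N ^ 3 := by ring

lemma pairCount_le (N : ℕ) :
    pairCount N (fun A B => IsDegenerateT A B ∨ IsRightT A B ∨ IsIsoscelesT A B) ≤ 10 * N ^ 3 := by
  rw [pairCount]
  have hsub : {s : Set (ℤ × ℤ) | ∃ A B : ℤ × ℤ, A ≠ B ∧ A ≠ (0, 0) ∧ B ≠ (0, 0) ∧
      inGrid N A ∧ inGrid N B ∧ (IsDegenerateT A B ∨ IsRightT A B ∨ IsIsoscelesT A B) ∧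
      s = {A, B}} ⊆
      (fun p : (ℤ × ℤ) × (ℤ × ℤ) => ({p.1, p.2} : Set (ℤ × ℤ))) '' ↑(badPairs N) := by
    rintro s ⟨A, B, hAB, hA0, hB0, hAg, hBg, hc, rfl⟩
    refine ⟨(A, B), ?_, rfl⟩
    simp only [Finset.coe_filter, badPairs, Set.mem_setOf_eq, Finset.mem_product]
    exact ⟨⟨inGrid_mem hAg, inGrid_mem hBg⟩, hA0, cond_imp A B hc⟩
  have hfin : ((fun p : (ℤ × ℤ) × (ℤ × ℤ) => ({p.1, p.2} : Set (ℤ × ℤ))) ''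
      ↑(badPairs N)).Finite := (badPairs N).finite_toSet.image _
  refine (Set.ncard_le_ncard hsub hfin).trans ?_
  refine (Set.ncard_image_le (badPairs N).finite_toSet).trans ?_
  rw [Set.ncard_coe_finset]
  exact badPairs_card N

/-- The number `D N` of pairs `{A, B}` of distinct nonzero grid points for which
the triangle `(0,0), A, B` is degenerate, right, or isosceles satisfies
`D N / N⁴ → 0`. -/
theorem degenerate_right_isosceles_density_zero :
    Filter.Tendsto
      (fun N : ℕ =>
        ((pairCount N fun A B => IsDegenerateT A B ∨ IsRightT A B ∨ IsIsoscelesT A B : ℕ) : ℝ) /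
          (N : ℝ) ^ 4)
      Filter.atTop (nhds 0) := by
  apply squeeze_zero' (g := fun N : ℕ => 10 / (N : ℝ))
  · filter_upwards with N
    positivity
  · filter_upwards [Filter.eventually_ge_atTop 1] with N hN
    have hN0 : (0:ℝ) < (N:ℝ) := by exact_mod_cast hN
    have hle : ((pairCount N fun A B => IsDegenerateT A B ∨ IsRightT A B ∨ IsIsoscelesT A B : ℕ) : ℝ)
        ≤ 10 * (N:ℝ) ^ 3 := by
      have := pairCount_le N
      push_cast
      exact_mod_cast this
    rw [div_le_iff₀ (by positivity)]
    calc ((pairCount N fun A B => IsDegenerateT A B ∨ IsRightT A B ∨ IsIsoscelesT A B : ℕ) : ℝ)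
        ≤ 10 * (N:ℝ) ^ 3 := hle
      _ = 10 / (N:ℝ) * (N:ℝ) ^ 4 := by field_simp
  · exact tendsto_const_div_atTop_nhds_zero_nat 10
end
end

section
/- Let S₃(N) denote the number of unordered pairs {A,B} of distinct nonzero points of [N]×[N] such that the triangle with vertices O = (0,0), A, B is nondegenerate, scalene, not right, and has all three of its vertices on the boundary of its axis-parallel bounding rectangle, and let S₂(N) denote the analogous count where exactly two of the three vertices lie on the boundary of the bounding rectangle. Then S₃(N)/N⁴ → 1/4 and S₂(N)/N⁴ → 1/4 as N → ∞. -/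
open Real EuclideanGeometry

noncomputable section

/-- The vertex `v` of the triangle with vertices `(0,0)`, `A`, `B` lies on the
boundary of the smallest axis-parallel rectangle containing the triangle. -/
def OnBBox (A B v : ℤ × ℤ) : Prop :=
  v.1 = min 0 (min A.1 B.1) ∨ v.1 = max 0 (max A.1 B.1) ∨
  v.2 = min 0 (min A.2 B.2) ∨ v.2 = max 0 (max A.2 B.2)

/-- All three vertices of the triangle `(0,0), A, B` lie on the boundary of its
bounding rectangle. -/
def ThreeOnBBox (A B : ℤ × ℤ) : Prop :=
  OnBBox A B (0, 0) ∧ OnBBox A B A ∧ OnBBox A B B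

/-- Exactly two of the three vertices of the triangle `(0,0), A, B` lie on the
boundary of its bounding rectangle. -/
def TwoOnBBox (A B : ℤ × ℤ) : Prop :=
  (OnBBox A B (0, 0) ∧ OnBBox A B A ∧ ¬OnBBox A B B) ∨
  (OnBBox A B (0, 0) ∧ ¬OnBBox A B A ∧ OnBBox A B B) ∨
  (¬OnBBox A B (0, 0) ∧ OnBBox A B A ∧ OnBBox A B B)

lemma dist_toPlane (P Q : ℤ × ℤ) :
    dist (toPlane P) (toPlane Q) = Real.sqrt (((P.1 - Q.1 : ℤ))^2 + ((P.2 - Q.2 : ℤ))^2 : ℤ) := by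
  rw [EuclideanSpace.dist_eq]
  congr 1
  rw [Fin.sum_univ_two]
  push_cast
  simp [toPlane, pt, Real.dist_eq, sq_abs]

lemma dist_toPlane_eq {P Q R S : ℤ × ℤ}
    (h : dist (toPlane P) (toPlane Q) = dist (toPlane R) (toPlane S)) :
    (P.1 - Q.1)^2 + (P.2 - Q.2)^2 = (R.1 - S.1)^2 + (R.2 - S.2)^2 := by
  rw [dist_toPlane, dist_toPlane] at h
  have h2 := congrArg (fun x => x ^ 2) h
  rw [Real.sq_sqrt (by positivity), Real.sq_sqrt (by positivity)] at h2
  exact_mod_cast h2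

lemma inner_toPlane (P Q : ℤ × ℤ) :
    (inner ℝ (toPlane P) (toPlane Q) : ℝ) = ((P.1 * Q.1 + P.2 * Q.2 : ℤ) : ℝ) := by
  rw [PiLp.inner_apply, Fin.sum_univ_two]
  simp [toPlane, pt]
  ring

lemma toPlane_sub (P Q : ℤ × ℤ) : toPlane P - toPlane Q = toPlane (P - Q) := by
  ext i
  fin_cases i <;> simp [toPlane, pt]

lemma toPlane_zero : toPlane (0, 0) = 0 := by
  ext i
  fin_cases i <;> simp [toPlane, pt]

lemma right_alg {A B : ℤ × ℤ} (h : IsRightT A B) :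
    A.1 * B.1 + A.2 * B.2 = 0 ∨
    A.1 * (B.1 - A.1) + A.2 * (B.2 - A.2) = 0 ∨
    B.1 * (A.1 - B.1) + B.2 * (A.2 - B.2) = 0 := by
  have key : ∀ P Q R : ℤ × ℤ, ∠ (toPlane P) (toPlane Q) (toPlane R) = π / 2 →
      (P.1 - Q.1) * (R.1 - Q.1) + (P.2 - Q.2) * (R.2 - Q.2) = 0 := by
    intro P Q R h
    rw [EuclideanGeometry.angle, ← InnerProductGeometry.inner_eq_zero_iff_angle_eq_pi_div_two] at h
    have e1 : (toPlane P) -ᵥ (toPlane Q) = toPlane (P - Q) := toPlane_sub P Q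
    have e2 : (toPlane R) -ᵥ (toPlane Q) = toPlane (R - Q) := toPlane_sub R Q
    rw [e1, e2, inner_toPlane] at h
    exact_mod_cast h
  rcases h with h | h | h
  · left; have := key A (0,0) B h; simpa using this
  · right; left
    have := key (0,0) A B h
    simp only [Prod.fst_zero] at this
    nlinarith [this]
  · right; right
    have := key (0,0) B A h
    simp at this
    linarith [this]

lemma deg_alg {A B : ℤ × ℤ} (h : IsDegenerateT A B) : A.1 * B.2 = A.2 * B.1 := by
  rw [IsDegenerateT, collinear_iff_of_mem (Set.mem_insert _ _)] at h
  obtain ⟨v, hv⟩ := h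
  obtain ⟨rA, hA⟩ := hv (toPlane A) (by simp)
  obtain ⟨rB, hB⟩ := hv (toPlane B) (by simp)
  rw [toPlane_zero] at hA hB
  have hA0 : (A.1 : ℝ) = rA * v 0 := by
    have := congrArg (fun w => w 0) hA; simpa [toPlane, pt] using this
  have hA1 : (A.2 : ℝ) = rA * v 1 := by
    have := congrArg (fun w => w 1) hA; simpa [toPlane, pt] using this
  have hB0 : (B.1 : ℝ) = rB * v 0 := by
    have := congrArg (fun w => w 0) hB; simpa [toPlane, pt] using this
  have hB1 : (B.2 : ℝ) = rB * v 1 := by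
    have := congrArg (fun w => w 1) hB; simpa [toPlane, pt] using this
  have : (A.1 : ℝ) * B.2 = (A.2 : ℝ) * B.1 := by rw [hA0, hA1, hB0, hB1]; ring
  exact_mod_cast this

lemma notScalene_alg {A B : ℤ × ℤ} (h : ¬ IsScaleneT A B) :
    A.1^2 + A.2^2 = B.1^2 + B.2^2 ∨
    A.1^2 + A.2^2 = (A.1 - B.1)^2 + (A.2 - B.2)^2 ∨
    B.1^2 + B.2^2 = (A.1 - B.1)^2 + (A.2 - B.2)^2 := by
  rw [IsScaleneT] at h
  push_neg at h
  by_cases h1 : dist (toPlane (0,0)) (toPlane A) = dist (toPlane (0,0)) (toPlane B)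
  · left; have := dist_toPlane_eq h1; simp at this; linarith [this]
  by_cases h2 : dist (toPlane (0,0)) (toPlane A) = dist (toPlane A) (toPlane B)
  · right; left; have := dist_toPlane_eq h2; simp at this; linarith [this]
  · right; right
    have h3 := h h1 h2
    have := dist_toPlane_eq h3; simp at this; linarith [this]
attribute [local instance] Classical.propDecidable

def G (N : ℕ) : Finset (ℤ × ℤ) := (Finset.Ico (0:ℤ) N) ×ˢ (Finset.Ico (0:ℤ) N)

def Inside (A B : ℤ × ℤ) : Prop := 0 < B.1 ∧ B.1 < A.1 ∧ 0 < B.2 ∧ B.2 < A.2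

lemma mem_G {N : ℕ} {P : ℤ × ℤ} : P ∈ G N ↔ inGrid N P := by
  simp [G, inGrid, Finset.mem_product, Finset.mem_Ico, and_assoc]

lemma notOnBBox_iff {N : ℕ} {A B : ℤ × ℤ} (hA : inGrid N A) (hB : inGrid N B) :
    ¬ OnBBox A B B ↔ Inside A B := by
  obtain ⟨h1, h2, h3, h4⟩ := hA
  obtain ⟨h5, h6, h7, h8⟩ := hB
  simp only [OnBBox, Inside]
  omega

lemma onBBox_origin {N : ℕ} {A B : ℤ × ℤ} (hA : inGrid N A) (hB : inGrid N B) :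
    OnBBox A B (0, 0) := by
  obtain ⟨h1, h2, h3, h4⟩ := hA
  obtain ⟨h5, h6, h7, h8⟩ := hB
  simp only [OnBBox]
  omega

lemma onBBox_comm {A B v : ℤ × ℤ} : OnBBox A B v ↔ OnBBox B A v := by
  simp only [OnBBox, min_comm A.1 B.1, max_comm A.1 B.1, min_comm A.2 B.2, max_comm A.2 B.2]

lemma two_iff {N : ℕ} {A B : ℤ × ℤ} (hA : inGrid N A) (hB : inGrid N B) :
    TwoOnBBox A B ↔ (Inside A B ∨ Inside B A) := by
  have hO := onBBox_origin hA hB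
  have hBB := notOnBBox_iff hA hB
  have hAA : ¬ OnBBox A B A ↔ Inside B A := by
    rw [onBBox_comm]; exact notOnBBox_iff hB hA
  obtain ⟨a1, a2, a3, a4⟩ := hA
  obtain ⟨b1, b2, b3, b4⟩ := hB
  simp only [TwoOnBBox, Inside] at *
  simp only [OnBBox] at *
  omega

lemma three_iff {N : ℕ} {A B : ℤ × ℤ} (hA : inGrid N A) (hB : inGrid N B) :
    ThreeOnBBox A B ↔ (¬ Inside A B ∧ ¬ Inside B A) := by
  have hO := onBBox_origin hA hB
  obtain ⟨a1, a2, a3, a4⟩ := hA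
  obtain ⟨b1, b2, b3, b4⟩ := hB
  simp only [ThreeOnBBox, Inside] at *
  simp only [OnBBox] at *
  omega
lemma deg_comm {A B : ℤ × ℤ} (h : IsDegenerateT A B) : IsDegenerateT B A := by
  unfold IsDegenerateT at *
  exact h.subset (by intro x hx; simp only [Set.mem_insert_iff, Set.mem_singleton_iff] at hx ⊢; tauto)

lemma scalene_comm {A B : ℤ × ℤ} (h : IsScaleneT A B) : IsScaleneT B A := by
  unfold IsScaleneT at *
  rw [dist_comm (toPlane B) (toPlane A)]
  obtain ⟨h1, h2, h3⟩ := h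
  exact ⟨fun e => h1 e.symm, h3, h2⟩

lemma right_comm {A B : ℤ × ℤ} (h : IsRightT A B) : IsRightT B A := by
  unfold IsRightT at *
  rw [EuclideanGeometry.angle_comm (toPlane B)]
  tauto

lemma three_comm {A B : ℤ × ℤ} (h : ThreeOnBBox A B) : ThreeOnBBox B A := by
  obtain ⟨h1, h2, h3⟩ := h
  exact ⟨onBBox_comm.mp h1, onBBox_comm.mp h3, onBBox_comm.mp h2⟩

lemma twob_comm {A B : ℤ × ℤ} (h : TwoOnBBox A B) : TwoOnBBox B A := by
  unfold TwoOnBBox at *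
  rcases h with ⟨h1, h2, h3⟩ | ⟨h1, h2, h3⟩ | ⟨h1, h2, h3⟩
  · exact Or.inr (Or.inl ⟨onBBox_comm.mp h1, fun c => h3 (onBBox_comm.mp c), onBBox_comm.mp h2⟩)
  · exact Or.inl ⟨onBBox_comm.mp h1, onBBox_comm.mp h3, fun c => h2 (onBBox_comm.mp c)⟩
  · exact Or.inr (Or.inr ⟨fun c => h1 (onBBox_comm.mp c), onBBox_comm.mp h3, onBBox_comm.mp h2⟩)

open Finset in
lemma two_mul_pairCount (N : ℕ) (cond : ℤ × ℤ → ℤ × ℤ → Prop)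
    (hsym : ∀ A B, cond A B → cond B A) :
    2 * pairCount N cond = (((G N) ×ˢ (G N)).filter
      (fun p => p.1 ≠ p.2 ∧ p.1 ≠ (0,0) ∧ p.2 ≠ (0,0) ∧ cond p.1 p.2)).card := by
  classical
  set T := (((G N) ×ˢ (G N)).filter
      (fun p => p.1 ≠ p.2 ∧ p.1 ≠ (0,0) ∧ p.2 ≠ (0,0) ∧ cond p.1 p.2)) with hT
  have hmemT : ∀ p : (ℤ×ℤ)×(ℤ×ℤ), p ∈ T ↔
      (inGrid N p.1 ∧ inGrid N p.2 ∧ p.1 ≠ p.2 ∧ p.1 ≠ (0,0) ∧ p.2 ≠ (0,0) ∧ cond p.1 p.2) := by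
    intro p
    simp only [hT, mem_filter, mem_product, mem_G]
    tauto
  set f : (ℤ×ℤ)×(ℤ×ℤ) → Set (ℤ×ℤ) := fun p => ({p.1, p.2} : Set (ℤ×ℤ)) with hf
  have himg : {s : Set (ℤ × ℤ) | ∃ A B : ℤ × ℤ, A ≠ B ∧ A ≠ (0, 0) ∧ B ≠ (0, 0) ∧
      inGrid N A ∧ inGrid N B ∧ cond A B ∧ s = {A, B}} = ↑(T.image f) := by
    ext s
    simp only [Set.mem_setOf_eq, coe_image, Set.mem_image, mem_coe]
    constructor
    · rintro ⟨A, B, h1, h2, h3, h4, h5, h6, rfl⟩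
      exact ⟨(A, B), (hmemT (A,B)).2 ⟨h4, h5, h1, h2, h3, h6⟩, rfl⟩
    · rintro ⟨p, hp, rfl⟩
      obtain ⟨h4, h5, h1, h2, h3, h6⟩ := (hmemT p).1 hp
      exact ⟨p.1, p.2, h1, h2, h3, h4, h5, h6, rfl⟩
  have hcount : pairCount N cond = (T.image f).card := by
    rw [pairCount, himg, Set.ncard_coe_finset]
  rw [hcount]
  have hfib : ∀ s ∈ T.image f, (T.filter fun a => f a = s).card = 2 := by
    intro s hs
    obtain ⟨p, hp, rfl⟩ := Finset.mem_image.1 hs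
    obtain ⟨h4, h5, h1, h2, h3, h6⟩ := (hmemT p).1 hp
    have : T.filter (fun a => f a = f p) = {p, (p.2, p.1)} := by
      ext q
      simp only [mem_filter, Finset.mem_insert, Finset.mem_singleton]
      constructor
      · rintro ⟨hq, hfq⟩
        obtain ⟨g4, g5, g1, g2, g3, g6⟩ := (hmemT q).1 hq
        have hset : ({q.1, q.2} : Set (ℤ×ℤ)) = {p.1, p.2} := hfq
        have hq1 : q.1 = p.1 ∨ q.1 = p.2 := by
          have : q.1 ∈ ({p.1, p.2} : Set (ℤ×ℤ)) := hset ▸ (by simp)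
          simpa using this
        have hq2 : q.2 = p.1 ∨ q.2 = p.2 := by
          have : q.2 ∈ ({p.1, p.2} : Set (ℤ×ℤ)) := hset ▸ (by simp)
          simpa using this
        rcases hq1 with e1 | e1 <;> rcases hq2 with e2 | e2
        · exact absurd (e1.trans e2.symm) g1
        · left; exact Prod.ext e1 e2
        · right; exact Prod.ext e1 e2
        · exact absurd (e1.trans e2.symm) g1
      · rintro (rfl | rfl)
        · exact ⟨hp, rfl⟩
        · refine ⟨(hmemT _).2 ⟨h5, h4, fun e => h1 (by simpa using e.symm), h3, h2, hsym _ _ h6⟩, ?_⟩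
          simp only [hf]
          exact Set.pair_comm _ _
    rw [this, Finset.card_insert_of_notMem, Finset.card_singleton]
    simp only [Finset.mem_singleton]
    intro e
    exact h1 (congrArg Prod.fst e)
  rw [Finset.card_eq_sum_card_image f T, Finset.sum_congr rfl hfib, Finset.sum_const,
    smul_eq_mul, mul_comm]
open Finset

lemma card_G (N : ℕ) : (G N).card = N ^ 2 := by
  rw [G, Finset.card_product, Int.card_Ico]
  simp [sq]

/-- 1-D count -/
def K1 (N : ℕ) : ℕ := ((Finset.Ico (0:ℤ) N ×ˢ Finset.Ico (0:ℤ) N).filter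
    fun q : ℤ × ℤ => 0 < q.2 ∧ q.2 < q.1).card

lemma sum_aux (N : ℕ) : 2 * ∑ j ∈ Finset.range N, (j - 1) = (N - 1) * (N - 2) := by
  induction N with
  | zero => simp
  | succ n ih =>
    rw [Finset.sum_range_succ, Nat.mul_add, ih]
    rcases n with _ | m
    · simp
    · rcases m with _ | k
      · simp
      · have e1 : k + 1 + 1 + 1 - 2 = k + 1 := by omega
        have e2 : k + 1 + 1 - 2 = k := by omega
        have e3 : k + 1 + 1 + 1 - 1 = k + 2 := by omega
        have e4 : k + 1 + 1 - 1 = k + 1 := by omega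
        have e5 : k + 1 + 1 - 1 = k + 1 := by omega
        rw [e1, e2, e3, e4]
        ring

lemma K1_formula (N : ℕ) : 2 * K1 N = (N - 1) * (N - 2) := by
  classical
  have h1 : K1 N = ∑ a ∈ Finset.Ico (0:ℤ) N,
      ((Finset.Ico (0:ℤ) N).filter fun b => 0 < b ∧ b < a).card := by
    rw [K1]
    rw [Finset.card_eq_sum_card_fiberwise (f := Prod.fst) (t := Finset.Ico (0:ℤ) N)
      (fun p hp => (Finset.mem_product.1 (Finset.mem_filter.1 hp).1).1)]
    refine Finset.sum_congr rfl fun a ha => ?_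
    refine Finset.card_nbij' (i := fun p => p.2) (j := fun b => (a, b)) ?_ ?_ ?_ ?_
    · intro p hp
      simp only [Finset.mem_coe, Finset.mem_filter, Finset.mem_product] at hp ⊢
      obtain ⟨⟨⟨hp1, hp2⟩, hc1, hc2⟩, hfst⟩ := hp
      exact ⟨hp2, hc1, hfst ▸ hc2⟩
    · intro b hb
      simp only [Finset.mem_coe, Finset.mem_filter, Finset.mem_product] at hb ⊢
      exact ⟨⟨⟨ha, hb.1⟩, hb.2⟩, trivial⟩
    · intro p hp
      simp only [Finset.mem_coe, Finset.mem_filter] at hp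
      exact (Prod.ext hp.2.symm rfl)
    · intro b _; rfl
  have h2 : ∀ a : ℤ, a < N → ((Finset.Ico (0:ℤ) N).filter fun b => 0 < b ∧ b < a).card
      = (a - 1).toNat := by
    intro a haN
    have he : ((Finset.Ico (0:ℤ) N).filter fun b => 0 < b ∧ b < a) = Finset.Ioo 0 a := by
      ext b
      simp only [Finset.mem_filter, Finset.mem_Ico, Finset.mem_Ioo]
      omega
    rw [he, Int.card_Ioo]
    congr 1
    omega
  have h3 : K1 N = ∑ j ∈ Finset.range N, (j - 1) := by
    rw [h1]
    refine Finset.sum_nbij' (i := fun a : ℤ => a.toNat) (j := fun j : ℕ => (j : ℤ))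
      ?_ ?_ ?_ ?_ ?_
    · intro a ha
      simp only [Finset.mem_Ico] at ha
      simp only [Finset.mem_range]
      omega
    · intro j hj
      simp only [Finset.mem_range] at hj
      simp only [Finset.mem_Ico]
      omega
    · intro a ha
      simp only [Finset.mem_Ico] at ha
      show ((a.toNat : ℤ)) = a
      omega
    · intro j _
      simp
    · intro a ha
      simp only [Finset.mem_Ico] at ha
      rw [h2 a ha.2]
      show (a - 1).toNat = a.toNat - 1
      omega
  rw [h3, sum_aux]

lemma card_insideAB (N : ℕ) :
    ((G N ×ˢ G N).filter fun p : (ℤ×ℤ)×(ℤ×ℤ) => Inside p.1 p.2).card = K1 N ^ 2 := by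
  classical
  rw [sq, K1, ← Finset.card_product]
  refine Finset.card_nbij' (i := fun p : (ℤ×ℤ)×(ℤ×ℤ) => ((p.1.1, p.2.1), (p.1.2, p.2.2)))
    (j := fun q : (ℤ×ℤ)×(ℤ×ℤ) => ((q.1.1, q.2.1), (q.1.2, q.2.2))) ?_ ?_ ?_ ?_
  · intro p hp
    simp only [Finset.mem_coe, Finset.mem_filter, Finset.mem_product] at hp ⊢
    simp only [Finset.mem_coe, Finset.mem_filter, Finset.mem_product, G, Inside] at hp ⊢
    obtain ⟨⟨⟨hA1, hA2⟩, hB1, hB2⟩, h1, h2, h3, h4⟩ := hp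
    exact ⟨⟨⟨hA1, hB1⟩, h1, h2⟩, ⟨hA2, hB2⟩, h3, h4⟩
  · intro q hq
    simp only [Finset.mem_coe, Finset.mem_filter, Finset.mem_product] at hq ⊢
    simp only [Finset.mem_coe, Finset.mem_filter, Finset.mem_product, G, Inside] at hq ⊢
    obtain ⟨⟨⟨hx, hy⟩, h1, h2⟩, ⟨hz, hw⟩, h3, h4⟩ := hq
    exact ⟨⟨⟨hx, hz⟩, hy, hw⟩, h1, h2, h3, h4⟩
  · intro p _; rfl
  · intro q _; rfl

lemma card_insideBA (N : ℕ) :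
    ((G N ×ˢ G N).filter fun p : (ℤ×ℤ)×(ℤ×ℤ) => Inside p.2 p.1).card = K1 N ^ 2 := by
  classical
  rw [← card_insideAB N]
  refine Finset.card_nbij' (i := fun p : (ℤ×ℤ)×(ℤ×ℤ) => (p.2, p.1))
    (j := fun p : (ℤ×ℤ)×(ℤ×ℤ) => (p.2, p.1)) ?_ ?_ ?_ ?_ <;>
    intro p hp <;>
    simp only [Finset.mem_coe, Finset.mem_filter, Finset.mem_product] at * <;> tauto

lemma inside_asymm {A B : ℤ × ℤ} (h : Inside A B) : ¬ Inside B A := by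
  simp only [Inside] at *; omega

lemma card_two (N : ℕ) :
    ((G N ×ˢ G N).filter fun p : (ℤ×ℤ)×(ℤ×ℤ) => Inside p.1 p.2 ∨ Inside p.2 p.1).card
      = 2 * K1 N ^ 2 := by
  classical
  rw [Finset.filter_or, Finset.card_union_of_disjoint, card_insideAB, card_insideBA]
  · ring
  · rw [Finset.disjoint_left]
    intro p hp hq
    exact inside_asymm (Finset.mem_filter.1 hp).2 (Finset.mem_filter.1 hq).2

lemma card_three (N : ℕ) :
    ((G N ×ˢ G N).filter fun p : (ℤ×ℤ)×(ℤ×ℤ) => ¬Inside p.1 p.2 ∧ ¬Inside p.2 p.1).card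
      + 2 * K1 N ^ 2 = N ^ 4 := by
  classical
  have hiff : ∀ p : (ℤ×ℤ)×(ℤ×ℤ), (¬Inside p.1 p.2 ∧ ¬Inside p.2 p.1) ↔
      ¬(Inside p.1 p.2 ∨ Inside p.2 p.1) := by tauto
  rw [Finset.filter_congr (fun p _ => hiff p)]
  rw [Finset.filter_not, Finset.card_sdiff_of_subset (Finset.filter_subset _ _), card_two]
  have h1 : 2 * K1 N ^ 2 ≤ (G N ×ˢ G N).card := by
    rw [← card_two N]; exact Finset.card_filter_le _ _
  have h2 : (G N ×ˢ G N).card = N ^ 4 := by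
    rw [Finset.card_product, card_G]; ring
  omega
lemma card_Ico_N (N : ℕ) : (Finset.Ico (0:ℤ) N).card = N := by
  rw [Int.card_Ico]; simp

lemma card_filter_prod_le {N : ℕ} {P : ℤ×ℤ → ℤ×ℤ → Prop} [∀ A, DecidablePred (P A)] [DecidablePred (fun p : (ℤ×ℤ)×(ℤ×ℤ) => P p.1 p.2)] {c : ℕ}
    (h : ∀ A ∈ G N, ((G N).filter (P A)).card ≤ c) :
    ((G N ×ˢ G N).filter fun p : (ℤ×ℤ)×(ℤ×ℤ) => P p.1 p.2).card ≤ N ^ 2 * c := by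
  classical
  have hsub : ((G N ×ˢ G N).filter fun p : (ℤ×ℤ)×(ℤ×ℤ) => P p.1 p.2) ⊆
      (G N).biUnion (fun A => ({A} : Finset (ℤ×ℤ)) ×ˢ ((G N).filter (P A))) := by
    intro p hp
    simp only [Finset.mem_filter, Finset.mem_product] at hp
    refine Finset.mem_biUnion.2 ⟨p.1, hp.1.1, ?_⟩
    simp only [Finset.mem_product, Finset.mem_singleton, Finset.mem_filter]
    exact ⟨trivial, hp.1.2, hp.2⟩
  calc ((G N ×ˢ G N).filter fun p : (ℤ×ℤ)×(ℤ×ℤ) => P p.1 p.2).card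
      ≤ ((G N).biUnion (fun A => ({A} : Finset (ℤ×ℤ)) ×ˢ ((G N).filter (P A)))).card :=
        Finset.card_le_card hsub
    _ ≤ ∑ A ∈ G N, (({A} : Finset (ℤ×ℤ)) ×ˢ ((G N).filter (P A))).card :=
        Finset.card_biUnion_le
    _ ≤ ∑ _A ∈ G N, c := by
        refine Finset.sum_le_sum fun A hA => ?_
        rw [Finset.card_product, Finset.card_singleton, one_mul]
        exact h A hA
    _ = N ^ 2 * c := by rw [Finset.sum_const, smul_eq_mul, card_G]

lemma mem_G_bounds {N : ℕ} {B : ℤ×ℤ} (h : B ∈ G N) :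
    0 ≤ B.1 ∧ B.1 < N ∧ 0 ≤ B.2 ∧ B.2 < N := mem_G.1 h

/-- generic 1-coordinate injection bound -/
lemma fiber_bound_one {N : ℕ} {Q : ℤ×ℤ → Prop} [DecidablePred Q] (f : ℤ×ℤ → ℤ)
    (hrange : ∀ B ∈ G N, f B ∈ Finset.Ico (0:ℤ) N)
    (hinj : ∀ B ∈ G N, ∀ B' ∈ G N, Q B → Q B' → f B = f B' → B = B') :
    ((G N).filter Q).card ≤ N := by
  classical
  refine le_trans (Finset.card_le_card_of_injOn f ?_ ?_) (le_of_eq (card_Ico_N N))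
  · intro B hB
    exact hrange B (Finset.mem_filter.1 hB).1
  · intro B hB B' hB' hf
    simp only [Finset.coe_filter, Set.mem_setOf_eq] at hB hB'
    exact hinj B hB.1 B' hB'.1 hB.2 hB'.2 hf

lemma fiber_bound_two {N : ℕ} {Q : ℤ×ℤ → Prop} [DecidablePred Q] (f : ℤ×ℤ → ℤ × Bool)
    (hrange : ∀ B ∈ G N, (f B).1 ∈ Finset.Ico (0:ℤ) N)
    (hinj : ∀ B ∈ G N, ∀ B' ∈ G N, Q B → Q B' → f B = f B' → B = B') :
    ((G N).filter Q).card ≤ 2 * N := by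
  classical
  have : ((Finset.Ico (0:ℤ) N) ×ˢ (Finset.univ : Finset Bool)).card = 2 * N := by
    rw [Finset.card_product, card_Ico_N, Finset.card_univ]
    simp [mul_comm]
  refine le_trans (Finset.card_le_card_of_injOn f ?_ ?_) (le_of_eq this)
  · intro B hB
    have := hrange B (Finset.mem_filter.1 hB).1
    exact Finset.mem_product.2 ⟨this, Finset.mem_univ _⟩
  · intro B hB B' hB' hf
    simp only [Finset.coe_filter, Set.mem_setOf_eq] at hB hB'
    exact hinj B hB.1 B' hB'.1 hB.2 hB'.2 hf
def AlgBad (A B : ℤ×ℤ) : Prop :=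
  A.1 * B.2 = A.2 * B.1 ∨
  A.1^2 + A.2^2 = B.1^2 + B.2^2 ∨
  A.1^2 + A.2^2 = (A.1-B.1)^2 + (A.2-B.2)^2 ∨
  B.1^2 + B.2^2 = (A.1-B.1)^2 + (A.2-B.2)^2 ∨
  A.1*B.1 + A.2*B.2 = 0 ∨
  A.1*(B.1-A.1) + A.2*(B.2-A.2) = 0 ∨
  B.1*(A.1-B.1) + B.2*(A.2-B.2) = 0

lemma ne_zero_cases {A : ℤ×ℤ} (h : A ≠ (0,0)) : A.1 ≠ 0 ∨ A.2 ≠ 0 := by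
  by_contra hc
  push_neg at hc
  exact h (Prod.ext hc.1 hc.2)

lemma bad_of_notGood {A B : ℤ×ℤ}
    (h : ¬(¬IsDegenerateT A B ∧ IsScaleneT A B ∧ ¬IsRightT A B)) : AlgBad A B := by
  unfold AlgBad
  by_cases hd : IsDegenerateT A B
  · exact Or.inl (deg_alg hd)
  by_cases hs : IsScaleneT A B
  · have hr : IsRightT A B := by
      by_contra hr
      exact h ⟨hd, hs, hr⟩
    rcases right_alg hr with h5 | h6 | h7
    · exact Or.inr (Or.inr (Or.inr (Or.inr (Or.inl h5))))
    · exact Or.inr (Or.inr (Or.inr (Or.inr (Or.inr (Or.inl h6)))))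
    · exact Or.inr (Or.inr (Or.inr (Or.inr (Or.inr (Or.inr h7)))))
  · rcases notScalene_alg hs with h2 | h3 | h4
    · exact Or.inr (Or.inl h2)
    · exact Or.inr (Or.inr (Or.inl h3))
    · exact Or.inr (Or.inr (Or.inr (Or.inl h4)))

section FiberBounds
variable {N : ℕ}

lemma fiber1 (A : ℤ×ℤ) :
    ((G N).filter (fun B => A ≠ (0,0) ∧ A.1 * B.2 = A.2 * B.1)).card ≤ N := by
  refine fiber_bound_one (fun B => if A.1 = 0 then B.2 else B.1) ?_ ?_
  · intro B hB
    obtain ⟨h1, h2, h3, h4⟩ := mem_G_bounds hB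
    by_cases h : A.1 = 0 <;> simp [h, Finset.mem_Ico] <;> omega
  · intro B hB B' hB' ⟨hA, he⟩ ⟨_, he'⟩ hf
    by_cases h : A.1 = 0
    · simp only [h, if_true] at hf
      have hA2 : A.2 ≠ 0 := by rcases ne_zero_cases hA with h' | h'; exact absurd h h'; exact h'
      rw [h, zero_mul] at he he'
      have e1 : B.1 = 0 := by
        rcases mul_eq_zero.1 he.symm with h' | h'; exact absurd h' hA2; exact h'
      have e1' : B'.1 = 0 := by
        rcases mul_eq_zero.1 he'.symm with h' | h'; exact absurd h' hA2; exact h'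
      exact Prod.ext (e1.trans e1'.symm) hf
    · simp only [h, if_false] at hf
      have : A.1 * B.2 = A.1 * B'.2 := by rw [he, he', hf]
      exact Prod.ext hf (mul_left_cancel₀ h this)

lemma fiber2 (A : ℤ×ℤ) :
    ((G N).filter (fun B => A ≠ (0,0) ∧ A.1^2 + A.2^2 = B.1^2 + B.2^2)).card ≤ N := by
  refine fiber_bound_one (fun B => B.2) ?_ ?_
  · intro B hB
    obtain ⟨h1, h2, h3, h4⟩ := mem_G_bounds hB
    simp [Finset.mem_Ico]; omega
  · intro B hB B' hB' ⟨hA, he⟩ ⟨_, he'⟩ hf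
    obtain ⟨b1, _, _, _⟩ := mem_G_bounds hB
    obtain ⟨b1', _, _, _⟩ := mem_G_bounds hB'
    have hsq : B.1 * B.1 = B'.1 * B'.1 := by nlinarith [he, he', hf]
    rcases mul_self_eq_mul_self_iff.1 hsq with h' | h'
    · exact Prod.ext h' hf
    · exact Prod.ext (by omega) hf

lemma fiber3 (A : ℤ×ℤ) :
    ((G N).filter (fun B => A ≠ (0,0) ∧
      A.1^2 + A.2^2 = (A.1-B.1)^2 + (A.2-B.2)^2)).card ≤ 2 * N := by
  refine fiber_bound_two (fun B => (B.2, decide (B.1 ≤ A.1))) ?_ ?_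
  · intro B hB
    obtain ⟨h1, h2, h3, h4⟩ := mem_G_bounds hB
    simp [Finset.mem_Ico]; omega
  · intro B hB B' hB' ⟨hA, he⟩ ⟨_, he'⟩ hf
    have hf1 : B.2 = B'.2 := congrArg Prod.fst hf
    have hf2 : (B.1 ≤ A.1) ↔ (B'.1 ≤ A.1) := by
      have := congrArg Prod.snd hf
      simpa using this
    rw [← hf1] at he'
    have hsq : (A.1 - B.1) * (A.1 - B.1) = (A.1 - B'.1) * (A.1 - B'.1) := by
      linear_combination he' - he
    rcases mul_self_eq_mul_self_iff.1 hsq with h' | h'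
    · exact Prod.ext (by omega) hf1
    · exact Prod.ext (by omega) hf1

lemma fiber4 (A : ℤ×ℤ) :
    ((G N).filter (fun B => A ≠ (0,0) ∧
      B.1^2 + B.2^2 = (A.1-B.1)^2 + (A.2-B.2)^2)).card ≤ N := by
  refine fiber_bound_one (fun B => if A.2 = 0 then B.2 else B.1) ?_ ?_
  · intro B hB
    obtain ⟨h1, h2, h3, h4⟩ := mem_G_bounds hB
    by_cases h : A.2 = 0 <;> simp [h, Finset.mem_Ico] <;> omega
  · intro B hB B' hB' ⟨hA, he⟩ ⟨_, he'⟩ hf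
    have lin : 2*A.1*B.1 + 2*A.2*B.2 = A.1^2 + A.2^2 := by nlinarith [he]
    have lin' : 2*A.1*B'.1 + 2*A.2*B'.2 = A.1^2 + A.2^2 := by nlinarith [he']
    by_cases h : A.2 = 0
    · simp only [h, if_true] at hf
      have hA1 : A.1 ≠ 0 := by rcases ne_zero_cases hA with h' | h'; exact h'; exact absurd h h'
      rw [h] at lin lin'
      have : (2*A.1) * B.1 = (2*A.1) * B'.1 := by ring_nf; ring_nf at lin lin'; omega
      exact Prod.ext (mul_left_cancel₀ (by simpa using hA1) this) hf
    · simp only [h, if_false] at hf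
      have : (2*A.2) * B.2 = (2*A.2) * B'.2 := by
        have := lin.trans lin'.symm
        rw [hf] at this
        linarith
      exact Prod.ext hf (mul_left_cancel₀ (by simpa using h) this)

lemma fiber5 (A : ℤ×ℤ) :
    ((G N).filter (fun B => A ≠ (0,0) ∧ A.1*B.1 + A.2*B.2 = 0)).card ≤ N := by
  refine fiber_bound_one (fun B => if A.1 = 0 then B.1 else B.2) ?_ ?_
  · intro B hB
    obtain ⟨h1, h2, h3, h4⟩ := mem_G_bounds hB
    by_cases h : A.1 = 0 <;> simp [h, Finset.mem_Ico] <;> omega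
  · intro B hB B' hB' ⟨hA, he⟩ ⟨_, he'⟩ hf
    by_cases h : A.1 = 0
    · simp only [h, if_true] at hf
      have hA2 : A.2 ≠ 0 := by rcases ne_zero_cases hA with h' | h'; exact absurd h h'; exact h'
      rw [h] at he he'
      have : A.2 * B.2 = A.2 * B'.2 := by linarith
      exact Prod.ext hf (mul_left_cancel₀ hA2 this)
    · simp only [h, if_false] at hf
      have : A.1 * B.1 = A.1 * B'.1 := by rw [hf] at he; linarith
      exact Prod.ext (mul_left_cancel₀ h this) hf

lemma fiber6 (A : ℤ×ℤ) :
    ((G N).filter (fun B => A ≠ (0,0) ∧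
      A.1*(B.1-A.1) + A.2*(B.2-A.2) = 0)).card ≤ N := by
  refine fiber_bound_one (fun B => if A.1 = 0 then B.1 else B.2) ?_ ?_
  · intro B hB
    obtain ⟨h1, h2, h3, h4⟩ := mem_G_bounds hB
    by_cases h : A.1 = 0 <;> simp [h, Finset.mem_Ico] <;> omega
  · intro B hB B' hB' ⟨hA, he⟩ ⟨_, he'⟩ hf
    have lin : A.1*B.1 + A.2*B.2 = A.1^2 + A.2^2 := by nlinarith [he]
    have lin' : A.1*B'.1 + A.2*B'.2 = A.1^2 + A.2^2 := by nlinarith [he']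
    by_cases h : A.1 = 0
    · simp only [h, if_true] at hf
      have hA2 : A.2 ≠ 0 := by rcases ne_zero_cases hA with h' | h'; exact absurd h h'; exact h'
      have : A.2 * B.2 = A.2 * B'.2 := by rw [h] at lin lin'; linarith
      exact Prod.ext hf (mul_left_cancel₀ hA2 this)
    · simp only [h, if_false] at hf
      have : A.1 * B.1 = A.1 * B'.1 := by rw [hf] at lin; linarith [lin']
      exact Prod.ext (mul_left_cancel₀ h this) hf

lemma fiber7 (A : ℤ×ℤ) :
    ((G N).filter (fun B => A ≠ (0,0) ∧
      B.1*(A.1-B.1) + B.2*(A.2-B.2) = 0)).card ≤ 2 * N := by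
  refine fiber_bound_two (fun B => (B.2, decide (2*B.1 ≤ A.1))) ?_ ?_
  · intro B hB
    obtain ⟨h1, h2, h3, h4⟩ := mem_G_bounds hB
    simp [Finset.mem_Ico]; omega
  · intro B hB B' hB' ⟨hA, he⟩ ⟨_, he'⟩ hf
    have hf1 : B.2 = B'.2 := congrArg Prod.fst hf
    have hf2 : (2*B.1 ≤ A.1) ↔ (2*B'.1 ≤ A.1) := by
      have := congrArg Prod.snd hf
      simpa using this
    rw [← hf1] at he'
    have key : (B.1 - B'.1) * (B.1 + B'.1 - A.1) = 0 := by linear_combination he' - he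
    rcases mul_eq_zero.1 key with h' | h'
    · exact Prod.ext (by omega) hf1
    · exact Prod.ext (by omega) hf1

end FiberBounds
lemma card_split (s : Finset ((ℤ×ℤ)×(ℤ×ℤ))) (a b c : (ℤ×ℤ)×(ℤ×ℤ) → Prop)
    [DecidablePred fun x => a x ∧ (b x ∨ c x)] [DecidablePred fun x => a x ∧ b x]
    [DecidablePred fun x => a x ∧ c x] :
    (s.filter fun x => a x ∧ (b x ∨ c x)).card
      ≤ (s.filter fun x => a x ∧ b x).card + (s.filter fun x => a x ∧ c x).card := by
  classical
  refine le_trans (Finset.card_le_card ?_) (Finset.card_union_le _ _)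
  intro x hx
  simp only [Finset.mem_filter, Finset.mem_union] at hx ⊢
  tauto


lemma card_le_of_fiber_le {N c : ℕ} (F : Finset ((ℤ×ℤ)×(ℤ×ℤ))) (hsub : F ⊆ G N ×ˢ G N)
    (h : ∀ A ∈ G N, (F.filter (fun p => p.1 = A)).card ≤ c) : F.card ≤ N ^ 2 * c := by
  classical
  rw [Finset.card_eq_sum_card_fiberwise (f := Prod.fst) (t := G N)
    (fun p hp => (Finset.mem_product.1 (hsub hp)).1)]
  calc ∑ A ∈ G N, (F.filter (fun p => p.1 = A)).card ≤ ∑ _A ∈ G N, c :=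
        Finset.sum_le_sum h
    _ = N ^ 2 * c := by rw [Finset.sum_const, smul_eq_mul, card_G]

lemma pair_fiber_le {N c : ℕ} {Q : ℤ×ℤ → ℤ×ℤ → Prop} [∀ A, DecidablePred (Q A)]
    (F : Finset ((ℤ×ℤ)×(ℤ×ℤ))) (hsub : F ⊆ G N ×ˢ G N)
    (hmem : ∀ p ∈ F, Q p.1 p.2)
    (hq : ∀ A : ℤ×ℤ, ((G N).filter (Q A)).card ≤ c) : F.card ≤ N ^ 2 * c := by
  classical
  apply card_le_of_fiber_le F hsub
  intro A hA
  refine le_trans (Finset.card_le_card_of_injOn Prod.snd ?_ ?_) (hq A)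
  · intro p hp
    have hp' := Finset.mem_filter.1 hp
    have h1 := hmem p hp'.1
    have h2 := (Finset.mem_product.1 (hsub hp'.1)).2
    rw [hp'.2] at h1
    exact Finset.mem_filter.2 ⟨h2, h1⟩
  · intro p hp q hq' hpq
    simp only [Finset.coe_filter, Set.mem_setOf_eq] at hp hq'
    exact Prod.ext (hp.2.trans hq'.2.symm) hpq

lemma card_bad_le (N : ℕ) :
    ((G N ×ˢ G N).filter fun p : (ℤ×ℤ)×(ℤ×ℤ) => p.1 ≠ (0,0) ∧ AlgBad p.1 p.2).card
      ≤ 9 * N ^ 3 := by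
  classical
  set s := G N ×ˢ G N with hs
  have h0 : ((s.filter fun p : (ℤ×ℤ)×(ℤ×ℤ) => p.1 ≠ (0,0) ∧ AlgBad p.1 p.2)).card =
      ((s.filter fun p : (ℤ×ℤ)×(ℤ×ℤ) => p.1 ≠ (0,0) ∧
        (p.1.1 * p.2.2 = p.1.2 * p.2.1 ∨
         (p.1.1^2 + p.1.2^2 = p.2.1^2 + p.2.2^2 ∨
         (p.1.1^2 + p.1.2^2 = (p.1.1-p.2.1)^2 + (p.1.2-p.2.2)^2 ∨
         (p.2.1^2 + p.2.2^2 = (p.1.1-p.2.1)^2 + (p.1.2-p.2.2)^2 ∨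
         (p.1.1*p.2.1 + p.1.2*p.2.2 = 0 ∨
         (p.1.1*(p.2.1-p.1.1) + p.1.2*(p.2.2-p.1.2) = 0 ∨
          p.2.1*(p.1.1-p.2.1) + p.2.2*(p.1.2-p.2.2) = 0)))))))).card := by
    rw [Finset.filter_congr (fun p _ => by unfold AlgBad; exact Iff.rfl)]
  rw [h0]
  have b1 : (s.filter fun x => x.1 ≠ (0,0) ∧ x.1.1 * x.2.2 = x.1.2 * x.2.1).card ≤ N^2*(N) := by
    refine pair_fiber_le (Q := fun A B => A ≠ (0,0) ∧ A.1 * B.2 = A.2 * B.1) _ (Finset.filter_subset _ _)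
      (fun p hp => (Finset.mem_filter.1 hp).2) (fun A => fiber1 A)
  have b2 : (s.filter fun x => x.1 ≠ (0,0) ∧ x.1.1^2 + x.1.2^2 = x.2.1^2 + x.2.2^2).card ≤ N^2*(N) := by
    refine pair_fiber_le (Q := fun A B => A ≠ (0,0) ∧ A.1^2 + A.2^2 = B.1^2 + B.2^2) _ (Finset.filter_subset _ _)
      (fun p hp => (Finset.mem_filter.1 hp).2) (fun A => fiber2 A)
  have b3 : (s.filter fun x => x.1 ≠ (0,0) ∧ x.1.1^2 + x.1.2^2 = (x.1.1-x.2.1)^2 + (x.1.2-x.2.2)^2).card ≤ N^2*(2*N) := by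
    refine pair_fiber_le (Q := fun A B => A ≠ (0,0) ∧ A.1^2 + A.2^2 = (A.1-B.1)^2 + (A.2-B.2)^2) _ (Finset.filter_subset _ _)
      (fun p hp => (Finset.mem_filter.1 hp).2) (fun A => fiber3 A)
  have b4 : (s.filter fun x => x.1 ≠ (0,0) ∧ x.2.1^2 + x.2.2^2 = (x.1.1-x.2.1)^2 + (x.1.2-x.2.2)^2).card ≤ N^2*(N) := by
    refine pair_fiber_le (Q := fun A B => A ≠ (0,0) ∧ B.1^2 + B.2^2 = (A.1-B.1)^2 + (A.2-B.2)^2) _ (Finset.filter_subset _ _)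
      (fun p hp => (Finset.mem_filter.1 hp).2) (fun A => fiber4 A)
  have b5 : (s.filter fun x => x.1 ≠ (0,0) ∧ x.1.1*x.2.1 + x.1.2*x.2.2 = 0).card ≤ N^2*(N) := by
    refine pair_fiber_le (Q := fun A B => A ≠ (0,0) ∧ A.1*B.1 + A.2*B.2 = 0) _ (Finset.filter_subset _ _)
      (fun p hp => (Finset.mem_filter.1 hp).2) (fun A => fiber5 A)
  have b6 : (s.filter fun x => x.1 ≠ (0,0) ∧ x.1.1*(x.2.1-x.1.1) + x.1.2*(x.2.2-x.1.2) = 0).card ≤ N^2*(N) := by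
    refine pair_fiber_le (Q := fun A B => A ≠ (0,0) ∧ A.1*(B.1-A.1) + A.2*(B.2-A.2) = 0) _ (Finset.filter_subset _ _)
      (fun p hp => (Finset.mem_filter.1 hp).2) (fun A => fiber6 A)
  have b7 : (s.filter fun x => x.1 ≠ (0,0) ∧ x.2.1*(x.1.1-x.2.1) + x.2.2*(x.1.2-x.2.2) = 0).card ≤ N^2*(2*N) := by
    refine pair_fiber_le (Q := fun A B => A ≠ (0,0) ∧ B.1*(A.1-B.1) + B.2*(A.2-B.2) = 0) _ (Finset.filter_subset _ _)
      (fun p hp => (Finset.mem_filter.1 hp).2) (fun A => fiber7 A)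
  have t1 := card_split s (fun p => p.1 ≠ (0,0))
    (fun p => p.1.1 * p.2.2 = p.1.2 * p.2.1)
    (fun p => p.1.1^2 + p.1.2^2 = p.2.1^2 + p.2.2^2 ∨
         (p.1.1^2 + p.1.2^2 = (p.1.1-p.2.1)^2 + (p.1.2-p.2.2)^2 ∨
         (p.2.1^2 + p.2.2^2 = (p.1.1-p.2.1)^2 + (p.1.2-p.2.2)^2 ∨
         (p.1.1*p.2.1 + p.1.2*p.2.2 = 0 ∨
         (p.1.1*(p.2.1-p.1.1) + p.1.2*(p.2.2-p.1.2) = 0 ∨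
          p.2.1*(p.1.1-p.2.1) + p.2.2*(p.1.2-p.2.2) = 0)))))
  have t2 := card_split s (fun p => p.1 ≠ (0,0))
    (fun p => p.1.1^2 + p.1.2^2 = p.2.1^2 + p.2.2^2)
    (fun p => p.1.1^2 + p.1.2^2 = (p.1.1-p.2.1)^2 + (p.1.2-p.2.2)^2 ∨
         (p.2.1^2 + p.2.2^2 = (p.1.1-p.2.1)^2 + (p.1.2-p.2.2)^2 ∨
         (p.1.1*p.2.1 + p.1.2*p.2.2 = 0 ∨
         (p.1.1*(p.2.1-p.1.1) + p.1.2*(p.2.2-p.1.2) = 0 ∨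
          p.2.1*(p.1.1-p.2.1) + p.2.2*(p.1.2-p.2.2) = 0))))
  have t3 := card_split s (fun p => p.1 ≠ (0,0))
    (fun p => p.1.1^2 + p.1.2^2 = (p.1.1-p.2.1)^2 + (p.1.2-p.2.2)^2)
    (fun p => p.2.1^2 + p.2.2^2 = (p.1.1-p.2.1)^2 + (p.1.2-p.2.2)^2 ∨
         (p.1.1*p.2.1 + p.1.2*p.2.2 = 0 ∨
         (p.1.1*(p.2.1-p.1.1) + p.1.2*(p.2.2-p.1.2) = 0 ∨
          p.2.1*(p.1.1-p.2.1) + p.2.2*(p.1.2-p.2.2) = 0)))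
  have t4 := card_split s (fun p => p.1 ≠ (0,0))
    (fun p => p.2.1^2 + p.2.2^2 = (p.1.1-p.2.1)^2 + (p.1.2-p.2.2)^2)
    (fun p => p.1.1*p.2.1 + p.1.2*p.2.2 = 0 ∨
         (p.1.1*(p.2.1-p.1.1) + p.1.2*(p.2.2-p.1.2) = 0 ∨
          p.2.1*(p.1.1-p.2.1) + p.2.2*(p.1.2-p.2.2) = 0))
  have t5 := card_split s (fun p => p.1 ≠ (0,0))
    (fun p => p.1.1*p.2.1 + p.1.2*p.2.2 = 0)
    (fun p => p.1.1*(p.2.1-p.1.1) + p.1.2*(p.2.2-p.1.2) = 0 ∨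
          p.2.1*(p.1.1-p.2.1) + p.2.2*(p.1.2-p.2.2) = 0)
  have t6 := card_split s (fun p => p.1 ≠ (0,0))
    (fun p => p.1.1*(p.2.1-p.1.1) + p.1.2*(p.2.2-p.1.2) = 0)
    (fun p => p.2.1*(p.1.1-p.2.1) + p.2.2*(p.1.2-p.2.2) = 0)
  have harith : N^2*N + (N^2*N + (N^2*(2*N) + (N^2*N + (N^2*N + (N^2*N + N^2*(2*N))))))
      = 9 * N ^ 3 := by ring
  beta_reduce at t1 t2 t3 t4 t5 t6 ⊢
  omega
def Cond3 (A B : ℤ × ℤ) : Prop :=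
  (¬IsDegenerateT A B ∧ IsScaleneT A B ∧ ¬IsRightT A B) ∧ ThreeOnBBox A B

def Cond2 (A B : ℤ × ℤ) : Prop :=
  (¬IsDegenerateT A B ∧ IsScaleneT A B ∧ ¬IsRightT A B) ∧ TwoOnBBox A B

lemma hsym3 : ∀ A B, Cond3 A B → Cond3 B A := by
  rintro A B ⟨⟨hd, hs, hr⟩, h3⟩
  exact ⟨⟨fun c => hd (deg_comm c), scalene_comm hs, fun c => hr (right_comm c)⟩, three_comm h3⟩

lemma hsym2 : ∀ A B, Cond2 A B → Cond2 B A := by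
  rintro A B ⟨⟨hd, hs, hr⟩, h2⟩
  exact ⟨⟨fun c => hd (deg_comm c), scalene_comm hs, fun c => hr (right_comm c)⟩, twob_comm h2⟩

lemma card_diag_le (N : ℕ) :
    ((G N ×ˢ G N).filter fun p : (ℤ×ℤ)×(ℤ×ℤ) => p.1 = p.2).card ≤ N ^ 2 := by
  classical
  rw [← card_G N]
  refine Finset.card_le_card_of_injOn Prod.fst ?_ ?_
  · intro p hp
    exact (Finset.mem_product.1 (Finset.mem_filter.1 hp).1).1
  · intro p hp q hq h
    simp only [Finset.coe_filter, Set.mem_setOf_eq] at hp hq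
    exact Prod.ext h (hp.2 ▸ hq.2 ▸ h)

lemma card_fst0_le (N : ℕ) :
    ((G N ×ˢ G N).filter fun p : (ℤ×ℤ)×(ℤ×ℤ) => p.1 = (0,0)).card ≤ N ^ 2 := by
  classical
  rw [← card_G N]
  refine Finset.card_le_card_of_injOn Prod.snd ?_ ?_
  · intro p hp
    exact (Finset.mem_product.1 (Finset.mem_filter.1 hp).1).2
  · intro p hp q hq h
    simp only [Finset.coe_filter, Set.mem_setOf_eq] at hp hq
    exact Prod.ext (hp.2.trans hq.2.symm) h

lemma card_snd0_le (N : ℕ) :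
    ((G N ×ˢ G N).filter fun p : (ℤ×ℤ)×(ℤ×ℤ) => p.2 = (0,0)).card ≤ N ^ 2 := by
  classical
  rw [← card_G N]
  refine Finset.card_le_card_of_injOn Prod.fst ?_ ?_
  · intro p hp
    exact (Finset.mem_product.1 (Finset.mem_filter.1 hp).1).1
  · intro p hp q hq h
    simp only [Finset.coe_filter, Set.mem_setOf_eq] at hp hq
    exact Prod.ext h (hp.2.trans hq.2.symm)

set_option maxHeartbeats 1600000 in
lemma bounds3 (N : ℕ) :
    2 * pairCount N Cond3 + 2 * K1 N ^ 2 ≤ N ^ 4 ∧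
    N ^ 4 ≤ 2 * pairCount N Cond3 + 2 * K1 N ^ 2 + 3 * N ^ 2 + 9 * N ^ 3 := by
  classical
  rw [two_mul_pairCount N Cond3 hsym3]
  have hc3 := card_three N
  have hbad := card_bad_le N
  have hd := card_diag_le N
  have hf0 := card_fst0_le N
  have hs0 := card_snd0_le N
  set s := G N ×ˢ G N with hs
  set T := s.filter (fun p : (ℤ×ℤ)×(ℤ×ℤ) =>
    p.1 ≠ p.2 ∧ p.1 ≠ (0,0) ∧ p.2 ≠ (0,0) ∧ Cond3 p.1 p.2) with hT
  set Th := s.filter (fun p : (ℤ×ℤ)×(ℤ×ℤ) => ¬Inside p.1 p.2 ∧ ¬Inside p.2 p.1) with hTh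
  set Tb := s.filter (fun p : (ℤ×ℤ)×(ℤ×ℤ) => p.1 ≠ (0,0) ∧ AlgBad p.1 p.2) with hTb
  set Dg := s.filter (fun p : (ℤ×ℤ)×(ℤ×ℤ) => p.1 = p.2) with hDg
  set F0 := s.filter (fun p : (ℤ×ℤ)×(ℤ×ℤ) => p.1 = (0,0)) with hF0
  set S0 := s.filter (fun p : (ℤ×ℤ)×(ℤ×ℤ) => p.2 = (0,0)) with hS0
  have hsubT : T ⊆ Th := by
    intro p hp
    simp only [hT, hTh, Finset.mem_filter] at hp ⊢
    obtain ⟨hps, h1, h2, h3, hgood, h3b⟩ := hp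
    have hg1 := mem_G.1 (Finset.mem_product.1 hps).1
    have hg2 := mem_G.1 (Finset.mem_product.1 hps).2
    exact ⟨hps, (three_iff hg1 hg2).1 h3b⟩
  have hupper : T.card + 2 * K1 N ^ 2 ≤ N ^ 4 := by
    have := Finset.card_le_card hsubT
    omega
  refine ⟨hupper, ?_⟩
  -- lower bound
  have hsub2 : Th ⊆ T ∪ Tb ∪ Dg ∪ F0 ∪ S0 := by
    intro p hp
    simp only [hTh, Finset.mem_filter] at hp
    obtain ⟨hps, h3p⟩ := hp
    simp only [Finset.mem_union, Finset.mem_filter, hT, hTb, hDg, hF0, hS0]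
    by_cases e1 : p.1 = p.2
    · tauto
    by_cases e2 : p.1 = (0,0)
    · tauto
    by_cases e3 : p.2 = (0,0)
    · tauto
    by_cases hgood : ¬IsDegenerateT p.1 p.2 ∧ IsScaleneT p.1 p.2 ∧ ¬IsRightT p.1 p.2
    · have hg1 := mem_G.1 (Finset.mem_product.1 hps).1
      have hg2 := mem_G.1 (Finset.mem_product.1 hps).2
      have : Cond3 p.1 p.2 := ⟨hgood, (three_iff hg1 hg2).2 h3p⟩
      tauto
    · have : AlgBad p.1 p.2 := bad_of_notGood hgood
      tauto
  have hcard2 := Finset.card_le_card hsub2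
  have hu1 := Finset.card_union_le (T ∪ Tb ∪ Dg ∪ F0) S0
  have hu2 := Finset.card_union_le (T ∪ Tb ∪ Dg) F0
  have hu3 := Finset.card_union_le (T ∪ Tb) Dg
  have hu4 := Finset.card_union_le T Tb
  omega

set_option maxHeartbeats 1600000 in
lemma bounds2 (N : ℕ) :
    2 * pairCount N Cond2 ≤ 2 * K1 N ^ 2 ∧
    2 * K1 N ^ 2 ≤ 2 * pairCount N Cond2 + 9 * N ^ 3 := by
  classical
  rw [two_mul_pairCount N Cond2 hsym2]
  have hc2 := card_two N
  have hbad := card_bad_le N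
  set s := G N ×ˢ G N with hs
  set T := s.filter (fun p : (ℤ×ℤ)×(ℤ×ℤ) =>
    p.1 ≠ p.2 ∧ p.1 ≠ (0,0) ∧ p.2 ≠ (0,0) ∧ Cond2 p.1 p.2) with hT
  set Tw := s.filter (fun p : (ℤ×ℤ)×(ℤ×ℤ) => Inside p.1 p.2 ∨ Inside p.2 p.1) with hTw
  set Tb := s.filter (fun p : (ℤ×ℤ)×(ℤ×ℤ) => p.1 ≠ (0,0) ∧ AlgBad p.1 p.2) with hTb
  have hsubT : T ⊆ Tw := by
    intro p hp
    simp only [hT, hTw, Finset.mem_filter] at hp ⊢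
    obtain ⟨hps, h1, h2, h3, hgood, h2b⟩ := hp
    have hg1 := mem_G.1 (Finset.mem_product.1 hps).1
    have hg2 := mem_G.1 (Finset.mem_product.1 hps).2
    exact ⟨hps, (two_iff hg1 hg2).1 h2b⟩
  have hupper : T.card ≤ 2 * K1 N ^ 2 := by
    have := Finset.card_le_card hsubT
    omega
  refine ⟨hupper, ?_⟩
  have hsub2 : Tw ⊆ T ∪ Tb := by
    intro p hp
    simp only [hTw, Finset.mem_filter] at hp
    obtain ⟨hps, h2p⟩ := hp
    simp only [Finset.mem_union, Finset.mem_filter, hT, hTb]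
    have hg1 := mem_G.1 (Finset.mem_product.1 hps).1
    have hg2 := mem_G.1 (Finset.mem_product.1 hps).2
    have hnes : p.1 ≠ p.2 ∧ p.1 ≠ (0,0) ∧ p.2 ≠ (0,0) := by
      obtain ⟨q1, q2, q3, q4⟩ := hg1
      obtain ⟨r1, r2, r3, r4⟩ := hg2
      rcases h2p with ⟨i1, i2, i3, i4⟩ | ⟨i1, i2, i3, i4⟩ <;>
        refine ⟨fun e => ?_, fun e => ?_, fun e => ?_⟩ <;>
        · rw [Prod.ext_iff] at e
          omega
    by_cases hgood : ¬IsDegenerateT p.1 p.2 ∧ IsScaleneT p.1 p.2 ∧ ¬IsRightT p.1 p.2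
    · have : Cond2 p.1 p.2 := ⟨hgood, (two_iff hg1 hg2).2 h2p⟩
      tauto
    · have : AlgBad p.1 p.2 := bad_of_notGood hgood
      tauto
  have hcard2 := Finset.card_le_card hsub2
  have hu := Finset.card_union_le T Tb
  omega
def qq (x : ℝ) : ℝ := ((1-x)*(1-2*x))^2/4
def L3f (x : ℝ) : ℝ := 1/2 - qq x - (3/2)*x^2 - (9/2)*x
def U3f (x : ℝ) : ℝ := 1/2 - qq x
def L2f (x : ℝ) : ℝ := qq x - (9/2)*x
def U2f (x : ℝ) : ℝ := qq x

lemma cont_qq : Continuous qq := by unfold qq; continuity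
lemma cont_L3 : Continuous L3f := by
  unfold L3f
  exact ((continuous_const.sub cont_qq).sub (by continuity)).sub (by continuity)
lemma cont_U3 : Continuous U3f := continuous_const.sub cont_qq
lemma cont_L2 : Continuous L2f := cont_qq.sub (by continuity)
lemma cont_U2 : Continuous U2f := cont_qq

lemma tend_comp {F : ℝ → ℝ} (hF : Continuous F) :
    Filter.Tendsto (fun N : ℕ => F (1/(N:ℝ))) Filter.atTop (nhds (F 0)) :=
  (hF.tendsto 0).comp tendsto_one_div_atTop_nhds_zero_nat

lemma hk_real {N : ℕ} (hN : 2 ≤ N) :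
    2 * (K1 N : ℝ) = ((N:ℝ)-1)*((N:ℝ)-2) := by
  have h := K1_formula N
  have hc : ((2 * K1 N : ℕ) : ℝ) = (((N-1)*(N-2) : ℕ) : ℝ) := by rw [h]
  push_cast [Nat.cast_sub (by omega : 1 ≤ N), Nat.cast_sub (by omega : 2 ≤ N)] at hc
  linarith

lemma hK2_real {N : ℕ} (hN : 2 ≤ N) :
    2 * (K1 N : ℝ)^2 = ((N:ℝ)-1)^2*((N:ℝ)-2)^2/2 := by
  have hk := hk_real hN
  linear_combination ((K1 N : ℝ) + ((N:ℝ)-1)*((N:ℝ)-2)/2) * hk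

lemma main3 : Filter.Tendsto
    (fun N : ℕ => ((pairCount N Cond3 : ℕ) : ℝ) / (N : ℝ) ^ 4)
    Filter.atTop (nhds (1 / 4)) := by
  have hL : Filter.Tendsto (fun N : ℕ => L3f (1/(N:ℝ))) Filter.atTop (nhds (1/4)) := by
    have h := tend_comp cont_L3
    have h0 : L3f 0 = 1/4 := by norm_num [L3f, qq]
    rwa [h0] at h
  have hU : Filter.Tendsto (fun N : ℕ => U3f (1/(N:ℝ))) Filter.atTop (nhds (1/4)) := by
    have h := tend_comp cont_U3
    have h0 : U3f 0 = 1/4 := by norm_num [U3f, qq]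
    rwa [h0] at h
  refine tendsto_of_tendsto_of_tendsto_of_le_of_le' hL hU ?_ ?_
  · refine Filter.eventually_atTop.2 ⟨2, fun N hN => ?_⟩
    have hn : (0:ℝ) < (N:ℝ) := by
      have : (0:ℕ) < N := by omega
      exact_mod_cast this
    have hn4 : (0:ℝ) < (N:ℝ)^4 := by positivity
    have hb := (bounds3 N).2
    have hR : ((N:ℝ))^4 ≤ 2*((pairCount N Cond3 : ℕ):ℝ) + 2*((K1 N : ℕ):ℝ)^2
        + 3*((N:ℝ))^2 + 9*((N:ℝ))^3 := by exact_mod_cast hb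
    rw [le_div_iff₀ hn4]
    have expand : L3f (1/(N:ℝ)) * (N:ℝ)^4
        = (N:ℝ)^4/2 - ((N:ℝ)-1)^2*((N:ℝ)-2)^2/4 - (3/2)*(N:ℝ)^2 - (9/2)*(N:ℝ)^3 := by
      unfold L3f qq
      field_simp
    rw [expand]
    have hK2 := hK2_real hN
    linarith
  · refine Filter.eventually_atTop.2 ⟨2, fun N hN => ?_⟩
    have hn : (0:ℝ) < (N:ℝ) := by
      have : (0:ℕ) < N := by omega
      exact_mod_cast this
    have hn4 : (0:ℝ) < (N:ℝ)^4 := by positivity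
    have hb := (bounds3 N).1
    have hR : 2*((pairCount N Cond3 : ℕ):ℝ) + 2*((K1 N : ℕ):ℝ)^2 ≤ ((N:ℝ))^4 := by
      exact_mod_cast hb
    rw [div_le_iff₀ hn4]
    have expand : U3f (1/(N:ℝ)) * (N:ℝ)^4
        = (N:ℝ)^4/2 - ((N:ℝ)-1)^2*((N:ℝ)-2)^2/4 := by
      unfold U3f qq
      field_simp
    rw [expand]
    have hK2 := hK2_real hN
    linarith

lemma main2 : Filter.Tendsto
    (fun N : ℕ => ((pairCount N Cond2 : ℕ) : ℝ) / (N : ℝ) ^ 4)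
    Filter.atTop (nhds (1 / 4)) := by
  have hL : Filter.Tendsto (fun N : ℕ => L2f (1/(N:ℝ))) Filter.atTop (nhds (1/4)) := by
    have h := tend_comp cont_L2
    have h0 : L2f 0 = 1/4 := by norm_num [L2f, qq]
    rwa [h0] at h
  have hU : Filter.Tendsto (fun N : ℕ => U2f (1/(N:ℝ))) Filter.atTop (nhds (1/4)) := by
    have h := tend_comp cont_U2
    have h0 : U2f 0 = 1/4 := by norm_num [U2f, qq]
    rwa [h0] at h
  refine tendsto_of_tendsto_of_tendsto_of_le_of_le' hL hU ?_ ?_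
  · refine Filter.eventually_atTop.2 ⟨2, fun N hN => ?_⟩
    have hn : (0:ℝ) < (N:ℝ) := by
      have : (0:ℕ) < N := by omega
      exact_mod_cast this
    have hn4 : (0:ℝ) < (N:ℝ)^4 := by positivity
    have hb := (bounds2 N).2
    have hR : 2*((K1 N : ℕ):ℝ)^2 ≤ 2*((pairCount N Cond2 : ℕ):ℝ) + 9*((N:ℝ))^3 := by
      exact_mod_cast hb
    rw [le_div_iff₀ hn4]
    have expand : L2f (1/(N:ℝ)) * (N:ℝ)^4
        = ((N:ℝ)-1)^2*((N:ℝ)-2)^2/4 - (9/2)*(N:ℝ)^3 := by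
      unfold L2f qq
      field_simp
    rw [expand]
    have hK2 := hK2_real hN
    linarith
  · refine Filter.eventually_atTop.2 ⟨2, fun N hN => ?_⟩
    have hn : (0:ℝ) < (N:ℝ) := by
      have : (0:ℕ) < N := by omega
      exact_mod_cast this
    have hn4 : (0:ℝ) < (N:ℝ)^4 := by positivity
    have hb := (bounds2 N).1
    have hR : 2*((pairCount N Cond2 : ℕ):ℝ) ≤ 2*((K1 N : ℕ):ℝ)^2 := by
      exact_mod_cast hb
    rw [div_le_iff₀ hn4]
    have expand : U2f (1/(N:ℝ)) * (N:ℝ)^4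
        = ((N:ℝ)-1)^2*((N:ℝ)-2)^2/4 := by
      unfold U2f qq
      field_simp
    rw [expand]
    have hK2 := hK2_real hN
    linarith
/-- Among pairs `{A, B}` of distinct nonzero grid points spanning with the origin a
nondegenerate, scalene, non-right triangle, the count `S₃ N` of those triangles with
all three vertices on their bounding rectangle satisfies `S₃ N / N⁴ → 1/4`, and the
count `S₂ N` of those with exactly two vertices on their bounding rectangle
satisfies `S₂ N / N⁴ → 1/4`. -/
theorem bbox_vertices_density_quarter :
    Filter.Tendsto
      (fun N : ℕ =>
        ((pairCount N fun A B =>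
          (¬IsDegenerateT A B ∧ IsScaleneT A B ∧ ¬IsRightT A B) ∧ ThreeOnBBox A B : ℕ) : ℝ) /
          (N : ℝ) ^ 4)
      Filter.atTop (nhds (1 / 4)) ∧
    Filter.Tendsto
      (fun N : ℕ =>
        ((pairCount N fun A B =>
          (¬IsDegenerateT A B ∧ IsScaleneT A B ∧ ¬IsRightT A B) ∧ TwoOnBBox A B : ℕ) : ℝ) /
          (N : ℝ) ^ 4)
      Filter.atTop (nhds (1 / 4)) := by
  constructor
  · exact main3
  · exact main2
end
end
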